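/- arXiv:1705.01688 — 12 statements merged into one kernel-verified Lean document; each statement's English description precedes it below -/
import Mathlib

section
/- Let K : ℝ → ℝ be a continuous function with K(r) ≤ 0 for all r. Then there exists a twice continuously differentiable function h : ℝ → ℝ satisfying h''(r) + K(r)·h(r) = 0 for all r ∈ ℝ, with h(0) = 1, with 0 ≤ h(r) ≤ 1 for all r ≤ 0, and with h'(0) ≥ 0. -/
/-!
Put `q = -K ≥ 0`, so that the equation reads `h'' = q h`. Its solutions exist on all of `ℝ`:
on every `C([-T, T])` some iterate of the Volterra operator
`h ↦ a + b t + ∫₀ᵗ (t - s) q(s) h(s) ds` is a contraction, and the fixed points for different `T`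
agree. Let `f`, `g` be the solutions with data `(1, 0)` and `(0, 1)` at `0`. As `q ≥ 0`, a solution
that is positive and nonincreasing at `r₀` stays so on `(-∞, r₀]`; hence `f ≥ 1` there, and the
Wronskian `f g' - f' g = 1` makes `g / f` increasing, so `g < 0` on `(-∞, 0)`. The principal
solution is `h = f + c g` with `c = inf_{r < 0} f(r) / (-g(r))`. It is nonnegative by the choice of
`c` and then positive by uniqueness. It is nondecreasing on `(-∞, 0]`: at a point `r₀` with
`h'(r₀) < 0`, replacing `c` by a slightly larger value keeps `h > 0` on `[r₀, 0]` and `h'(r₀) < 0`,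
hence `h > 0` on `(-∞, r₀]`, against the minimality of `c`. So `h ≤ h(0) = 1` and `h'(0) = c ≥ 0`.
-/

open Set Filter Topology intervalIntegral
open scoped Nat

noncomputable section

lemma exists_unique_isFixedPt_of_dist_iterate_le {X : Type*} [MetricSpace X] [CompleteSpace X]
    [Nonempty X] {Φ : X → X} {L : ℝ} (hL : 0 ≤ L)
    (hΦ : ∀ n x y, dist (Φ^[n] x) (Φ^[n] y) ≤ L ^ n / n ! * dist x y) :
    ∃! x, Function.IsFixedPt Φ x := by
  obtain ⟨n, hn⟩ := (FloorSemiring.tendsto_pow_div_factorial_atTop L).eventually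
    (gt_mem_nhds zero_lt_one) |>.exists
  have hcontr : ContractingWith ⟨L ^ n / n !, by positivity⟩ Φ^[n] :=
    ⟨hn, LipschitzWith.of_dist_le_mul (hΦ n)⟩
  exact ⟨_, hcontr.isFixedPt_fixedPoint_iterate,
    fun y hy => hcontr.fixedPoint_unique (hy.iterate n)⟩

def SolvesLinearODE (q h : ℝ → ℝ) : Prop :=
  ContDiff ℝ 2 h ∧ ∀ r, deriv (deriv h) r = q r * h r

/-- `f = volterra q a b f` is the integral form of `f'' = q f`, `f 0 = a`, `f' 0 = b`. -/
def volterra (q : ℝ → ℝ) (a b : ℝ) (f : ℝ → ℝ) (t : ℝ) : ℝ :=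
  a + b * t + ∫ s in (0)..t, (t - s) * (q s * f s)

lemma hasDerivAt_integral_sub_mul {g : ℝ → ℝ} (hg : Continuous g) (t : ℝ) :
    HasDerivAt (fun t => ∫ s in (0)..t, (t - s) * g s) (∫ s in (0)..t, g s) t := by
  have hsplit : (fun t => ∫ s in (0)..t, (t - s) * g s) =
      fun t => t * (∫ s in (0)..t, g s) - ∫ s in (0)..t, s * g s := by
    ext t
    simp_rw [sub_mul]
    rw [integral_sub (Continuous.intervalIntegrable (by fun_prop) _ _)
      (Continuous.intervalIntegrable (by fun_prop) _ _), integral_const_mul]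
  rw [hsplit]
  refine (((hasDerivAt_id' t).fun_mul (hg.integral_hasStrictDerivAt 0 t).hasDerivAt).fun_sub
    ((continuous_id'.mul hg).integral_hasStrictDerivAt 0 t).hasDerivAt).congr_deriv ?_
  simp

variable {q : ℝ → ℝ} {a b : ℝ}

lemma hasDerivAt_volterra (hq : Continuous q) {f : ℝ → ℝ} (hf : Continuous f) (t : ℝ) :
    HasDerivAt (volterra q a b f) (b + ∫ s in (0)..t, q s * f s) t := by
  refine (((hasDerivAt_id' t).const_mul b).const_add a |>.fun_add
    (hasDerivAt_integral_sub_mul (g := fun s => q s * f s) (hq.mul hf) t)).congr_deriv ?_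
  ring

lemma continuous_volterra (hq : Continuous q) {f : ℝ → ℝ} (hf : Continuous f) :
    Continuous (volterra q a b f) :=
  continuous_iff_continuousAt.2 fun t => (hasDerivAt_volterra hq hf t).continuousAt

lemma volterra_congr {f g : ℝ → ℝ} {t : ℝ} (hfg : EqOn f g (uIcc 0 t)) :
    volterra q a b f t = volterra q a b g t := by
  unfold volterra
  congr 1
  exact integral_congr fun s hs => by simp only [hfg hs]

lemma solvesLinearODE_of_eq_volterra (hq : Continuous q) {f : ℝ → ℝ} (hf : Continuous f)
    (hfix : ∀ t, f t = volterra q a b f t) :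
    SolvesLinearODE q f ∧ f 0 = a ∧ deriv f 0 = b := by
  have hderiv1 : ∀ t, HasDerivAt f (b + ∫ s in (0)..t, q s * f s) t := fun t =>
    (hasDerivAt_volterra hq hf t).congr_of_eventuallyEq (Eventually.of_forall hfix)
  have hderiv : deriv f = fun t => b + ∫ s in (0)..t, q s * f s := funext fun t => (hderiv1 t).deriv
  have hderiv2 : ∀ t, HasDerivAt (deriv f) (q t * f t) t := fun t => by
    rw [hderiv]
    exact ((hq.mul hf).integral_hasStrictDerivAt 0 t).hasDerivAt.const_add b
  refine ⟨⟨?_, fun t => (hderiv2 t).deriv⟩, by simp [hfix 0, volterra], by simp [hderiv]⟩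
  rw [show (2 : WithTop ℕ∞) = 1 + 1 from rfl, contDiff_succ_iff_deriv]
  refine ⟨fun t => ?_, by simp, contDiff_one_iff_deriv.2
    ⟨fun t => (hderiv2 t).differentiableAt, ?_⟩⟩
  · exact (hderiv1 t).differentiableAt
  · rw [show deriv (deriv f) = fun t => q t * f t from funext fun t => (hderiv2 t).deriv]
    exact hq.mul hf

lemma abs_integral_abs_pow (n : ℕ) (t : ℝ) :
    |∫ s in (0)..t, |s| ^ n| = |t| ^ (n + 1) / (n + 1) := by
  rw [abs_intervalIntegral_eq]
  have := integral_pow_abs_sub_uIoc (a := 0) (b := t) (n := n)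
  simp only [sub_zero] at this
  rw [this, abs_of_nonneg (by positivity)]

variable (a b) in
def volterraIcc (hq : Continuous q) {T : ℝ} (hT : 0 ≤ T) (f : C(Icc (-T) T, ℝ)) :
    C(Icc (-T) T, ℝ) :=
  ⟨fun t => volterra q a b (IccExtend (neg_le_self hT) f) t,
    (continuous_volterra hq f.continuous.Icc_extend').comp continuous_subtype_val⟩

lemma uIcc_zero_subset_Icc {T t : ℝ} (hT : 0 ≤ T) (ht : t ∈ Icc (-T) T) :
    uIcc 0 t ⊆ Icc (-T) T :=
  uIcc_subset_Icc ⟨neg_nonpos.2 hT, hT⟩ ht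

lemma dist_volterraIcc_iterate_apply_le (hq : Continuous q) {T M : ℝ} (hT : 0 ≤ T)
    (hM : ∀ s ∈ Icc (-T) T, |q s| ≤ M) (n : ℕ) (f g : C(Icc (-T) T, ℝ)) (t : Icc (-T) T) :
    dist ((volterraIcc a b hq hT)^[n] f t) ((volterraIcc a b hq hT)^[n] g t) ≤
      (T * M * |(t : ℝ)|) ^ n / n ! * dist f g := by
  have hM0 : 0 ≤ M := (abs_nonneg _).trans (hM 0 ⟨neg_nonpos.2 hT, hT⟩)
  induction n generalizing t with
  | zero => simpa using ContinuousMap.dist_apply_le_dist t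
  | succ n ih =>
    set F := (volterraIcc a b hq hT)^[n] f
    set G := (volterraIcc a b hq hT)^[n] g
    have hdiff : volterraIcc a b hq hT F t - volterraIcc a b hq hT G t =
        ∫ s in (0)..t, (t - s) * q s * (IccExtend (neg_le_self hT) F s -
          IccExtend (neg_le_self hT) G s) := by
      simp only [volterraIcc, ContinuousMap.coe_mk, volterra]
      rw [add_sub_add_left_eq_sub, ← integral_sub]
      · congr 1 with s; ring
      all_goals exact Continuous.intervalIntegrable (by fun_prop) _ _
    have hbound : ∀ s ∈ uIoc 0 (t : ℝ), ‖(t - s) * q s * (IccExtend (neg_le_self hT) F s -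
        IccExtend (neg_le_self hT) G s)‖ ≤
        T * M * ((T * M) ^ n / n ! * dist f g) * |s| ^ n := by
      intro s hs
      have hs' : s ∈ uIcc 0 (t : ℝ) := uIoc_subset_uIcc hs
      have hsT := uIcc_zero_subset_Icc hT t.2 hs'
      have hts : |(t : ℝ) - s| ≤ T := by
        have := abs_sub_right_of_mem_uIcc hs'
        rw [sub_zero] at this
        exact this.trans (abs_le.2 ⟨t.2.1, t.2.2⟩)
      rw [IccExtend_of_mem _ _ hsT, IccExtend_of_mem _ _ hsT, Real.norm_eq_abs, abs_mul,
        abs_mul, ← Real.dist_eq]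
      calc |(t : ℝ) - s| * |q s| * dist (F ⟨s, hsT⟩) (G ⟨s, hsT⟩)
          ≤ T * M * ((T * M * |s|) ^ n / n ! * dist f g) := by
            gcongr
            · exact hM s hsT
            · exact ih ⟨s, hsT⟩
        _ = _ := by ring
    rw [Function.iterate_succ_apply', Function.iterate_succ_apply', dist_eq_norm, hdiff]
    calc _ ≤ |∫ s in (0)..t, T * M * ((T * M) ^ n / n ! * dist f g) * |s| ^ n| :=
          norm_integral_le_abs_of_norm_le
            (MeasureTheory.ae_restrict_of_forall_mem measurableSet_uIoc hbound)
            (Continuous.intervalIntegrable (by fun_prop) _ _)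
      _ = (T * M * |(t : ℝ)|) ^ (n + 1) / (n + 1)! * dist f g := by
          rw [integral_const_mul, abs_mul, abs_integral_abs_pow,
            abs_of_nonneg (by positivity), Nat.factorial_succ]
          push_cast
          field_simp
          ring

lemma dist_volterraIcc_iterate_le (hq : Continuous q) {T M : ℝ} (hT : 0 ≤ T)
    (hM : ∀ s ∈ Icc (-T) T, |q s| ≤ M) (n : ℕ) (f g : C(Icc (-T) T, ℝ)) :
    dist ((volterraIcc a b hq hT)^[n] f) ((volterraIcc a b hq hT)^[n] g) ≤
      (T * M * T) ^ n / n ! * dist f g := by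
  have hM0 : 0 ≤ M := (abs_nonneg _).trans (hM 0 ⟨neg_nonpos.2 hT, hT⟩)
  refine (ContinuousMap.dist_le (by positivity)).2 fun t => ?_
  refine (dist_volterraIcc_iterate_apply_le hq hT hM n f g t).trans ?_
  gcongr
  exact abs_le.2 ⟨t.2.1, t.2.2⟩

variable (a b) in
lemma exists_unique_isFixedPt_volterraIcc (hq : Continuous q) {T : ℝ} (hT : 0 ≤ T) :
    ∃! f, Function.IsFixedPt (volterraIcc a b hq hT) f := by
  obtain ⟨M, hM⟩ := isCompact_Icc.exists_bound_of_continuousOn (s := Icc (-T) T) hq.continuousOn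
  have hM0 : 0 ≤ M := (norm_nonneg _).trans (hM 0 ⟨neg_nonpos.2 hT, hT⟩)
  exact exists_unique_isFixedPt_of_dist_iterate_le (by positivity)
    (dist_volterraIcc_iterate_le hq hT hM)

variable (a b) in
lemma exists_eq_volterra_on_Icc (hq : Continuous q) {T : ℝ} (hT : 0 ≤ T) :
    ∃ f : ℝ → ℝ, Continuous f ∧ ∀ t ∈ Icc (-T) T, f t = volterra q a b f t := by
  obtain ⟨f, hf, -⟩ := exists_unique_isFixedPt_volterraIcc a b hq hT
  refine ⟨IccExtend (neg_le_self hT) f, f.continuous.Icc_extend', fun t ht => ?_⟩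
  rw [IccExtend_of_mem _ _ ht]
  exact (DFunLike.congr_fun hf ⟨t, ht⟩).symm

lemma eqOn_of_eq_volterra_on_Icc (hq : Continuous q) {T : ℝ} (hT : 0 ≤ T) {f g : ℝ → ℝ}
    (hf : Continuous f) (hg : Continuous g)
    (hfv : ∀ t ∈ Icc (-T) T, f t = volterra q a b f t)
    (hgv : ∀ t ∈ Icc (-T) T, g t = volterra q a b g t) :
    EqOn f g (Icc (-T) T) := by
  have hfix : ∀ {u : ℝ → ℝ} (hu : Continuous u), (∀ t ∈ Icc (-T) T, u t = volterra q a b u t) →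
      Function.IsFixedPt (volterraIcc a b hq hT) ((⟨u, hu⟩ : C(ℝ, ℝ)).restrict (Icc (-T) T)) := by
    intro u hu huv
    ext t
    refine (volterra_congr fun s hs => ?_).trans (huv t t.2).symm
    simp [IccExtend_of_mem _ _ (uIcc_zero_subset_Icc hT t.2 hs)]
  intro t ht
  exact DFunLike.congr_fun ((exists_unique_isFixedPt_volterraIcc a b hq hT).unique
    (hfix hf hfv) (hfix hg hgv)) ⟨t, ht⟩

variable (a b) in
lemma exists_eq_volterra (hq : Continuous q) :
    ∃ f : ℝ → ℝ, Continuous f ∧ ∀ t, f t = volterra q a b f t := by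
  -- `u T` solves on `[-|T|, |T|]`; these agree, and the solution is read off the diagonal
  choose u hu_cont hu_eq using fun T : ℝ => exists_eq_volterra_on_Icc a b hq (abs_nonneg T)
  have hmem : ∀ t : ℝ, t ∈ Icc (-|t|) |t| := fun t => abs_le.1 le_rfl
  have hagree : ∀ T s, |s| ≤ |T| → u s s = u T s := fun T s hsT =>
    eqOn_of_eq_volterra_on_Icc hq (abs_nonneg s) (hu_cont s) (hu_cont T) (hu_eq s)
      (fun t ht => hu_eq T t (Icc_subset_Icc (neg_le_neg hsT) hsT ht)) (hmem s)
  refine ⟨fun t => u t t, continuous_iff_continuousAt.2 fun t => ?_, fun t => ?_⟩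
  · refine (hu_cont (|t| + 1)).continuousAt.congr ?_
    filter_upwards [Metric.ball_mem_nhds t one_pos] with s hs
    refine (hagree _ s ?_).symm
    rw [Metric.mem_ball, Real.dist_eq] at hs
    rw [abs_of_nonneg (by positivity : (0 : ℝ) ≤ |t| + 1)]
    linarith [abs_sub_abs_le_abs_sub s t]
  · refine (hu_eq t t (hmem t)).trans (volterra_congr fun s hs => (hagree t s ?_).symm)
    simpa using abs_sub_left_of_mem_uIcc hs

variable (a b) in
theorem exists_solvesLinearODE (hq : Continuous q) :
    ∃ h, SolvesLinearODE q h ∧ h 0 = a ∧ deriv h 0 = b := by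
  obtain ⟨h, hcont, hfix⟩ := exists_eq_volterra a b hq
  exact ⟨h, solvesLinearODE_of_eq_volterra hq hcont hfix⟩

namespace SolvesLinearODE

variable {f g h : ℝ → ℝ}

lemma differentiable (hh : SolvesLinearODE q h) : Differentiable ℝ h :=
  hh.1.differentiable (by norm_num)

lemma contDiff_deriv (hh : SolvesLinearODE q h) : ContDiff ℝ 1 (deriv h) :=
  (contDiff_succ_iff_deriv (n := 1)).1 hh.1 |>.2.2

lemma hasDerivAt_deriv (hh : SolvesLinearODE q h) (r : ℝ) :
    HasDerivAt (deriv h) (q r * h r) r := by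
  rw [← hh.2 r]
  exact (hh.contDiff_deriv.differentiable one_ne_zero r).hasDerivAt

lemma deriv_add_const_mul (hf : SolvesLinearODE q f) (hg : SolvesLinearODE q g) (c : ℝ) :
    deriv (fun r => f r + c * g r) = fun r => deriv f r + c * deriv g r :=
  funext fun r => ((hf.differentiable r).hasDerivAt.add
    ((hg.differentiable r).hasDerivAt.const_mul c)).deriv

lemma add_const_mul (hf : SolvesLinearODE q f) (hg : SolvesLinearODE q g) (c : ℝ) :
    SolvesLinearODE q (fun r => f r + c * g r) := by
  refine ⟨hf.1.add (contDiff_const.mul hg.1), fun r => ?_⟩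
  rw [hf.deriv_add_const_mul hg]
  rw [((hf.hasDerivAt_deriv r).fun_add ((hg.hasDerivAt_deriv r).const_mul c)).deriv]
  ring

lemma wronskian_eq (hf : SolvesLinearODE q f) (hg : SolvesLinearODE q g) (r : ℝ) :
    f r * deriv g r - deriv f r * g r = f 0 * deriv g 0 - deriv f 0 * g 0 := by
  have hW : ∀ r, HasDerivAt (fun r => f r * deriv g r - deriv f r * g r) 0 r := fun r => by
    refine (((hf.differentiable r).hasDerivAt.mul (hg.hasDerivAt_deriv r)).sub
      ((hf.hasDerivAt_deriv r).mul (hg.differentiable r).hasDerivAt)).congr_deriv ?_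
    ring
  exact is_const_of_deriv_eq_zero (fun r => (hW r).differentiableAt) (fun r => (hW r).deriv) r 0

lemma eq_zero_of_le_of_eq_zero (hq : Continuous q) (hh : SolvesLinearODE q h) {r₀ r : ℝ}
    (hr : r₀ ≤ r) (h0 : h r₀ = 0) (h0' : deriv h r₀ = 0) : h r = 0 := by
  -- Grönwall for `(h, h')`, whose derivative `(h', q h)` has norm at most `max 1 M` times its own
  obtain ⟨M, hM⟩ := isCompact_Icc.exists_bound_of_continuousOn (s := Icc r₀ r) hq.continuousOn
  have hvec := eq_zero_of_abs_deriv_le_mul_abs_self_of_eq_zero_right (K := max 1 M)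
    (f := fun s => (h s, deriv h s)) (f' := fun s => (deriv h s, q s * h s))
    (hh.differentiable.continuous.prodMk hh.contDiff_deriv.continuous).continuousOn
    (fun s _ => ((hh.differentiable s).hasDerivAt.prodMk (hh.hasDerivAt_deriv s)).hasDerivWithinAt)
    (by simp [h0, h0']) (fun s hs => ?_) r ⟨hr, le_rfl⟩
  · exact congrArg Prod.fst hvec
  simp only [Prod.norm_def, norm_mul]
  refine max_le ((le_max_right _ _).trans (le_mul_of_one_le_left (by positivity) (le_max_left _ _)))
    ?_
  exact mul_le_mul (le_max_of_le_right (hM s (Ico_subset_Icc_self hs))) (le_max_left _ _)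
    (norm_nonneg _) (by positivity)

lemma le_apply_of_nonneg_on_Ioo (hq0 : ∀ r, 0 ≤ q r) (hh : SolvesLinearODE q h) {r₁ r₀ : ℝ}
    (hnn : ∀ r ∈ Ioo r₁ r₀, 0 ≤ h r) (hder : deriv h r₀ ≤ 0) :
    ∀ r ∈ Icc r₁ r₀, h r₀ ≤ h r ∧ deriv h r ≤ 0 := by
  have hconvex : MonotoneOn (deriv h) (Icc r₁ r₀) :=
    monotoneOn_of_deriv_nonneg (convex_Icc _ _) hh.contDiff_deriv.continuous.continuousOn
      (hh.contDiff_deriv.differentiable one_ne_zero).differentiableOn fun r hr => by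
        rw [interior_Icc] at hr
        rw [(hh.hasDerivAt_deriv r).deriv]
        exact mul_nonneg (hq0 r) (hnn r hr)
  have hder' : ∀ r ∈ Icc r₁ r₀, deriv h r ≤ 0 := fun r hr =>
    (hconvex hr (right_mem_Icc.2 (hr.1.trans hr.2)) hr.2).trans hder
  have hanti : AntitoneOn h (Icc r₁ r₀) :=
    antitoneOn_of_deriv_nonpos (convex_Icc _ _) hh.differentiable.continuous.continuousOn
      hh.differentiable.differentiableOn fun r hr => hder' r (interior_subset hr)
  exact fun r hr => ⟨hanti hr (right_mem_Icc.2 (hr.1.trans hr.2)) hr.2, hder' r hr⟩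

lemma le_apply_of_le (hq0 : ∀ r, 0 ≤ q r) (hh : SolvesLinearODE q h) {r₀ r : ℝ}
    (hpos : 0 < h r₀) (hder : deriv h r₀ ≤ 0) (hr : r ≤ r₀) :
    h r₀ ≤ h r ∧ deriv h r ≤ 0 := by
  have hpos' : ∀ s ∈ Icc r r₀, 0 < h s := by
    by_contra! hneg
    set S := Icc r r₀ ∩ {s | h s ≤ 0}
    have hS : IsCompact S := isCompact_Icc.inter_right (isClosed_le hh.differentiable.continuous
      continuous_const)
    have hz : sSup S ∈ S := hS.sSup_mem hneg
    have hnn : ∀ s ∈ Ioo (sSup S) r₀, 0 ≤ h s := fun s hs => by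
      by_contra! hs'
      exact (le_csSup hS.bddAbove ⟨⟨hz.1.1.trans hs.1.le, hs.2.le⟩, hs'.le⟩).not_gt hs.1
    have := (hh.le_apply_of_nonneg_on_Ioo hq0 hnn hder (sSup S) ⟨le_rfl, hz.1.2⟩).1
    linarith [show h (sSup S) ≤ 0 from hz.2]
  exact hh.le_apply_of_nonneg_on_Ioo hq0 (fun s hs => (hpos' s ⟨hs.1.le, hs.2.le⟩).le) hder r
    ⟨le_rfl, hr⟩

lemma pos_of_nonneg (hq : Continuous q) (hh : SolvesLinearODE q h) {r₁ r : ℝ}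
    (hnn : ∀ s < r₁, 0 ≤ h s) (h1 : h r₁ ≠ 0) (hr : r < r₁) : 0 < h r := by
  refine (hnn r hr).lt_of_ne fun hzero => h1 ?_
  have hmin : IsLocalMin h r :=
    Filter.eventually_of_mem (Iio_mem_nhds hr) fun s hs => hzero ▸ hnn s hs
  exact hh.eq_zero_of_le_of_eq_zero hq hr.le hzero.symm hmin.deriv_eq_zero

lemma exists_forall_pos_of_deriv_neg (hq0 : ∀ r, 0 ≤ q r) (hf : SolvesLinearODE q f)
    (hg : SolvesLinearODE q g) {c r₀ : ℝ} (hpos : ∀ r ≤ 0, 0 < f r + c * g r) (hr₀ : r₀ ≤ 0)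
    (hder : deriv f r₀ + c * deriv g r₀ < 0) :
    ∃ ε > 0, ∀ r < 0, 0 < f r + (c + ε) * g r := by
  have hfc := hf.differentiable.continuous
  have hgc := hg.differentiable.continuous
  have hnear : ∀ᶠ ε in 𝓝 0,
      (∀ r ∈ Icc r₀ 0, 0 < f r + (c + ε) * g r) ∧ deriv f r₀ + (c + ε) * deriv g r₀ < 0 := by
    refine (isCompact_Icc.eventually_forall_of_forall_eventually fun r hr => ?_).and ?_
    · exact continuousAt_const.eventually_lt (by fun_prop : Continuous fun p : ℝ × ℝ =>
        f p.2 + (c + p.1) * g p.2).continuousAt (by simpa using hpos r hr.2)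
    · exact (by fun_prop : Continuous fun ε => deriv f r₀ + (c + ε) * deriv g r₀).continuousAt
        |>.eventually_lt continuousAt_const (by simpa using hder)
  obtain ⟨ε, ⟨hposε, hderε⟩, hε⟩ :=
    (hnear.filter_mono nhdsWithin_le_nhds |>.and (self_mem_nhdsWithin (s := Ioi 0))).exists
  refine ⟨ε, hε, fun r hr => ?_⟩
  rcases le_total r r₀ with hle | hge
  · have hfε := hf.add_const_mul hg (c + ε)
    have := hfε.le_apply_of_le hq0 (hposε r₀ ⟨le_rfl, hr₀⟩)
      (by rw [hf.deriv_add_const_mul hg]; exact hderε.le) hle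
    exact (hposε r₀ ⟨le_rfl, hr₀⟩).trans_le this.1
  · exact hposε r ⟨hge, hr.le⟩

lemma neg_of_neg (hq0 : ∀ r, 0 ≤ q r) (hf : SolvesLinearODE q f) (hg : SolvesLinearODE q g)
    (hf0 : f 0 = 1) (hf0' : deriv f 0 = 0) (hg0 : g 0 = 0) (hg0' : deriv g 0 = 1) {r : ℝ}
    (hr : r < 0) : g r < 0 := by
  have hfpos : ∀ s ≤ 0, 0 < f s := fun s hs => one_pos.trans_le <|
    hf0 ▸ (hf.le_apply_of_le hq0 (by rw [hf0]; exact one_pos) hf0'.le hs).1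
  have hW : ∀ s, f s * deriv g s - deriv f s * g s = 1 := fun s => by
    simpa [hf0, hf0', hg0, hg0'] using hf.wronskian_eq hg s
  -- the Wronskian is the numerator of `(g / f)'`
  have hmono : StrictMonoOn (fun s => g s / f s) (Iic 0) :=
    strictMonoOn_of_deriv_pos (convex_Iic 0) (hg.differentiable.continuous.continuousOn.div
      hf.differentiable.continuous.continuousOn fun s hs => (hfpos s hs).ne') fun s hs => by
      rw [interior_Iic] at hs
      rw [((hg.differentiable s).hasDerivAt.fun_div (hf.differentiable s).hasDerivAt
        (hfpos s hs.le).ne').deriv]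
      have := hW s
      exact div_pos (by linarith) (pow_pos (hfpos s hs.le) 2)
  have : g r / f r < g 0 / f 0 := hmono hr.le self_mem_Iic hr
  rw [hg0, zero_div, div_neg_iff] at this
  rcases this with ⟨-, hf'⟩ | ⟨hgr, -⟩
  · exact absurd hf' (hfpos r hr.le).not_gt
  · exact hgr

end SolvesLinearODE

/-- The principal solution is `f + criticalSlope f g * g`; its slope at `0` is the paper's
critical curvature `𝐤`. -/
def criticalSlope (f g : ℝ → ℝ) : ℝ :=
  sInf ((fun r => f r / -g r) '' Iio 0)

section CriticalSlope

variable {f g : ℝ → ℝ}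

lemma criticalSlope_le (hf : ∀ r < 0, 0 ≤ f r) (hg : ∀ r < 0, g r < 0) {r : ℝ} (hr : r < 0) :
    criticalSlope f g ≤ f r / -g r :=
  csInf_le ⟨0, by rintro _ ⟨s, hs, rfl⟩; exact div_nonneg (hf s hs) (neg_nonneg.2 (hg s hs).le)⟩
    ⟨r, hr, rfl⟩

lemma add_criticalSlope_mul_nonneg (hf : ∀ r < 0, 0 ≤ f r) (hg : ∀ r < 0, g r < 0) {r : ℝ}
    (hr : r < 0) : 0 ≤ f r + criticalSlope f g * g r := by
  have := criticalSlope_le hf hg hr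
  rw [le_div_iff₀ (neg_pos.2 (hg r hr))] at this
  linarith

lemma le_criticalSlope (hg : ∀ r < 0, g r < 0) {c : ℝ} (hc : ∀ r < 0, 0 ≤ f r + c * g r) :
    c ≤ criticalSlope f g :=
  le_csInf ⟨_, -1, mem_Iio.2 neg_one_lt_zero, rfl⟩ <| by
    rintro _ ⟨s, hs, rfl⟩
    rw [le_div_iff₀ (neg_pos.2 (hg s hs))]
    linarith [hc s hs]

end CriticalSlope

theorem exists_principal_solution (hq : Continuous q) (hq0 : ∀ r, 0 ≤ q r) :
    ∃ h, SolvesLinearODE q h ∧ h 0 = 1 ∧ (∀ r ≤ 0, 0 ≤ h r ∧ h r ≤ 1) ∧ 0 ≤ deriv h 0 := by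
  obtain ⟨f, hf, hf0, hf0'⟩ := exists_solvesLinearODE 1 0 hq
  obtain ⟨g, hg, hg0, hg0'⟩ := exists_solvesLinearODE 0 1 hq
  have hfpos : ∀ r < 0, 0 ≤ f r := fun r hr => zero_le_one.trans <|
    hf0 ▸ (hf.le_apply_of_le hq0 (by rw [hf0]; exact one_pos) hf0'.le hr.le).1
  have hgneg : ∀ r < 0, g r < 0 := fun r => hf.neg_of_neg hq0 hg hf0 hf0' hg0 hg0'
  set c := criticalSlope f g
  have hh := hf.add_const_mul hg c
  have hh0 : f 0 + c * g 0 = 1 := by simp [hf0, hg0]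
  have hpos : ∀ r ≤ 0, 0 < f r + c * g r := fun r hr => hr.lt_or_eq.elim
    (hh.pos_of_nonneg hq (fun s => add_criticalSlope_mul_nonneg hfpos hgneg) (by simp [hh0]))
    (fun hr => by simp [hr, hh0])
  have hderiv : ∀ r ≤ 0, 0 ≤ deriv f r + c * deriv g r := by
    by_contra! ⟨r₀, hr₀, hder⟩
    obtain ⟨ε, hε, hposε⟩ := hf.exists_forall_pos_of_deriv_neg hq0 hg hpos hr₀ hder
    linarith [le_criticalSlope hgneg fun r hr => (hposε r hr).le]
  have hmono : MonotoneOn (fun r => f r + c * g r) (Iic 0) :=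
    monotoneOn_of_deriv_nonneg (convex_Iic 0) hh.differentiable.continuous.continuousOn
      hh.differentiable.differentiableOn fun r hr => by
        rw [hf.deriv_add_const_mul hg]
        exact hderiv r (mem_Iic.1 (interior_subset hr))
  refine ⟨_, hh, hh0, fun r hr => ⟨(hpos r hr).le, hh0 ▸ hmono hr self_mem_Iic hr⟩, ?_⟩
  simpa [hf.deriv_add_const_mul hg, hf0', hg0'] using hderiv 0 le_rfl

/-- Existence half of Proposition 4.1 (scalar Jacobi equation): for continuous
`K ≤ 0` there is a `C²` solution of `h'' + K h = 0` with `h 0 = 1`,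
`0 ≤ h ≤ 1` on `(-∞, 0]`, and `h' 0 ≥ 0`. -/
theorem stmt_0 (K : ℝ → ℝ) (hKcont : Continuous K) (hKnonpos : ∀ r : ℝ, K r ≤ 0) :
    ∃ h : ℝ → ℝ, ContDiff ℝ 2 h ∧
      (∀ r : ℝ, deriv (deriv h) r + K r * h r = 0) ∧
      h 0 = 1 ∧
      (∀ r : ℝ, r ≤ 0 → 0 ≤ h r ∧ h r ≤ 1) ∧
      0 ≤ deriv h 0 := by
  obtain ⟨h, hh, h0, hbounds, hder⟩ :=
    exists_principal_solution hKcont.neg fun r => neg_nonneg.2 (hKnonpos r)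
  exact ⟨h, hh.1, fun r => by rw [hh.2 r]; simp, h0, hbounds, hder⟩
end
end

section
/- Let K : ℝ → ℝ be a continuous function with K(r) ≤ 0 for all r. Suppose h₁, h₂ : ℝ → ℝ are twice continuously differentiable, satisfy hᵢ''(r) + K(r)·hᵢ(r) = 0 for all r ∈ ℝ and hᵢ(0) = 1 (i = 1,2), and each is bounded on (-∞, 0] (i.e., there is a constant C with |hᵢ(r)| ≤ C for all r ≤ 0). Then h₁ = h₂ on all of ℝ; in particular h₁'(0) = h₂'(0). -/
/-!
For the difference `g` of two solutions, `(g g')' = g'² - K g² ≥ 0`, so `g g'` is nondecreasing.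
If `g g'` were negative somewhere on `(-∞, 0]`, then `(g²)' = 2 g g'` would stay below a
negative constant further left and `g²` would grow linearly towards `-∞`, against boundedness.
Hence `g²` is nondecreasing on `(-∞, 0]` and vanishes there, since `g 0 = 0`. Uniqueness for the
initial value problem, via Grönwall applied to the energy `g² + g'²`, then gives `g = 0` to the
right as well.
-/

open Set Topology

theorem HasDerivAt.fun_sq {g : ℝ → ℝ} {d r : ℝ} (hg : HasDerivAt g d r) :
    HasDerivAt (fun r => g r ^ 2) (2 * g r * d) r := by
  simpa using hg.fun_pow 2

section JacobiEquation

variable {K g g' : ℝ → ℝ}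

theorem monotone_mul_of_jacobi (hK : ∀ r, K r ≤ 0) (hg : ∀ r, HasDerivAt g (g' r) r)
    (hg' : ∀ r, HasDerivAt g' (-K r * g r) r) : Monotone (g * g') :=
  monotone_of_hasDerivAt_nonneg (fun r => (hg r).mul (hg' r)) fun r => by
    have := mul_nonneg (neg_nonneg.2 (hK r)) (mul_self_nonneg (g r))
    simp only [Pi.zero_apply]
    nlinarith [mul_self_nonneg (g' r)]

theorem mul_nonneg_of_monotone_mul_of_bdd {a C : ℝ} (hg : ∀ r, HasDerivAt g (g' r) r)
    (hmono : Monotone (g * g')) (hC : ∀ r ≤ a, |g r| ≤ C) {r₀ : ℝ} (hr₀ : r₀ ≤ a) :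
    0 ≤ g r₀ * g' r₀ := by
  by_contra! hneg
  set c := g r₀ * g' r₀
  have hanti : AntitoneOn (fun r => g r ^ 2 - 2 * c * r) (Iic r₀) :=
    antitoneOn_of_hasDerivWithinAt_nonpos (f' := fun r => 2 * g r * g' r - 2 * c)
      (convex_Iic r₀)
      (fun r _ => ((hg r).continuousAt.pow 2 |>.sub (continuousAt_const.mul continuousAt_id))
        |>.continuousWithinAt)
      (fun r _ => ((hg r).fun_sq.sub ((hasDerivAt_id r).const_mul (2 * c))
        |>.congr_deriv (by ring)).hasDerivWithinAt)
      fun r hr => by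
        have : g r * g' r ≤ c := hmono (mem_Iic.1 (interior_subset hr))
        linarith
  set r := r₀ + (C ^ 2 + 1) / (2 * c)
  have hr : r ≤ r₀ := by
    have : (C ^ 2 + 1) / (2 * c) ≤ 0 :=
      div_nonpos_of_nonneg_of_nonpos (by positivity) (by linarith)
    linarith
  have hgrowth : g r₀ ^ 2 - 2 * c * r₀ ≤ g r ^ 2 - 2 * c * r := hanti hr (mem_Iic.2 le_rfl) hr
  have hlin : 2 * c * (r - r₀) = C ^ 2 + 1 := by
    have : c ≠ 0 := hneg.ne
    simp only [r, add_sub_cancel_left]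
    field_simp
  have hbound : g r ^ 2 ≤ C ^ 2 := by
    obtain ⟨hlo, hhi⟩ := abs_le.1 (hC r (hr.trans hr₀))
    exact sq_le_sq' hlo hhi
  nlinarith [sq_nonneg (g r₀)]

theorem eq_zero_of_mul_nonneg {a : ℝ} (hg : ∀ r, HasDerivAt g (g' r) r) (ha : g a = 0)
    (hnonneg : ∀ r ≤ a, 0 ≤ g r * g' r) {r : ℝ} (hr : r ≤ a) : g r = 0 := by
  have hmono : MonotoneOn (fun r => g r ^ 2) (Iic a) :=
    monotoneOn_of_hasDerivWithinAt_nonneg (convex_Iic a)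
      (fun r _ => ((hg r).continuousAt.pow 2).continuousWithinAt)
      (fun r _ => (hg r).fun_sq.hasDerivWithinAt) fun r hr => by
        have := hnonneg r (mem_Iic.1 (interior_subset hr))
        linarith
  have : g r ^ 2 ≤ 0 := by simpa [ha] using hmono hr (mem_Iic.2 le_rfl) hr
  exact pow_eq_zero_iff two_ne_zero |>.1 (le_antisymm this (sq_nonneg _))

theorem eq_zero_of_jacobi_of_le (hKc : Continuous K) (hg : ∀ r, HasDerivAt g (g' r) r)
    (hg' : ∀ r, HasDerivAt g' (-K r * g r) r) {a t : ℝ} (ha : g a = 0) (ha' : g' a = 0)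
    (ht : a ≤ t) : g t = 0 := by
  obtain ⟨M, hM⟩ :=
    (isCompact_Icc (a := a) (b := t)).exists_bound_of_continuousOn hKc.continuousOn
  set E := fun r => g r ^ 2 + g' r ^ 2
  have hE : ∀ r, HasDerivAt E (2 * g r * g' r * (1 - K r)) r := fun r =>
    ((hg r).fun_sq.add (hg' r).fun_sq).congr_deriv (by ring)
  have hbound : ∀ r ∈ Ico a t, ‖2 * g r * g' r * (1 - K r)‖ ≤ (1 + M) * ‖E r‖ := by
    intro r hr
    have hK : |K r| ≤ M := hM r (Ico_subset_Icc_self hr)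
    have hgg : |2 * g r * g' r| ≤ E r := by
      rw [abs_mul, abs_mul, abs_two, show E r = |g r| ^ 2 + |g' r| ^ 2 by simp [E]]
      exact two_mul_le_add_sq _ _
    have h1K : |1 - K r| ≤ 1 + M := (abs_sub _ _).trans (by rw [abs_one]; linarith)
    rw [Real.norm_eq_abs, Real.norm_eq_abs, abs_mul, abs_of_nonneg (by positivity : 0 ≤ E r),
      mul_comm (1 + M)]
    exact mul_le_mul hgg h1K (abs_nonneg _) ((abs_nonneg _).trans hgg)
  have hEt : E t = 0 :=
    eq_zero_of_abs_deriv_le_mul_abs_self_of_eq_zero_right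
      (fun r _ => (hE r).continuousAt.continuousWithinAt) (fun r _ => (hE r).hasDerivWithinAt)
      (by simp [E, ha, ha']) hbound t (right_mem_Icc.2 ht)
  nlinarith [sq_nonneg (g t), sq_nonneg (g' t)]

theorem eq_zero_of_jacobi_of_bdd (hKc : Continuous K) (hK : ∀ r, K r ≤ 0)
    (hg : ∀ r, HasDerivAt g (g' r) r) (hg' : ∀ r, HasDerivAt g' (-K r * g r) r) (h0 : g 0 = 0)
    {C : ℝ} (hC : ∀ r ≤ 0, |g r| ≤ C) : g = 0 := by
  have hnonpos : ∀ r ≤ 0, g r = 0 := fun r =>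
    eq_zero_of_mul_nonneg hg h0 fun _ =>
      mul_nonneg_of_monotone_mul_of_bdd hg (monotone_mul_of_jacobi hK hg hg') hC
  -- The initial value problem is posed at `-1`, where `g` vanishes on a neighbourhood.
  have hnear : g =ᶠ[𝓝 (-1)] fun _ => 0 := by
    filter_upwards [Iic_mem_nhds (show (-1 : ℝ) < 0 by norm_num)] with r hr using hnonpos r hr
  have hderiv : g' (-1) = 0 :=
    (hg (-1)).unique ((hasDerivAt_const (-1) 0).congr_of_eventuallyEq hnear)
  funext t
  rcases le_total t 0 with ht | ht
  · exact hnonpos t ht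
  · exact eq_zero_of_jacobi_of_le hKc hg hg' (hnonpos (-1) (by norm_num)) hderiv (by linarith)

theorem hasDerivAt_deriv_of_jacobi {h : ℝ → ℝ} (hC2 : ContDiff ℝ 2 h)
    (hode : ∀ r, deriv (deriv h) r + K r * h r = 0) (r : ℝ) :
    HasDerivAt (deriv h) (-K r * h r) r :=
  (hC2.differentiable_deriv_two r).hasDerivAt.congr_deriv (by linarith [hode r])

end JacobiEquation

/-- Uniqueness half of Proposition 4.1 (scalar form): a solution of
`h'' + K h = 0` with `K ≤ 0`, `h 0 = 1`, bounded on `(-∞, 0]`, is unique. -/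
theorem stmt_1 (K : ℝ → ℝ) (hKcont : Continuous K) (hKnonpos : ∀ r : ℝ, K r ≤ 0)
    (h₁ h₂ : ℝ → ℝ)
    (h₁C2 : ContDiff ℝ 2 h₁) (h₂C2 : ContDiff ℝ 2 h₂)
    (h₁ode : ∀ r : ℝ, deriv (deriv h₁) r + K r * h₁ r = 0)
    (h₂ode : ∀ r : ℝ, deriv (deriv h₂) r + K r * h₂ r = 0)
    (h₁0 : h₁ 0 = 1) (h₂0 : h₂ 0 = 1)
    (h₁bdd : ∃ C : ℝ, ∀ r : ℝ, r ≤ 0 → |h₁ r| ≤ C)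
    (h₂bdd : ∃ C : ℝ, ∀ r : ℝ, r ≤ 0 → |h₂ r| ≤ C) :
    h₁ = h₂ ∧ deriv h₁ 0 = deriv h₂ 0 := by
  have hg : ∀ r, HasDerivAt (h₁ - h₂) ((deriv h₁ - deriv h₂) r) r := fun r =>
    (h₁C2.differentiable two_ne_zero r).hasDerivAt.sub
      (h₂C2.differentiable two_ne_zero r).hasDerivAt
  have hg' : ∀ r, HasDerivAt (deriv h₁ - deriv h₂) (-K r * (h₁ - h₂) r) r := fun r =>
    ((hasDerivAt_deriv_of_jacobi h₁C2 h₁ode r).sub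
      (hasDerivAt_deriv_of_jacobi h₂C2 h₂ode r)).congr_deriv (by simp only [Pi.sub_apply]; ring)
  obtain ⟨C₁, hC₁⟩ := h₁bdd
  obtain ⟨C₂, hC₂⟩ := h₂bdd
  have heq : h₁ = h₂ := sub_eq_zero.1 <|
    eq_zero_of_jacobi_of_bdd hKcont hKnonpos hg hg' (by simp [h₁0, h₂0]) fun r hr =>
      (abs_sub _ _).trans (add_le_add (hC₁ r hr) (hC₂ r hr))
  exact ⟨heq, by rw [heq]⟩
end

section
/- Let K : ℝ → ℝ be continuous with K(r) ≤ 0 for all r, let s > 0, and let h : ℝ → ℝ be twice continuously differentiable with h''(r) + K(r)·h(r) = 0 on [-s, 0], h(-s) = 0, and h(0) = 1. Then 0 ≤ h(r) ≤ 1 + r/s for all r ∈ [-s, 0], and 0 < h'(-s) ≤ 1/s. -/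
/-!
Where `h < 0` the equation gives `h'' = -K h ≤ 0`, so a negative minimum of `h` would be the
starting point of a concave stretch with horizontal tangent, along which `h` could never climb
back to `h 0 = 1`; hence `h ≥ 0`. Then `h'' ≥ 0`, `h` is convex and lies below its chord,
and `h'(-s)` is at most the chord's slope `1/s`. Finally `h'(-s) ≥ 0` because `-s` is a minimum,
and `h'(-s) ≠ 0` by uniqueness for the Cauchy problem (Grönwall), since `h ≢ 0`.
-/

open Set Filter Topology

theorem exists_first_nonneg_of_neg {f : ℝ → ℝ} {a b : ℝ} (hab : a ≤ b)
    (hf : ContinuousOn f (Icc a b)) (ha : f a < 0) (hb : 0 ≤ f b) :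
    ∃ c ∈ Ioc a b, 0 ≤ f c ∧ ∀ y ∈ Ico a c, f y < 0 := by
  set S := Icc a b ∩ f ⁻¹' Ici 0
  have hSbdd : BddBelow S := ⟨a, fun y hy => hy.1.1⟩
  have hcS : sInf S ∈ S :=
    (hf.preimage_isClosed_of_isClosed isClosed_Icc isClosed_Ici).csInf_mem
      ⟨b, right_mem_Icc.2 hab, hb⟩ hSbdd
  refine ⟨sInf S, ⟨hcS.1.1.lt_of_ne ?_, hcS.1.2⟩, hcS.2, fun y hy => ?_⟩
  · rintro hc
    exact (hc ▸ ha).not_ge hcS.2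
  · by_contra! hy0
    exact (csInf_le hSbdd ⟨⟨hy.1, hy.2.le.trans hcS.1.2⟩, hy0⟩).not_gt hy.2

theorem nonneg_of_deriv2_nonpos_of_neg {f : ℝ → ℝ} {a b : ℝ}
    (hf : ContinuousOn f (Icc a b)) (hf' : DifferentiableOn ℝ f (Ioo a b))
    (hf'' : DifferentiableOn ℝ (deriv f) (Ioo a b)) (ha : 0 ≤ f a) (hb : 0 ≤ f b)
    (hconc : ∀ x ∈ Ioo a b, f x < 0 → deriv (deriv f) x ≤ 0) :
    ∀ x ∈ Icc a b, 0 ≤ f x := by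
  by_contra! ⟨x, hx, hfx⟩
  obtain ⟨m, hm, hmin⟩ := isCompact_Icc.exists_isMinOn ⟨x, hx⟩ hf
  have hfm : f m < 0 := (hmin hx).trans_lt hfx
  have hm' : m ∈ Ioo a b :=
    ⟨hm.1.lt_of_ne (by rintro rfl; linarith), hm.2.lt_of_ne (by rintro rfl; linarith)⟩
  have hderiv : deriv f m = 0 := (hmin.isLocalMin (Icc_mem_nhds hm'.1 hm'.2)).deriv_eq_zero
  obtain ⟨c, hc, hfc, hneg⟩ :=
    exists_first_nonneg_of_neg hm.2 (hf.mono (Icc_subset_Icc_left hm.1)) hfm hb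
  have hsub : Ioo m c ⊆ Ioo a b := Ioo_subset_Ioo hm'.1.le hc.2
  have hconcave : ConcaveOn ℝ (Icc m c) f := by
    refine concaveOn_of_deriv2_nonpos (convex_Icc m c)
      (hf.mono (Icc_subset_Icc hm.1 hc.2)) ?_ ?_ ?_ <;> rw [interior_Icc]
    · exact hf'.mono hsub
    · exact hf''.mono hsub
    · exact fun y hy => hconc y (hsub hy) (hneg y (Ioo_subset_Ico_self hy))
  have hslope := hconcave.slope_le_deriv (left_mem_Icc.2 hc.1.le) (right_mem_Icc.2 hc.1.le) hc.1
    (hf'.differentiableAt (Ioo_mem_nhds hm'.1 hm'.2))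
  rw [hderiv, slope_def_field, div_nonpos_iff] at hslope
  rcases hslope with ⟨-, hcm⟩ | ⟨hfcm, -⟩ <;> linarith [hc.1]

theorem deriv_nonneg_of_isMinOn_Icc_left {f : ℝ → ℝ} {a b : ℝ} (hab : a < b)
    (hmin : IsMinOn f (Icc a b) a) (hf : DifferentiableAt ℝ f a) : 0 ≤ deriv f a := by
  have hslope : Tendsto (slope f a) (𝓝[>] a) (𝓝 (deriv f a)) :=
    (hasDerivWithinAt_iff_tendsto_slope' (lt_irrefl a)).mp hf.hasDerivAt.hasDerivWithinAt
  refine ge_of_tendsto hslope ?_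
  filter_upwards [Ioo_mem_nhdsGT hab] with y hy
  rw [slope_def_field]
  exact div_nonneg (sub_nonneg.2 (hmin (Ioo_subset_Icc_self hy))) (sub_nonneg.2 hy.1.le)

theorem ConvexOn.le_add_slope_mul {f : ℝ → ℝ} {a b x : ℝ} (hf : ConvexOn ℝ (Icc a b) f)
    (hx : x ∈ Icc a b) : f x ≤ f a + slope f a b * (x - a) := by
  rcases hx.1.eq_or_lt with rfl | hax
  · simp
  have hab : a < b := hax.trans_le hx.2
  have hmono : slope f a x ≤ slope f a b :=
    hf.slope_mono (left_mem_Icc.2 hab.le) ⟨hx, hax.ne'⟩ ⟨right_mem_Icc.2 hab.le, hab.ne'⟩ hx.2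
  rw [slope_def_field, div_le_iff₀ (sub_pos.2 hax)] at hmono
  linarith

theorem eq_zero_of_deriv2_add_mul_eq_zero {K h : ℝ → ℝ} {a b : ℝ}
    (hK : ContinuousOn K (Icc a b)) (hd1 : Differentiable ℝ h)
    (hd2 : Differentiable ℝ (deriv h))
    (hode : ∀ r ∈ Icc a b, deriv (deriv h) r + K r * h r = 0)
    (ha : h a = 0) (ha' : deriv h a = 0) :
    ∀ x ∈ Icc a b, h x = 0 := by
  obtain ⟨C, hC⟩ := isCompact_Icc.exists_bound_of_continuousOn hK
  have hC' : 0 ≤ max C 1 := zero_le_one.trans (le_max_right _ _)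
  have hbound : ∀ x ∈ Ico a b,
      ‖(deriv h x, deriv (deriv h) x)‖ ≤ max C 1 * ‖(h x, deriv h x)‖ := by
    intro x hx
    have h2 : deriv (deriv h) x = -(K x * h x) := by linarith [hode x (Ico_subset_Icc_self hx)]
    rw [h2, Prod.norm_def, Prod.norm_def, norm_neg, norm_mul]
    refine max_le ?_ ?_
    · calc ‖deriv h x‖ ≤ max C 1 * ‖deriv h x‖ :=
            le_mul_of_one_le_left (norm_nonneg _) (le_max_right _ _)
        _ ≤ _ := mul_le_mul_of_nonneg_left (le_max_right _ _) hC'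
    · calc ‖K x‖ * ‖h x‖ ≤ max C 1 * ‖h x‖ :=
            mul_le_mul_of_nonneg_right ((hC x (Ico_subset_Icc_self hx)).trans (le_max_left _ _))
              (norm_nonneg _)
        _ ≤ _ := mul_le_mul_of_nonneg_left (le_max_left _ _) hC'
  have hzero := eq_zero_of_abs_deriv_le_mul_abs_self_of_eq_zero_right
    (f := fun t => (h t, deriv h t)) (hd1.continuous.prodMk hd2.continuous).continuousOn
    (fun t _ => ((hd1 t).hasDerivAt.prodMk (hd2 t).hasDerivAt).hasDerivWithinAt)
    (by simp [ha, ha']) hbound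
  exact fun x hx => congrArg Prod.fst (hzero x hx)

/-- Intermediate claim in the proof of Proposition 4.1: for the two-point
boundary-value solution of `h'' + K h = 0` with `K ≤ 0`, `h (-s) = 0`,
`h 0 = 1`, convexity gives `0 ≤ h r ≤ 1 + r/s` on `[-s, 0]` and
`0 < h'(-s) ≤ 1/s`. -/
theorem stmt_2 (K : ℝ → ℝ) (hKcont : Continuous K) (hKnonpos : ∀ r : ℝ, K r ≤ 0)
    (s : ℝ) (hs : 0 < s)
    (h : ℝ → ℝ) (hC2 : ContDiff ℝ 2 h)
    (hode : ∀ r ∈ Set.Icc (-s) 0, deriv (deriv h) r + K r * h r = 0)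
    (hends : h (-s) = 0) (h0 : h 0 = 1) :
    (∀ r ∈ Set.Icc (-s) 0, 0 ≤ h r ∧ h r ≤ 1 + r / s) ∧
      (0 < deriv h (-s) ∧ deriv h (-s) ≤ 1 / s) := by
  have hd1 : Differentiable ℝ h := hC2.differentiable (by norm_num)
  have hd2 : Differentiable ℝ (deriv h) :=
    ((contDiff_succ_iff_deriv (n := 1)).mp hC2).2.2.differentiable one_ne_zero
  have hss : -s < 0 := by linarith
  have hdd : ∀ r ∈ Icc (-s) 0, deriv (deriv h) r = -K r * h r := fun r hr => by
    linarith [hode r hr]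
  have hnonneg : ∀ r ∈ Icc (-s) 0, 0 ≤ h r :=
    nonneg_of_deriv2_nonpos_of_neg hd1.continuous.continuousOn hd1.differentiableOn
      hd2.differentiableOn hends.ge (by rw [h0]; exact zero_le_one) fun r hr hneg => by
        rw [hdd r (Ioo_subset_Icc_self hr)]
        exact mul_nonpos_of_nonneg_of_nonpos (neg_nonneg.2 (hKnonpos r)) hneg.le
  have hconv : ConvexOn ℝ (Icc (-s) 0) h := by
    refine convexOn_of_deriv2_nonneg (convex_Icc _ _) hd1.continuous.continuousOn
      hd1.differentiableOn hd2.differentiableOn fun r hr => ?_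
    rw [interior_Icc] at hr
    rw [Function.iterate_succ_apply, Function.iterate_one, hdd r (Ioo_subset_Icc_self hr)]
    exact mul_nonneg (neg_nonneg.2 (hKnonpos r)) (hnonneg r (Ioo_subset_Icc_self hr))
  have hchord : slope h (-s) 0 = 1 / s := by simp [slope_def_field, hends, h0]
  refine ⟨fun r hr => ⟨hnonneg r hr, ?_⟩, lt_of_le_of_ne ?_ fun hzero => ?_, ?_⟩
  · have := hconv.le_add_slope_mul hr
    rw [hends, hchord] at this
    field_simp at this ⊢
    linarith
  · exact deriv_nonneg_of_isMinOn_Icc_left hss (fun r hr => hends ▸ hnonneg r hr) (hd1 _)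
  · have := eq_zero_of_deriv2_add_mul_eq_zero hKcont.continuousOn hd1 hd2 hode hends
      hzero.symm 0 (right_mem_Icc.2 hss.le)
    linarith
  · rw [← hchord]
    exact hconv.deriv_le_slope (left_mem_Icc.2 hss.le) (right_mem_Icc.2 hss.le) hss (hd1 _)
end

section
/- Let K : ℝ → ℝ be continuous with K(r) ≤ 0 for all r. Let 0 < s₁ ≤ s₂, and for i = 1, 2 let hᵢ : ℝ → ℝ be twice continuously differentiable with hᵢ'' + K·hᵢ = 0, hᵢ(0) = 1, and hᵢ(-sᵢ) = 0. Then for every r ∈ [-s₁, 0], 0 ≤ h₂(r) - h₁(r) ≤ -r·(1/s₁ - 1/s₂). -/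
/-!
Where a solution of `h'' + K h = 0` with `K ≤ 0` has a sign, `h'' = -K h` has the same sign; so
it is convex where it is nonnegative and concave where it is nonpositive. Concavity on a
negative excursion between two zeros is impossible, which gives a maximum principle: a solution
nonnegative at both ends of an interval is nonnegative on it. Hence `h₂ ≥ 0` on `[-s₂, 0]` and,
by convexity, lies below its chord there, `h₂ (-s₁) ≤ 1 - s₁ / s₂`. The difference `h₂ - h₁`
solves the same equation, vanishes at `0` and equals `h₂ (-s₁) ≥ 0` at `-s₁`; so it is nonnegative
and convex on `[-s₁, 0]`, and its chord gives the upper bound.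
-/

open Set

theorem ConvexOn.sub_mul_le_of_mem_Icc {𝕜 : Type*} [Field 𝕜] [LinearOrder 𝕜]
    [IsStrictOrderedRing 𝕜] {s : Set 𝕜} {f : 𝕜 → 𝕜} (hf : ConvexOn 𝕜 s f) {a b x : 𝕜}
    (ha : a ∈ s) (hb : b ∈ s) (hx : x ∈ Icc a b) :
    (b - a) * f x ≤ (b - x) * f a + (x - a) * f b := by
  rcases hx.1.eq_or_lt with rfl | hax
  · linarith
  rcases hx.2.eq_or_lt with rfl | hxb
  · linarith
  exact hf.secant_mono_aux1 ha hb hax hxb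

section ODE

variable {K : ℝ → ℝ}

theorem convexOn_of_ode_of_nonneg (hK : ∀ r, K r ≤ 0) {h : ℝ → ℝ} (hC2 : ContDiff ℝ 2 h)
    (ode : ∀ r, deriv (deriv h) r + K r * h r = 0) {D : Set ℝ} (hD : Convex ℝ D)
    (hnonneg : ∀ x ∈ interior D, 0 ≤ h x) : ConvexOn ℝ D h := by
  refine convexOn_of_deriv2_nonneg hD hC2.continuous.continuousOn
    (hC2.differentiable two_ne_zero).differentiableOn
    hC2.differentiable_deriv_two.differentiableOn fun x hx => ?_
  rw [Function.iterate_succ_apply, Function.iterate_one]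
  nlinarith [ode x, hK x, hnonneg x hx]

theorem concaveOn_of_ode_of_nonpos (hK : ∀ r, K r ≤ 0) {h : ℝ → ℝ} (hC2 : ContDiff ℝ 2 h)
    (ode : ∀ r, deriv (deriv h) r + K r * h r = 0) {D : Set ℝ} (hD : Convex ℝ D)
    (hnonpos : ∀ x ∈ interior D, h x ≤ 0) : ConcaveOn ℝ D h := by
  refine concaveOn_of_deriv2_nonpos hD hC2.continuous.continuousOn
    (hC2.differentiable two_ne_zero).differentiableOn
    hC2.differentiable_deriv_two.differentiableOn fun x hx => ?_
  rw [Function.iterate_succ_apply, Function.iterate_one]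
  nlinarith [ode x, hK x, hnonpos x hx]

theorem nonneg_of_ode_of_nonneg_endpoints (hK : ∀ r, K r ≤ 0) {g : ℝ → ℝ}
    (hC2 : ContDiff ℝ 2 g) (ode : ∀ r, deriv (deriv g) r + K r * g r = 0) {a b : ℝ}
    (ha : 0 ≤ g a) (hb : 0 ≤ g b) : ∀ x ∈ Icc a b, 0 ≤ g x := by
  intro m hm
  by_contra! hgm
  have hclosed : IsClosed {x | 0 ≤ g x} := isClosed_le continuous_const hC2.continuous
  -- `α` and `β` are the last zero of `g` before `m` and the first one after it
  set Sα := Icc a m ∩ {x | 0 ≤ g x}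
  set Sβ := Icc m b ∩ {x | 0 ≤ g x}
  have hSα : BddAbove Sα := bddAbove_Icc.mono inter_subset_left
  have hSβ : BddBelow Sβ := bddBelow_Icc.mono inter_subset_left
  have hα : sSup Sα ∈ Sα :=
    (isClosed_Icc.inter hclosed).csSup_mem ⟨a, ⟨le_rfl, hm.1⟩, ha⟩ hSα
  have hβ : sInf Sβ ∈ Sβ :=
    (isClosed_Icc.inter hclosed).csInf_mem ⟨b, ⟨hm.2, le_rfl⟩, hb⟩ hSβ
  have hnonpos : ∀ x ∈ interior (Icc (sSup Sα) (sInf Sβ)), g x ≤ 0 := by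
    rw [interior_Icc]
    intro x hx
    by_contra! hpos
    rcases le_total x m with hxm | hmx
    · exact hx.1.not_ge (le_csSup hSα ⟨⟨hα.1.1.trans hx.1.le, hxm⟩, hpos.le⟩)
    · exact hx.2.not_ge (csInf_le hSβ ⟨⟨hmx, hx.2.le.trans hβ.1.2⟩, hpos.le⟩)
  have hconc := concaveOn_of_ode_of_nonpos hK hC2 ode (convex_Icc _ _) hnonpos
  have hαβ : sSup Sα ≤ sInf Sβ := hα.1.2.trans hβ.1.1
  have hmin := hconc.min_le_of_mem_Icc (left_mem_Icc.2 hαβ) (right_mem_Icc.2 hαβ)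
    ⟨hα.1.2, hβ.1.1⟩
  exact hgm.not_ge ((le_min hα.2 hβ.2).trans hmin)

theorem ode_sub {f g : ℝ → ℝ} (hf : ContDiff ℝ 2 f) (hg : ContDiff ℝ 2 g)
    (hfode : ∀ r, deriv (deriv f) r + K r * f r = 0)
    (hgode : ∀ r, deriv (deriv g) r + K r * g r = 0) :
    ∀ r, deriv (deriv (f - g)) r + K r * (f - g) r = 0 := by
  intro r
  have hderiv : deriv (f - g) = deriv f - deriv g :=
    funext fun x => deriv_sub ((hf.differentiable two_ne_zero) x)
      ((hg.differentiable two_ne_zero) x)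
  rw [hderiv, deriv_sub (hf.differentiable_deriv_two r) (hg.differentiable_deriv_two r),
    Pi.sub_apply]
  linarith [hfode r, hgode r]

end ODE

theorem stmt_4_general (K : ℝ → ℝ) (hKnonpos : ∀ r : ℝ, K r ≤ 0)
    (s₁ s₂ : ℝ) (hs₁ : 0 < s₁) (hs₁₂ : s₁ ≤ s₂)
    (h₁ h₂ : ℝ → ℝ)
    (h₁C2 : ContDiff ℝ 2 h₁) (h₂C2 : ContDiff ℝ 2 h₂)
    (h₁ode : ∀ r : ℝ, deriv (deriv h₁) r + K r * h₁ r = 0)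
    (h₂ode : ∀ r : ℝ, deriv (deriv h₂) r + K r * h₂ r = 0)
    (h₁0 : h₁ 0 = 1) (h₂0 : h₂ 0 = 1)
    (h₁end : h₁ (-s₁) = 0) (h₂end : h₂ (-s₂) = 0) :
    ∀ r ∈ Set.Icc (-s₁) 0, 0 ≤ h₂ r - h₁ r ∧ h₂ r - h₁ r ≤ -r * (1 / s₁ - 1 / s₂) := by
  have hs₂ : 0 < s₂ := hs₁.trans_le hs₁₂
  have h₂nonneg : ∀ x ∈ Icc (-s₂) 0, 0 ≤ h₂ x :=
    nonneg_of_ode_of_nonneg_endpoints hKnonpos h₂C2 h₂ode (by rw [h₂end]) (by rw [h₂0]; norm_num)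
  have h₂chord := (convexOn_of_ode_of_nonneg hKnonpos h₂C2 h₂ode (convex_Icc _ _)
    fun x hx => h₂nonneg x (interior_subset hx)).sub_mul_le_of_mem_Icc
    (left_mem_Icc.2 (by linarith)) (right_mem_Icc.2 (by linarith))
    (⟨by linarith, by linarith⟩ : -s₁ ∈ Icc (-s₂) 0)
  have gode := ode_sub h₂C2 h₁C2 h₂ode h₁ode
  have gC2 : ContDiff ℝ 2 (h₂ - h₁) := h₂C2.sub h₁C2
  have gnonneg : ∀ x ∈ Icc (-s₁) 0, 0 ≤ (h₂ - h₁) x :=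
    nonneg_of_ode_of_nonneg_endpoints hKnonpos gC2 gode
      (by simpa [h₁end] using h₂nonneg (-s₁) ⟨by linarith, by linarith⟩) (by simp [h₁0, h₂0])
  intro r hr
  have gchord := (convexOn_of_ode_of_nonneg hKnonpos gC2 gode (convex_Icc _ _)
    fun x hx => gnonneg x (interior_subset hx)).sub_mul_le_of_mem_Icc
    (left_mem_Icc.2 (by linarith)) (right_mem_Icc.2 (by linarith)) hr
  simp only [Pi.sub_apply, h₁0, h₂0, h₁end, h₂end] at gchord h₂chord gnonneg
  refine ⟨gnonneg r hr, ?_⟩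
  have hscaled : s₁ * s₂ * (h₂ r - h₁ r) ≤ -r * (s₂ - s₁) := by
    nlinarith [mul_le_mul_of_nonneg_left h₂chord (neg_nonneg.2 hr.2)]
  rw [show -r * (1 / s₁ - 1 / s₂) = -r * (s₂ - s₁) / (s₁ * s₂) by field_simp,
    le_div_iff₀ (by positivity)]
  linarith

/-- Intermediate claim in the proof of Proposition 4.1: monotonicity in `s` of
the two-point solutions `h_s` of `h'' + K h = 0` (`K ≤ 0`) with `h_s 0 = 1`,
`h_s (-s) = 0`, together with the quantitative bound coming from
`|∂_s h_s(r)| ≤ -r/s²`. -/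
theorem stmt_4 (K : ℝ → ℝ) (hKcont : Continuous K) (hKnonpos : ∀ r : ℝ, K r ≤ 0)
    (s₁ s₂ : ℝ) (hs₁ : 0 < s₁) (hs₁₂ : s₁ ≤ s₂)
    (h₁ h₂ : ℝ → ℝ)
    (h₁C2 : ContDiff ℝ 2 h₁) (h₂C2 : ContDiff ℝ 2 h₂)
    (h₁ode : ∀ r : ℝ, deriv (deriv h₁) r + K r * h₁ r = 0)
    (h₂ode : ∀ r : ℝ, deriv (deriv h₂) r + K r * h₂ r = 0)
    (h₁0 : h₁ 0 = 1) (h₂0 : h₂ 0 = 1)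
    (h₁end : h₁ (-s₁) = 0) (h₂end : h₂ (-s₂) = 0) :
    ∀ r ∈ Set.Icc (-s₁) 0, 0 ≤ h₂ r - h₁ r ∧ h₂ r - h₁ r ≤ -r * (1 / s₁ - 1 / s₂) :=
  stmt_4_general K hKnonpos s₁ s₂ hs₁ hs₁₂ h₁ h₂ h₁C2 h₂C2 h₁ode h₂ode h₁0 h₂0 h₁end h₂end
end

section
/- Let K : (0, ∞) → ℝ be continuous, and let κ, k : (0, ∞) → ℝ be differentiable functions satisfying the Riccati equation u'(r) = -K(r) - u(r)² for all r > 0. Assume k(r) ≥ 0 for all r > 0, and that there exists δ > 0 such that κ(r) > k(r) for all 0 < r < δ. Then 0 < κ(r) - k(r) ≤ 1/r for all r > 0. -/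
/-!
The difference `w = κ - k` solves the linear equation `w' = -(κ + k) w`, so by the
integrating factor `w(r) = w(a) exp (-∫ₐʳ (κ + k))` it keeps the sign it has near `0`.
Since `κ + k = w + 2k ≥ w > 0`, it moreover satisfies `w' ≤ -w²`, i.e. `(1/w - r)' ≥ 0`;
as `1/w(s) - s > -s` for small `s`, this gives `1/w(r) ≥ r`.
-/

open Set

theorem eq_mul_exp_neg_integral_of_hasDerivWithinAt {w f : ℝ → ℝ} {a b : ℝ} (hab : a ≤ b)
    (hf : ContinuousOn f (Icc a b))
    (hw : ∀ x ∈ Icc a b, HasDerivWithinAt w (-(f x * w x)) (Icc a b) x) :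
    w b = w a * Real.exp (-∫ t in a..b, f t) := by
  set F : ℝ → ℝ := fun x => ∫ t in a..x, f t
  have hF : ∀ x ∈ Icc a b, HasDerivWithinAt F (f x) (Icc a b) x := by
    intro x hx
    have : Fact (x ∈ Icc a b) := ⟨hx⟩
    exact intervalIntegral.integral_hasDerivWithinAt_right
      (hf.mono (uIcc_subset_Icc (left_mem_Icc.2 hab) hx)).intervalIntegrable
      (hf.stronglyMeasurableAtFilter_nhdsWithin measurableSet_Icc x) (hf x hx)
  have hg : ∀ x ∈ Icc a b, HasDerivWithinAt (fun y => w y * Real.exp (F y)) 0 (Icc a b) x :=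
    fun x hx => ((hw x hx).mul (hF x hx).exp).congr_deriv (by ring)
  have hconst := constant_of_has_deriv_right_zero (fun x hx => (hg x hx).continuousWithinAt)
    (fun x hx => (hg x (Ico_subset_Icc_self hx)).mono_of_mem_nhdsWithin
      (Filter.mem_of_superset (Icc_mem_nhdsGE hx.2) (Icc_subset_Icc_left hx.1)))
    b (right_mem_Icc.2 hab)
  simp only [F, intervalIntegral.integral_same, Real.exp_zero, mul_one] at hconst
  rw [← hconst, mul_assoc, ← Real.exp_add, add_neg_cancel, Real.exp_zero, mul_one]

theorem le_one_div_of_hasDerivAt_le_neg_sq {w w' : ℝ → ℝ}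
    (hpos : ∀ x, 0 < x → 0 < w x) (hw : ∀ x, 0 < x → HasDerivAt w (w' x) x)
    (hle : ∀ x, 0 < x → w' x ≤ -w x ^ 2) {r : ℝ} (hr : 0 < r) : w r ≤ 1 / r := by
  have hψ : ∀ x, 0 < x → HasDerivAt (fun y => (w y)⁻¹ - y) (-w' x / w x ^ 2 - 1) x :=
    fun x hx => ((hw x hx).inv (hpos x hx).ne').sub (hasDerivAt_id x)
  have hmono : MonotoneOn (fun y => (w y)⁻¹ - y) (Ioi 0) := by
    refine monotoneOn_of_hasDerivWithinAt_nonneg (convex_Ioi 0)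
      (fun x hx => (hψ x hx).continuousAt.continuousWithinAt)
      (fun x hx => (hψ x (interior_subset hx)).hasDerivWithinAt) fun x hx => ?_
    have hx : 0 < x := interior_subset hx
    rw [sub_nonneg, le_div_iff₀ (pow_pos (hpos x hx) 2)]
    linarith [hle x hx]
  have hinv : r ≤ (w r)⁻¹ := by
    refine le_of_forall_pos_le_add fun ε hε => ?_
    have hs : 0 < min ε r := lt_min hε hr
    have hψs := hmono hs hr (min_le_right ε r)
    linarith [hψs, inv_pos.2 (hpos _ hs), min_le_left ε r]
  rwa [le_one_div (hpos r hr) hr, ← inv_eq_one_div]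

theorem stmt_6_general (K κ k : ℝ → ℝ)
    (hκ : ∀ r : ℝ, 0 < r → HasDerivAt κ (-K r - κ r ^ 2) r)
    (hk : ∀ r : ℝ, 0 < r → HasDerivAt k (-K r - k r ^ 2) r)
    (hknonneg : ∀ r : ℝ, 0 < r → 0 ≤ k r)
    (hnear : ∃ δ : ℝ, 0 < δ ∧ ∀ r : ℝ, 0 < r → r < δ → k r < κ r) :
    ∀ r : ℝ, 0 < r → 0 < κ r - k r ∧ κ r - k r ≤ 1 / r := by
  obtain ⟨δ, hδ, hnear⟩ := hnear
  have hw : ∀ x, 0 < x →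
      HasDerivAt (fun y => κ y - k y) (-((κ x + k x) * (κ x - k x))) x := fun x hx =>
    ((hκ x hx).sub (hk x hx)).congr_deriv (by ring)
  have hpos : ∀ r, 0 < r → 0 < κ r - k r := by
    intro r hr
    have ha : 0 < min r (δ / 2) := lt_min hr (half_pos hδ)
    have hIcc : ∀ x ∈ Icc (min r (δ / 2)) r, 0 < x := fun x hx => ha.trans_le hx.1
    rw [eq_mul_exp_neg_integral_of_hasDerivWithinAt (min_le_left r _)
      (fun x hx => ((hκ x (hIcc x hx)).add (hk x (hIcc x hx))).continuousAt.continuousWithinAt)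
      (fun x hx => (hw x (hIcc x hx)).hasDerivWithinAt)]
    have hstart := hnear _ ha ((min_le_right r _).trans_lt (half_lt_self hδ))
    exact mul_pos (sub_pos.2 hstart) (Real.exp_pos _)
  intro r hr
  refine ⟨hpos r hr, le_one_div_of_hasDerivAt_le_neg_sq hpos hw (fun x hx => ?_) hr⟩
  nlinarith [hknonneg x hx, hpos x hx]

/-- Lemma 4.2 part (1) in scalar Riccati form: if `κ` and `k` both solve
`u' = -K - u²` on `(0,∞)`, `k ≥ 0`, and `κ > k` near `0`, then
`0 < κ(r) - k(r) ≤ 1/r` for all `r > 0`. -/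
theorem stmt_6 (K κ k : ℝ → ℝ)
    (hKcont : ContinuousOn K (Set.Ioi (0 : ℝ)))
    (hκ : ∀ r : ℝ, 0 < r → HasDerivAt κ (-K r - κ r ^ 2) r)
    (hk : ∀ r : ℝ, 0 < r → HasDerivAt k (-K r - k r ^ 2) r)
    (hknonneg : ∀ r : ℝ, 0 < r → 0 ≤ k r)
    (hnear : ∃ δ : ℝ, 0 < δ ∧ ∀ r : ℝ, 0 < r → r < δ → k r < κ r) :
    ∀ r : ℝ, 0 < r → 0 < κ r - k r ∧ κ r - k r ≤ 1 / r :=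
  stmt_6_general K κ k hκ hk hknonneg hnear
end

section
/- Let K₀, K₁ be constants with 0 ≥ K₀ ≥ K₁, and let K : (-∞, 0] → ℝ be continuous with K₁ ≤ K(r) ≤ K₀ for all r ≤ 0. Suppose k : (-∞, 0] → ℝ is differentiable, bounded (there is C with |k(r)| ≤ C for all r ≤ 0), satisfies k(r) ≥ 0 for all r ≤ 0, and solves the Riccati equation k'(r) = -K(r) - k(r)² for all r ≤ 0. Then √(-K₀) ≤ k(r) ≤ √(-K₁) for all r ≤ 0. -/
/-!
Above `b ≥ 0` the Riccati inequality `k' ≤ b² - k²` makes `k` strictly decreasing, so a value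
`k r₀ > b` is a lower bound for `k` on all of `(-∞, r₀]`; there `k' ≤ b² - (k r₀)² < 0`, and `k`
grows at least linearly as `r → -∞`, contradicting boundedness. Symmetrically, below `a` a
nonnegative solution of `k' ≥ a² - k²` is strictly increasing, so a value `k r₀ < a` bounds `k`
from above on `(-∞, r₀]`, and then `k` decreases at least linearly as `r → -∞`, contradicting
`k ≥ 0`.
-/

open Set

theorem le_max_of_deriv_right_neg {f f' : ℝ → ℝ} {a b m : ℝ} (hab : a ≤ b)
    (hf : ContinuousOn f (Icc a b)) (hf' : ∀ x ∈ Ico a b, HasDerivWithinAt f (f' x) (Ici x) x)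
    (hneg : ∀ x ∈ Ico a b, m < f x → f' x < 0) :
    f b ≤ max m (f a) :=
  le_of_forall_gt_imp_ge_of_dense fun y hy =>
    image_le_of_deriv_right_lt_deriv_boundary hf hf' (B := fun _ => y) (B' := fun _ => 0)
      ((le_max_right _ _).trans_lt hy).le (fun _ => hasDerivAt_const _ _)
      (fun x hx hfx => hneg x hx (hfx ▸ (le_max_left _ _).trans_lt hy)) ⟨hab, le_rfl⟩

theorem image_sub_le_mul_sub_of_deriv_right_le {f f' : ℝ → ℝ} {a b C : ℝ} (hab : a ≤ b)
    (hf : ContinuousOn f (Icc a b)) (hf' : ∀ x ∈ Ico a b, HasDerivWithinAt f (f' x) (Ici x) x)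
    (hle : ∀ x ∈ Ico a b, f' x ≤ C) :
    f b - f a ≤ C * (b - a) := by
  have hB : ∀ x, HasDerivAt (fun x => f a + C * (x - a)) C x := fun x => by
    simpa using ((hasDerivAt_id x).sub_const a).const_mul C |>.const_add (f a)
  have := image_le_of_deriv_right_le_deriv_boundary hf hf' (by simp)
    (fun x _ => (hB x).continuousAt.continuousWithinAt) (fun x _ => (hB x).hasDerivWithinAt) hle
    ⟨hab, le_rfl⟩
  linarith

theorem not_bddAbove_image_Iic_of_deriv_le_neg {f f' : ℝ → ℝ} {r₀ δ : ℝ} (hδ : 0 < δ)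
    (hf : ContinuousOn f (Iic r₀)) (hf' : ∀ x < r₀, HasDerivAt f (f' x) x)
    (hle : ∀ x < r₀, f' x ≤ -δ) :
    ¬BddAbove (f '' Iic r₀) := by
  rintro ⟨C, hC⟩
  have hfC : ∀ r ≤ r₀, f r ≤ C := fun r hr => hC (mem_image_of_mem f hr)
  set r := r₀ - (C + 1 - f r₀) / δ
  have hr : r ≤ r₀ := sub_le_self _ (div_nonneg (by linarith [hfC r₀ le_rfl]) hδ.le)
  have hgrowth := image_sub_le_mul_sub_of_deriv_right_le hr (hf.mono Icc_subset_Iic_self)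
    (fun x hx => (hf' x hx.2).hasDerivWithinAt) (fun x hx => hle x hx.2)
  have hδr : δ * (r₀ - r) = C + 1 - f r₀ := by
    simp only [r, sub_sub_cancel, mul_div_cancel₀ _ hδ.ne']
  linarith [hfC r hr]

section Riccati

variable {k k' : ℝ → ℝ} (hcont : ContinuousOn k (Iic 0)) (hderiv : ∀ x < 0, HasDerivAt k (k' x) x)
include hcont hderiv

theorem le_of_deriv_le_sq_sub_sq_of_bddAbove {b : ℝ} (hb : 0 ≤ b)
    (hk' : ∀ x < 0, k' x ≤ b ^ 2 - k x ^ 2) (hbdd : BddAbove (k '' Iic 0))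
    {r₀ : ℝ} (hr₀ : r₀ ≤ 0) : k r₀ ≤ b := by
  by_contra! hlt
  have hmin : ∀ r ≤ r₀, k r₀ ≤ k r := fun r hr => by
    have := le_max_of_deriv_right_neg (m := b) hr
      (hcont.mono fun x hx => hx.2.trans hr₀)
      (fun x hx => (hderiv x (hx.2.trans_le hr₀)).hasDerivWithinAt)
      (fun x hx hbx => by nlinarith [hk' x (hx.2.trans_le hr₀)])
    exact (le_max_iff.1 this).resolve_left hlt.not_ge
  refine not_bddAbove_image_Iic_of_deriv_le_neg (δ := k r₀ ^ 2 - b ^ 2) (by nlinarith)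
    (hcont.mono (Iic_subset_Iic.2 hr₀)) (fun x hx => hderiv x (hx.trans_le hr₀))
    (fun x hx => ?_) (hbdd.mono (image_mono (Iic_subset_Iic.2 hr₀)))
  nlinarith [hk' x (hx.trans_le hr₀), hmin x hx.le]

theorem le_of_sq_sub_sq_le_deriv_of_nonneg {a : ℝ}
    (hk' : ∀ x < 0, a ^ 2 - k x ^ 2 ≤ k' x) (hnonneg : ∀ x ≤ 0, 0 ≤ k x)
    {r₀ : ℝ} (hr₀ : r₀ ≤ 0) : a ≤ k r₀ := by
  by_contra! hlt
  have hmax : ∀ r ≤ r₀, k r ≤ k r₀ := fun r hr => by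
    have := le_max_of_deriv_right_neg (f := fun x => -k x) (m := -a) hr
      (hcont.neg.mono fun x hx => hx.2.trans hr₀)
      (fun x hx => (hderiv x (hx.2.trans_le hr₀)).neg.hasDerivWithinAt)
      (fun x hx hax => by
        have hx₀ : x < 0 := hx.2.trans_le hr₀
        nlinarith [hk' x hx₀, hnonneg x hx₀.le])
    have := (le_max_iff.1 this).resolve_left (neg_lt_neg hlt).not_ge
    linarith
  have hδ : 0 < a ^ 2 - k r₀ ^ 2 := by nlinarith [hnonneg r₀ hr₀]
  refine not_bddAbove_image_Iic_of_deriv_le_neg hδ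
    (hcont.neg.mono (Iic_subset_Iic.2 hr₀)) (fun x hx => (hderiv x (hx.trans_le hr₀)).neg)
    (fun x hx => ?_) ⟨0, forall_mem_image.2 fun x hx => neg_nonpos.2 (hnonneg x (hx.trans hr₀))⟩
  have hx₀ : x < 0 := hx.trans_le hr₀
  nlinarith [hk' x hx₀, hmax x hx.le, hnonneg x hx₀.le]

end Riccati

theorem stmt_7_general (K₀ K₁ : ℝ) (hK₀ : K₀ ≤ 0) (hK₁₀ : K₁ ≤ K₀)
    (K : ℝ → ℝ)
    (hKpinch : ∀ r : ℝ, r ≤ 0 → K₁ ≤ K r ∧ K r ≤ K₀)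
    (k : ℝ → ℝ)
    (hk : ∀ r : ℝ, r ≤ 0 → HasDerivWithinAt k (-K r - k r ^ 2) (Set.Iic (0 : ℝ)) r)
    (hkbdd : ∃ C : ℝ, ∀ r : ℝ, r ≤ 0 → |k r| ≤ C)
    (hknonneg : ∀ r : ℝ, r ≤ 0 → 0 ≤ k r) :
    ∀ r : ℝ, r ≤ 0 → Real.sqrt (-K₀) ≤ k r ∧ k r ≤ Real.sqrt (-K₁) := by
  have hcont : ContinuousOn k (Iic 0) := fun x hx => (hk x hx).continuousWithinAt
  have hderiv : ∀ x < 0, HasDerivAt k (-K x - k x ^ 2) x := fun x hx =>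
    (hk x hx.le).hasDerivAt (Iic_mem_nhds hx)
  obtain ⟨C, hC⟩ := hkbdd
  have hbdd : BddAbove (k '' Iic 0) :=
    ⟨C, forall_mem_image.2 fun r hr => (le_abs_self _).trans (hC r hr)⟩
  intro r hr
  constructor
  · refine le_of_sq_sub_sq_le_deriv_of_nonneg hcont hderiv (fun x hx => ?_) hknonneg hr
    rw [Real.sq_sqrt (neg_nonneg.2 hK₀)]
    linarith [(hKpinch x hx.le).2]
  · refine le_of_deriv_le_sq_sub_sq_of_bddAbove hcont hderiv (Real.sqrt_nonneg _)
      (fun x hx => ?_) hbdd hr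
    rw [Real.sq_sqrt (by linarith)]
    linarith [(hKpinch x hx.le).1]

/-- Lemma 4.2 part (2) in scalar Riccati form: a nonnegative bounded solution
of `k' = -K - k²` on `(-∞, 0]` with `K₁ ≤ K ≤ K₀ ≤ 0` is pinched between
`√(-K₀)` and `√(-K₁)`. -/
theorem stmt_7 (K₀ K₁ : ℝ) (hK₀ : K₀ ≤ 0) (hK₁₀ : K₁ ≤ K₀)
    (K : ℝ → ℝ) (hKcont : ContinuousOn K (Set.Iic (0 : ℝ)))
    (hKpinch : ∀ r : ℝ, r ≤ 0 → K₁ ≤ K r ∧ K r ≤ K₀)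
    (k : ℝ → ℝ)
    (hk : ∀ r : ℝ, r ≤ 0 → HasDerivWithinAt k (-K r - k r ^ 2) (Set.Iic (0 : ℝ)) r)
    (hkbdd : ∃ C : ℝ, ∀ r : ℝ, r ≤ 0 → |k r| ≤ C)
    (hknonneg : ∀ r : ℝ, r ≤ 0 → 0 ≤ k r) :
    ∀ r : ℝ, r ≤ 0 → Real.sqrt (-K₀) ≤ k r ∧ k r ≤ Real.sqrt (-K₁) :=
  stmt_7_general K₀ K₁ hK₀ hK₁₀ K hKpinch k hk hkbdd hknonneg
end

section
/- Let K₀ ≤ 0 be a constant and let κ : (0, ∞) → ℝ be differentiable with κ'(r) ≥ -K₀ - κ(r)² for all r > 0 and lim_{r→0⁺} r·κ(r) = 1. Then for all r > 0: if K₀ < 0, κ(r) ≥ √(-K₀)·coth(√(-K₀)·r), and if K₀ = 0, κ(r) ≥ 1/r. -/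
/-!
If `c` solves `c' = -K₀ - c²` and `κ` is a supersolution, then `g = κ - c` satisfies the linear
inequality `g' ≥ -(κ + c) g`, so `e^F g` is nondecreasing for any primitive `F` of `κ + c`.
Since `r (κ + c) → 2 > 1` as `r → 0⁺`, `F` falls below `a log r + C` for some `a > 1`, i.e.
`r e^{-F r} → ∞`. Hence if `g r₀ < 0` then `r g r ≤ r e^{-F r} e^{F r₀} g r₀ → -∞`, contradicting
`r g r = r κ r - r c r → 0`. The comparison curvatures `√(-K₀) coth (√(-K₀) r)` and `1 / r`
solve the Riccati equation with `r c r → 1`.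
-/

open Real Filter Set Topology

theorem exists_hasDerivAt_of_continuousOn_Ioi {E : Type*} [NormedAddCommGroup E]
    [NormedSpace ℝ E] [CompleteSpace E] {f : ℝ → E} {a : ℝ} (hf : ContinuousOn f (Ioi a)) :
    ∃ F : ℝ → E, ∀ x ∈ Ioi a, HasDerivAt F (f x) x := by
  refine ⟨fun x => ∫ t in (a + 1)..x, f t, fun x hx => ?_⟩
  have hsub : uIcc (a + 1) x ⊆ Ioi a := fun t ht =>
    lt_of_lt_of_le (lt_min (lt_add_one a) hx) ht.1
  exact intervalIntegral.integral_hasDerivAt_right ((hf.mono hsub).intervalIntegrable)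
    (hf.stronglyMeasurableAtFilter isOpen_Ioi x hx) (hf.continuousAt (Ioi_mem_nhds hx))

theorem monotoneOn_exp_mul_of_hasDerivAt {s : Set ℝ} (hs : Convex ℝ s) {F P g g' : ℝ → ℝ}
    (hF : ∀ x ∈ s, HasDerivAt F (P x) x) (hg : ∀ x ∈ s, HasDerivAt g (g' x) x)
    (hgP : ∀ x ∈ s, -(P x * g x) ≤ g' x) :
    MonotoneOn (fun x => exp (F x) * g x) s := by
  have hderiv : ∀ x ∈ s, HasDerivAt (fun x => exp (F x) * g x)
      (exp (F x) * (g' x + P x * g x)) x := fun x hx =>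
    (((hF x hx).exp).mul (hg x hx)).congr_deriv (by ring)
  refine monotoneOn_of_deriv_nonneg hs (fun x hx => (hderiv x hx).continuousAt.continuousWithinAt)
    (fun x hx => (hderiv x (interior_subset hx)).differentiableAt.differentiableWithinAt)
    fun x hx => ?_
  have hx := interior_subset hx
  rw [(hderiv x hx).deriv]
  exact mul_nonneg (exp_pos _).le (by linarith [hgP x hx])

theorem tendsto_log_sub_atTop_of_hasDerivAt {F f : ℝ → ℝ} {a : ℝ} (ha : 1 < a)
    (hF : ∀ᶠ r in 𝓝[>] 0, HasDerivAt F (f r) r ∧ a ≤ r * f r) :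
    Tendsto (fun r => log r - F r) (𝓝[>] 0) atTop := by
  obtain ⟨δ, hδ, hsub⟩ := mem_nhdsGT_iff_exists_Ioc_subset.1 hF
  have hderiv : ∀ r ∈ Ioc 0 δ, HasDerivAt (fun r => F r - a * log r) (f r - a * r⁻¹) r :=
    fun r hr => (hsub hr).1.sub ((hasDerivAt_log hr.1.ne').const_mul a)
  have hmono : MonotoneOn (fun r => F r - a * log r) (Ioc 0 δ) := by
    refine monotoneOn_of_deriv_nonneg (convex_Ioc 0 δ)
      (fun r hr => (hderiv r hr).continuousAt.continuousWithinAt)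
      (fun r hr => (hderiv r (interior_subset hr)).differentiableAt.differentiableWithinAt)
      fun r hr => ?_
    have hr := interior_subset hr
    rw [(hderiv r hr).deriv, sub_nonneg, ← div_eq_mul_inv, div_le_iff₀ hr.1, mul_comm]
    exact (hsub hr).2
  have hlower : ∀ r ∈ Ioc 0 δ, (1 - a) * log r - (F δ - a * log δ) ≤ log r - F r :=
    fun r hr => by linarith [hmono hr (right_mem_Ioc.2 hδ) hr.2]
  refine tendsto_atTop_mono' _ (eventually_of_mem (Ioc_mem_nhdsGT hδ) hlower) ?_
  exact tendsto_atTop_add_const_right _ _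
    (tendsto_log_nhdsGT_zero.const_mul_atBot_of_neg (by linarith))

theorem nonneg_of_hasDerivAt_ge_neg_mul {g g' P : ℝ → ℝ} {a M : ℝ} (ha : 1 < a)
    (hg : ∀ r, 0 < r → HasDerivAt g (g' r) r) (hgP : ∀ r, 0 < r → -(P r * g r) ≤ g' r)
    (hP : ContinuousOn P (Ioi 0)) (hPa : ∀ᶠ r in 𝓝[>] 0, a ≤ r * P r)
    (hgM : ∀ᶠ r in 𝓝[>] 0, M ≤ r * g r) :
    ∀ r, 0 < r → 0 ≤ g r := by
  intro r₀ hr₀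
  by_contra! hneg
  obtain ⟨F, hF⟩ := exists_hasDerivAt_of_continuousOn_Ioi hP
  have hmono := monotoneOn_exp_mul_of_hasDerivAt (convex_Ioi 0) hF hg hgP
  have hbound : ∀ r ∈ Ioc 0 r₀, r * g r ≤ exp (log r - F r) * (exp (F r₀) * g r₀) := by
    intro r hr
    calc r * g r = exp (log r - F r) * (exp (F r) * g r) := by
          rw [exp_sub, exp_log hr.1]; field_simp
      _ ≤ exp (log r - F r) * (exp (F r₀) * g r₀) :=
          mul_le_mul_of_nonneg_left (hmono hr.1 hr₀ hr.2) (exp_pos _).le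
  have hbot : Tendsto (fun r => r * g r) (𝓝[>] 0) atBot := by
    refine tendsto_atBot_mono' _ (eventually_of_mem (Ioc_mem_nhdsGT hr₀) hbound) ?_
    refine (tendsto_exp_atTop.comp (tendsto_log_sub_atTop_of_hasDerivAt (f := P) ha ?_))
      |>.atTop_mul_const_of_neg (mul_neg_of_pos_of_neg (exp_pos _) hneg)
    filter_upwards [self_mem_nhdsWithin, hPa] with r hr hra using ⟨hF r hr, hra⟩
  obtain ⟨r, hrM, hr⟩ := (hgM.and (hbot.eventually (eventually_lt_atBot M))).exists
  exact hr.not_ge hrM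

theorem riccati_solution_le_supersolution {K : ℝ} {κ c : ℝ → ℝ}
    (hκ : ∀ r, 0 < r → DifferentiableAt ℝ κ r) (hκ' : ∀ r, 0 < r → -K - κ r ^ 2 ≤ deriv κ r)
    (hκ0 : Tendsto (fun r => r * κ r) (𝓝[>] 0) (𝓝 1))
    (hc : ∀ r, 0 < r → HasDerivAt c (-K - c r ^ 2) r)
    (hc0 : Tendsto (fun r => r * c r) (𝓝[>] 0) (𝓝 1)) :
    ∀ r, 0 < r → c r ≤ κ r := by
  have hsum : ∀ᶠ r in 𝓝[>] 0, 3 / 2 ≤ r * (κ r + c r) := by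
    filter_upwards [(hκ0.add hc0).eventually
      (eventually_ge_nhds (by norm_num : (3 / 2 : ℝ) < 1 + 1))] with r hr using by rwa [mul_add]
  have hgap : ∀ᶠ r in 𝓝[>] 0, -1 ≤ r * (κ r - c r) := by
    filter_upwards [(hκ0.sub hc0).eventually
      (eventually_ge_nhds (by norm_num : (-1 : ℝ) < 1 - 1))] with r hr using by rwa [mul_sub]
  have h := nonneg_of_hasDerivAt_ge_neg_mul (g := fun r => κ r - c r)
    (g' := fun r => deriv κ r - (-K - c r ^ 2)) (P := fun r => κ r + c r)
    (by norm_num : (1 : ℝ) < 3 / 2)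
    (fun r hr => (hκ r hr).hasDerivAt.sub (hc r hr))
    (fun r hr => by linear_combination hκ' r hr)
    (fun r hr => ((hκ r hr).continuousAt.add (hc r hr).continuousAt).continuousWithinAt)
    hsum hgap
  exact fun r hr => sub_nonneg.1 (h r hr)

theorem tendsto_sinh_div_self : Tendsto (fun x => sinh x / x) (𝓝[≠] 0) (𝓝 1) := by
  simpa [div_eq_inv_mul] using (hasDerivAt_sinh 0).tendsto_slope_zero

theorem hasDerivAt_mul_coth {s r : ℝ} (hsr : s * r ≠ 0) :
    HasDerivAt (fun x => s * (cosh (s * x) / sinh (s * x)))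
      (s ^ 2 - (s * (cosh (s * r) / sinh (s * r))) ^ 2) r := by
  have hsinh : sinh (s * r) ≠ 0 := sinh_ne_zero.2 hsr
  have hlin : HasDerivAt (fun x => s * x) s r := by simpa using (hasDerivAt_id r).const_mul s
  refine ((((hasDerivAt_cosh _).comp r hlin).div ((hasDerivAt_sinh _).comp r hlin)
    hsinh).const_mul s).congr_deriv ?_
  simp only [Function.comp_apply]
  field_simp

theorem tendsto_mul_mul_coth {s : ℝ} (hs : s ≠ 0) :
    Tendsto (fun x => x * (s * (cosh (s * x) / sinh (s * x)))) (𝓝[≠] 0) (𝓝 1) := by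
  have hlin : Tendsto (fun x => s * x) (𝓝[≠] 0) (𝓝[≠] 0) :=
    tendsto_nhdsWithin_of_tendsto_nhds_of_eventually_within _
      ((continuous_const_mul s).tendsto' 0 0 (mul_zero s) |>.mono_left nhdsWithin_le_nhds)
      (eventually_nhdsWithin_of_forall fun x hx => mul_ne_zero hs hx)
  have h := ((continuous_cosh.tendsto' 0 1 cosh_zero).mono_left nhdsWithin_le_nhds).div
    tendsto_sinh_div_self one_ne_zero
  refine (div_one (1 : ℝ) ▸ h.comp hlin).congr' ?_
  filter_upwards [self_mem_nhdsWithin] with x hx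
  have hsinh : sinh (s * x) ≠ 0 := sinh_ne_zero.2 (mul_ne_zero hs hx)
  simp only [Function.comp_apply, Pi.div_apply]
  field_simp

theorem stmt_8_general (K₀ : ℝ)
    (κ : ℝ → ℝ) (hdiff : ∀ r : ℝ, 0 < r → DifferentiableAt ℝ κ r)
    (hineq : ∀ r : ℝ, 0 < r → -K₀ - κ r ^ 2 ≤ deriv κ r)
    (hinit : Filter.Tendsto (fun r : ℝ => r * κ r) (nhdsWithin 0 (Set.Ioi 0)) (nhds 1)) :
    ∀ r : ℝ, 0 < r →
      (K₀ < 0 → Real.sqrt (-K₀) * (Real.cosh (Real.sqrt (-K₀) * r) / Real.sinh (Real.sqrt (-K₀) * r)) ≤ κ r) ∧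
      (K₀ = 0 → 1 / r ≤ κ r) := by
  intro r hr
  refine ⟨fun hK => ?_, fun hK => ?_⟩
  · have hs : 0 < √(-K₀) := sqrt_pos.2 (neg_pos.2 hK)
    refine riccati_solution_le_supersolution hdiff hineq hinit (fun t ht => ?_)
      ((tendsto_mul_mul_coth hs.ne').mono_left (nhdsGT_le_nhdsNE 0)) r hr
    convert hasDerivAt_mul_coth (mul_pos hs ht).ne' using 2
    rw [sq_sqrt (neg_nonneg.2 hK.le)]
  · subst hK
    refine riccati_solution_le_supersolution (c := fun x => 1 / x) hdiff hineq hinit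
      (fun t ht => ?_) ?_ r hr
    · simpa using hasDerivAt_inv ht.ne'
    · refine tendsto_const_nhds.congr' ?_
      filter_upwards [self_mem_nhdsWithin] with x hx using (mul_one_div_cancel (ne_of_gt hx)).symm

/-- Lemma 4.2 part (3) in scalar Riccati form: a solution of the differential
inequality `κ' ≥ -K₀ - κ²` on `(0,∞)` with `r·κ(r) → 1` as `r → 0⁺`
dominates the curvature of circles in the space form of constant curvature
`K₀ ≤ 0` (where `coth x = cosh x / sinh x`). -/
theorem stmt_8 (K₀ : ℝ) (hK₀ : K₀ ≤ 0)
    (κ : ℝ → ℝ) (hdiff : ∀ r : ℝ, 0 < r → DifferentiableAt ℝ κ r)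
    (hineq : ∀ r : ℝ, 0 < r → -K₀ - κ r ^ 2 ≤ deriv κ r)
    (hinit : Filter.Tendsto (fun r : ℝ => r * κ r) (nhdsWithin 0 (Set.Ioi 0)) (nhds 1)) :
    ∀ r : ℝ, 0 < r →
      (K₀ < 0 → Real.sqrt (-K₀) * (Real.cosh (Real.sqrt (-K₀) * r) / Real.sinh (Real.sqrt (-K₀) * r)) ≤ κ r) ∧
      (K₀ = 0 → 1 / r ≤ κ r) :=
  stmt_8_general K₀ κ hdiff hineq hinit
end

section
/- Let ε, C > 0, set η' = min(1/2, ε/(2C)) and δ = η'/(2√2·(1 + C²)^{1/2}). Let I ⊂ ℝ be an open interval of diameter at most δ, let B ⊂ I be a compact set, and let φ : I × I → ℝ be twice continuously differentiable satisfying: (H1) |∂²_s φ(s,t)| ≥ ε/4 at every point (s,t) ∈ I × I where |∂_s φ(s,t)| ≤ η'; (H2) |∂²_s φ(s,t)| ≤ C for all (s,t) ∈ I × I; (H3) |∂_t ∂_s φ(s,t)| ≤ 1 for all (s,t) ∈ I × I. Then: (a) if ∂_s φ(s₀,t₀) = 0 for some (s₀,t₀) ∈ I × I, then |∂²_s φ(s,t)|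 ≥ ε/4 for all (s,t) ∈ I × I; and (b) if ∂_s φ is nowhere vanishing on I × I, then |∂_s φ(s,t)| ≥ min(η'/2, dist(B, ℝ∖I)·ε/4) for all s, t ∈ B. -/
/-!
Write `ψ s t = ∂ₛφ(s, t)`. The bounds `|∂ₛψ| ≤ C` and `|∂ₜψ| ≤ 1` make `ψ` vary by at most
`(1 + C) δ ≤ η' / 2` over the square `I × I`. If `ψ` vanishes somewhere, then `|ψ| ≤ η'`
everywhere and (H1) applies. If `ψ` vanishes nowhere and `|ψ(s, t)| < η' / 2`, then `|ψ(·, t)| ≤ η'`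
on all of `I`, so `|∂ₛψ(·, t)| ≥ ε / 4` there. By Darboux this derivative has a fixed sign, so
`ψ(·, t)` is a zero-free function of slope at least `ε / 4` in absolute value on `I`, hence
`|ψ(s, t)| ≥ (ε / 4) · dist(s, ℝ ∖ I)`.
-/

open Set Function

theorem IsPreconnected.forall_pos_or_forall_neg {X : Type*} [TopologicalSpace X] {S : Set X}
    {f : X → ℝ} (hS : IsPreconnected S) (hf : ContinuousOn f S) (h0 : ∀ x ∈ S, f x ≠ 0) :
    (∀ x ∈ S, 0 < f x) ∨ ∀ x ∈ S, f x < 0 := by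
  by_contra! ⟨⟨a, ha, hfa⟩, b, hb, hfb⟩
  obtain ⟨c, hc, hfc⟩ := hS.intermediate_value ha hb hf ⟨hfa, hfb⟩
  exact h0 c hc hfc

section OneVariable

variable {f : ℝ → ℝ} {α β m s : ℝ}

theorem mul_sub_left_le_of_le_deriv_of_pos (hf : ∀ x ∈ Ioo α β, DifferentiableAt ℝ f x)
    (hm : ∀ x ∈ Ioo α β, m ≤ deriv f x) (hpos : ∀ x ∈ Ioo α β, 0 < f x) (hs : s ∈ Ioo α β) :
    m * (s - α) ≤ f s := by
  have hmono := (convex_Ioo α β).mul_sub_le_image_sub_of_le_deriv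
    (fun x hx => (hf x hx).continuousAt.continuousWithinAt)
    (fun x hx => (hf x (interior_subset hx)).differentiableWithinAt)
    (fun x hx => hm x (interior_subset hx))
  have hleft : ∀ x ∈ Ioo α s, m * (s - x) ≤ f s := fun x hx => by
    have hxI : x ∈ Ioo α β := ⟨hx.1, hx.2.trans hs.2⟩
    linarith [hmono x hxI s hs hx.2.le, hpos x hxI]
  have hα : α ∈ closure (Ioo α s) := by
    rw [closure_Ioo hs.1.ne]
    exact left_mem_Icc.2 hs.1.le
  exact le_on_closure hleft (by fun_prop) continuousOn_const hα

theorem mul_min_sub_le_abs_of_le_deriv (hf : ∀ x ∈ Ioo α β, DifferentiableAt ℝ f x)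
    (hm : ∀ x ∈ Ioo α β, m ≤ deriv f x) (hm0 : 0 ≤ m) (h0 : ∀ x ∈ Ioo α β, f x ≠ 0)
    (hs : s ∈ Ioo α β) : m * min (s - α) (β - s) ≤ |f s| := by
  have hcont : ContinuousOn f (Ioo α β) := fun x hx => (hf x hx).continuousAt.continuousWithinAt
  rcases isPreconnected_Ioo.forall_pos_or_forall_neg hcont h0 with hpos | hneg
  · calc m * min (s - α) (β - s) ≤ m * (s - α) := by gcongr; exact min_le_left _ _
      _ ≤ f s := mul_sub_left_le_of_le_deriv_of_pos hf hm hpos hs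
      _ ≤ |f s| := le_abs_self _
  · -- `x ↦ -f (α + β - x)` is positive with the same slope bound, and swaps the two ends.
    have hrefl : ∀ x ∈ Ioo α β, α + β - x ∈ Ioo α β := fun x hx =>
      ⟨by linarith [hx.2], by linarith [hx.1]⟩
    have key := mul_sub_left_le_of_le_deriv_of_pos (f := fun x => -f (α + β - x))
      (fun x hx => ((hf _ (hrefl x hx)).comp x (differentiableAt_id.const_sub _)).neg)
      (fun x hx => by rw [deriv.fun_neg, deriv_comp_const_sub, neg_neg]; exact hm _ (hrefl x hx))
      (fun x hx => neg_pos.2 (hneg _ (hrefl x hx))) (hrefl s hs)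
    simp only [sub_sub_cancel] at key
    calc m * min (s - α) (β - s) ≤ m * (β - s) := by gcongr; exact min_le_right _ _
      _ = m * (α + β - s - α) := by ring
      _ ≤ -f s := key
      _ ≤ |f s| := neg_le_abs _

theorem mul_min_sub_le_abs_of_le_abs_deriv (hf : ∀ x ∈ Ioo α β, DifferentiableAt ℝ f x)
    (hm : ∀ x ∈ Ioo α β, m ≤ |deriv f x|) (h0 : ∀ x ∈ Ioo α β, f x ≠ 0) (hs : s ∈ Ioo α β) :
    m * min (s - α) (β - s) ≤ |f s| := by
  rcases le_or_gt m 0 with hm0 | hm0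
  · have : 0 ≤ min (s - α) (β - s) := le_min (by linarith [hs.1]) (by linarith [hs.2])
    exact (mul_nonpos_of_nonpos_of_nonneg hm0 this).trans (abs_nonneg _)
  have hne : ∀ x ∈ Ioo α β, deriv f x ≠ 0 := fun x hx h => by
    have := hm x hx
    rw [h, abs_zero] at this
    linarith
  rcases hasDerivWithinAt_forall_lt_or_forall_gt_of_forall_ne (convex_Ioo α β)
    (fun x hx => (hf x hx).hasDerivAt.hasDerivWithinAt) hne with hneg | hpos
  · have := mul_min_sub_le_abs_of_le_deriv (f := fun x => -f x) (fun x hx => (hf x hx).neg)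
      (fun x hx => by rw [deriv.fun_neg, ← abs_of_neg (hneg x hx)]; exact hm x hx) hm0.le
      (fun x hx => neg_ne_zero.2 (h0 x hx)) hs
    rwa [abs_neg] at this
  · exact mul_min_sub_le_abs_of_le_deriv hf
      (fun x hx => by rw [← abs_of_pos (hpos x hx)]; exact hm x hx) hm0.le h0 hs

theorem min_le_abs_of_abs_sub_le {η : ℝ} (hf : ∀ x ∈ Ioo α β, DifferentiableAt ℝ f x)
    (hosc : ∀ x ∈ Ioo α β, |f x - f s| ≤ η / 2)
    (hderiv : ∀ x ∈ Ioo α β, |f x| ≤ η → m ≤ |deriv f x|)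
    (h0 : ∀ x ∈ Ioo α β, f x ≠ 0) (hs : s ∈ Ioo α β) :
    min (η / 2) (m * min (s - α) (β - s)) ≤ |f s| := by
  by_cases hlarge : η / 2 ≤ |f s|
  · exact (min_le_left _ _).trans hlarge
  refine (min_le_right _ _).trans (mul_min_sub_le_abs_of_le_abs_deriv hf (fun x hx => ?_) h0 hs)
  refine hderiv x hx ?_
  calc |f x| = |(f x - f s) + f s| := by ring_nf
    _ ≤ η / 2 + η / 2 := (abs_add_le _ _).trans (add_le_add (hosc x hx) (not_le.1 hlarge).le)
    _ = η := add_halves η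

end OneVariable

section TwoVariables

variable {𝕜 E F G : Type*} [NontriviallyNormedField 𝕜] [NormedAddCommGroup E] [NormedSpace 𝕜 E]
  [NormedAddCommGroup F] [NormedSpace 𝕜 F] [NormedAddCommGroup G] [NormedSpace 𝕜 G]
  {g : E → F → G} {x : E} {y : F}

theorem DifferentiableAt.curry_left (h : DifferentiableAt 𝕜 (uncurry g) (x, y)) :
    DifferentiableAt 𝕜 (fun x' => g x' y) x :=
  h.comp (f := fun x' => (x', y)) x (differentiableAt_id.prodMk (differentiableAt_const y))

theorem DifferentiableAt.curry_right (h : DifferentiableAt 𝕜 (uncurry g) (x, y)) :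
    DifferentiableAt 𝕜 (g x) y :=
  h.comp (f := fun y' => (x, y')) y ((differentiableAt_const x).prodMk differentiableAt_id)

end TwoVariables

theorem ContDiffOn.partialDeriv_fst_of_isOpen {φ : ℝ → ℝ → ℝ} {U : Set (ℝ × ℝ)}
    {m n : WithTop ℕ∞} (hφ : ContDiffOn ℝ n (uncurry φ) U) (hU : IsOpen U) (hmn : m + 1 ≤ n) :
    ContDiffOn ℝ m (uncurry fun s t => deriv (fun x => φ x t) s) U := by
  refine ((hφ.fderiv_of_isOpen hU hmn).clm_apply
    (contDiffOn_const (c := ((1 : ℝ), (0 : ℝ))))).congr fun p hp => ?_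
  have hdiff := (hφ.differentiableOn (lt_of_lt_of_le (by positivity) hmn).ne').differentiableAt
    (hU.mem_nhds hp)
  exact (hdiff.hasFDerivAt.comp_hasDerivAt p.1
    ((hasDerivAt_id p.1).prodMk (hasDerivAt_const p.1 p.2))).deriv

theorem abs_sub_le_of_abs_deriv_le {g : ℝ → ℝ → ℝ} {I J : Set ℝ} (hI : Convex ℝ I)
    (hJ : Convex ℝ J) {C D : ℝ}
    (hgs : ∀ s ∈ I, ∀ t ∈ J, DifferentiableAt ℝ (fun x => g x t) s)
    (hgt : ∀ s ∈ I, ∀ t ∈ J, DifferentiableAt ℝ (g s) t)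
    (hC : ∀ s ∈ I, ∀ t ∈ J, |deriv (fun x => g x t) s| ≤ C)
    (hD : ∀ s ∈ I, ∀ t ∈ J, |deriv (g s) t| ≤ D)
    {s s₀ t t₀ : ℝ} (hs : s ∈ I) (hs₀ : s₀ ∈ I) (ht : t ∈ J) (ht₀ : t₀ ∈ J) :
    |g s t - g s₀ t₀| ≤ C * |s - s₀| + D * |t - t₀| := by
  have h₁ : |g s t - g s₀ t| ≤ C * |s - s₀| :=
    hI.norm_image_sub_le_of_norm_deriv_le (fun x hx => hgs x hx t ht) (fun x hx => hC x hx t ht)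
      hs₀ hs
  have h₂ : |g s₀ t - g s₀ t₀| ≤ D * |t - t₀| :=
    hJ.norm_image_sub_le_of_norm_deriv_le (hgt s₀ hs₀) (hD s₀ hs₀) ht₀ ht
  calc |g s t - g s₀ t₀| = |(g s t - g s₀ t) + (g s₀ t - g s₀ t₀)| := by ring_nf
    _ ≤ _ := (abs_add_le _ _).trans (add_le_add h₁ h₂)

theorem one_add_le_sqrt_two_mul_sqrt_one_add_sq (C : ℝ) :
    1 + C ≤ Real.sqrt 2 * Real.sqrt (1 + C ^ 2) := by
  rw [← Real.sqrt_mul zero_le_two]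
  exact Real.le_sqrt_of_sq_le (by nlinarith [sq_nonneg (1 - C)])

theorem one_add_mul_div_sqrt_le_half {η : ℝ} (hη : 0 ≤ η) (C : ℝ) :
    (1 + C) * (η / (2 * Real.sqrt 2 * Real.sqrt (1 + C ^ 2))) ≤ η / 2 := by
  have hpos : 0 < Real.sqrt 2 * Real.sqrt (1 + C ^ 2) := by positivity
  rw [mul_assoc, mul_div_assoc', div_le_div_iff₀ (by positivity) two_pos]
  nlinarith [one_add_le_sqrt_two_mul_sqrt_one_add_sq C]

theorem sInf_image2_dist_le {X : Type*} [PseudoMetricSpace X] {A B : Set X} {a b : X}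
    (ha : a ∈ A) (hb : b ∈ B) : sInf (image2 dist A B) ≤ dist a b :=
  csInf_le ⟨0, by rintro _ ⟨x, -, y, -, rfl⟩; exact dist_nonneg⟩ (mem_image2_of_mem ha hb)

theorem sInf_image2_dist_compl_Ioo_le {B : Set ℝ} {α β s : ℝ} (hsB : s ∈ B) (hs : s ∈ Ioo α β) :
    sInf (image2 dist B (Ioo α β)ᶜ) ≤ min (s - α) (β - s) := by
  refine le_min ?_ ?_
  · simpa [Real.dist_eq, abs_of_pos (sub_pos.2 hs.1)] using
      sInf_image2_dist_le (B := (Ioo α β)ᶜ) hsB (b := α) (by simp)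
  · simpa [Real.dist_eq, abs_of_neg (sub_neg.2 hs.2)] using
      sInf_image2_dist_le (B := (Ioo α β)ᶜ) hsB (b := β) (by simp)

theorem stmt_9_general (ε C : ℝ) (hε : 0 < ε) (hC : 0 < C)
    (η' δ : ℝ)
    (hη' : η' = min (1 / 2) (ε / (2 * C)))
    (hδ : δ = η' / (2 * Real.sqrt 2 * Real.sqrt (1 + C ^ 2)))
    (α β : ℝ) (hαβ : β - α ≤ δ)
    (B : Set ℝ) (hBsub : B ⊆ Set.Ioo α β)
    (φ : ℝ → ℝ → ℝ)
    (hφC2 : ContDiffOn ℝ 2 (fun p : ℝ × ℝ => φ p.1 p.2) (Set.Ioo α β ×ˢ Set.Ioo α β))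
    (H1 : ∀ s ∈ Set.Ioo α β, ∀ t ∈ Set.Ioo α β,
      |deriv (fun x => φ x t) s| ≤ η' → ε / 4 ≤ |deriv (deriv (fun x => φ x t)) s|)
    (H2 : ∀ s ∈ Set.Ioo α β, ∀ t ∈ Set.Ioo α β,
      |deriv (deriv (fun x => φ x t)) s| ≤ C)
    (H3 : ∀ s ∈ Set.Ioo α β, ∀ t ∈ Set.Ioo α β,
      |deriv (fun y => deriv (fun x => φ x y) s) t| ≤ 1) :
    ((∃ s₀ ∈ Set.Ioo α β, ∃ t₀ ∈ Set.Ioo α β, deriv (fun x => φ x t₀) s₀ = 0) →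
      ∀ s ∈ Set.Ioo α β, ∀ t ∈ Set.Ioo α β, ε / 4 ≤ |deriv (deriv (fun x => φ x t)) s|) ∧
    ((∀ s ∈ Set.Ioo α β, ∀ t ∈ Set.Ioo α β, deriv (fun x => φ x t) s ≠ 0) →
      ∀ s ∈ B, ∀ t ∈ B,
        min (η' / 2) (sInf (Set.image2 dist B (Set.Ioo α β)ᶜ) * ε / 4) ≤
          |deriv (fun x => φ x t) s|) := by
  set ψ : ℝ → ℝ → ℝ := fun s t => deriv (fun x => φ x t) s
  have hη'0 : 0 ≤ η' := hη' ▸ le_min (by norm_num) (by positivity)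
  have hU : IsOpen (Ioo α β ×ˢ Ioo α β) := isOpen_Ioo.prod isOpen_Ioo
  have hψ : ∀ s ∈ Ioo α β, ∀ t ∈ Ioo α β, DifferentiableAt ℝ (uncurry ψ) (s, t) := fun s hs t ht =>
    ((hφC2.partialDeriv_fst_of_isOpen hU le_rfl).differentiableOn one_ne_zero).differentiableAt
      (hU.mem_nhds ⟨hs, ht⟩)
  have hdiam : ∀ x ∈ Ioo α β, ∀ y ∈ Ioo α β, |x - y| ≤ δ := fun x hx y hy =>
    abs_sub_le_iff.2 ⟨by linarith [hx.2, hy.1], by linarith [hx.1, hy.2]⟩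
  have hosc : ∀ s ∈ Ioo α β, ∀ s₀ ∈ Ioo α β, ∀ t ∈ Ioo α β, ∀ t₀ ∈ Ioo α β,
      |ψ s t - ψ s₀ t₀| ≤ η' / 2 := fun s hs s₀ hs₀ t ht t₀ ht₀ => calc
    |ψ s t - ψ s₀ t₀| ≤ C * |s - s₀| + 1 * |t - t₀| :=
      abs_sub_le_of_abs_deriv_le (convex_Ioo α β) (convex_Ioo α β)
        (fun s hs t ht => (hψ s hs t ht).curry_left) (fun s hs t ht => (hψ s hs t ht).curry_right)
        H2 H3 hs hs₀ ht ht₀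
    _ ≤ (1 + C) * δ := by nlinarith [hdiam s hs s₀ hs₀, hdiam t ht t₀ ht₀]
    _ ≤ η' / 2 := hδ ▸ one_add_mul_div_sqrt_le_half hη'0 C
  constructor
  · rintro ⟨s₀, hs₀, t₀, ht₀, hzero⟩ s hs t ht
    have := hosc s hs s₀ hs₀ t ht t₀ ht₀
    rw [show ψ s₀ t₀ = 0 from hzero, sub_zero] at this
    exact H1 s hs t ht (by linarith)
  · intro hne s hsB t htB
    have hs := hBsub hsB
    have ht := hBsub htB
    calc min (η' / 2) (sInf (image2 dist B (Ioo α β)ᶜ) * ε / 4)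
        ≤ min (η' / 2) (ε / 4 * min (s - α) (β - s)) := by
          rw [mul_div_assoc, mul_comm]
          gcongr
          exact sInf_image2_dist_compl_Ioo_le hsB hs
      _ ≤ |ψ s t| :=
          min_le_abs_of_abs_sub_le (fun x hx => (hψ x hx t ht).curry_left)
            (fun x hx => hosc x hx s hs t ht t ht) (fun x hx => H1 x hx t ht)
            (fun x hx => hne x hx t ht) hs

/-- Abstract calculus content of Lemma 4.3 (uniform phase-function bounds).
Here `∂_s φ(s,t) = deriv (fun x => φ x t) s`, `∂²_s φ(s,t) =
deriv (deriv (fun x => φ x t)) s`, and `∂_t ∂_s φ(s,t) =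
deriv (fun y => deriv (fun x => φ x y) s) t`. -/
theorem stmt_9 (ε C : ℝ) (hε : 0 < ε) (hC : 0 < C)
    (η' δ : ℝ)
    (hη' : η' = min (1 / 2) (ε / (2 * C)))
    (hδ : δ = η' / (2 * Real.sqrt 2 * Real.sqrt (1 + C ^ 2)))
    (α β : ℝ) (hαβ : β - α ≤ δ)
    (B : Set ℝ) (hBcompact : IsCompact B) (hBsub : B ⊆ Set.Ioo α β)
    (φ : ℝ → ℝ → ℝ)
    (hφC2 : ContDiffOn ℝ 2 (fun p : ℝ × ℝ => φ p.1 p.2) (Set.Ioo α β ×ˢ Set.Ioo α β))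
    (H1 : ∀ s ∈ Set.Ioo α β, ∀ t ∈ Set.Ioo α β,
      |deriv (fun x => φ x t) s| ≤ η' → ε / 4 ≤ |deriv (deriv (fun x => φ x t)) s|)
    (H2 : ∀ s ∈ Set.Ioo α β, ∀ t ∈ Set.Ioo α β,
      |deriv (deriv (fun x => φ x t)) s| ≤ C)
    (H3 : ∀ s ∈ Set.Ioo α β, ∀ t ∈ Set.Ioo α β,
      |deriv (fun y => deriv (fun x => φ x y) s) t| ≤ 1) :
    ((∃ s₀ ∈ Set.Ioo α β, ∃ t₀ ∈ Set.Ioo α β, deriv (fun x => φ x t₀) s₀ = 0) →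
      ∀ s ∈ Set.Ioo α β, ∀ t ∈ Set.Ioo α β, ε / 4 ≤ |deriv (deriv (fun x => φ x t)) s|) ∧
    ((∀ s ∈ Set.Ioo α β, ∀ t ∈ Set.Ioo α β, deriv (fun x => φ x t) s ≠ 0) →
      ∀ s ∈ B, ∀ t ∈ B,
        min (η' / 2) (sInf (Set.image2 dist B (Set.Ioo α β)ᶜ) * ε / 4) ≤
          |deriv (fun x => φ x t) s|) :=
  stmt_9_general ε C hε hC η' δ hη' hδ α β hαβ B hBsub φ hφC2 H1 H2 H3
end

section
/- Let a > 0, let U ⊂ ℝ² be a convex open set, let φ : U → ℝ be twice continuously differentiable, and let x₀ ∈ U with ∇φ(x₀) = 0. Suppose that at every point of U the Hessian of φ satisfies |∂²_{11} φ| ≥ a, |∂²_{22} φ| ≥ a, and |∂²_{12} φ| ≤ a/2. Then |∇φ(x)| ≥ (a/(2√2))·|x - x₀| for all x ∈ U. -/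
/-!
Write `v = x - x₀`. For each coordinate direction `eᵢ`, the mean value theorem applied to
`y ↦ ∂ᵢφ(y)` on the segment `[x₀, x]` gives `∂ᵢφ(x) = D²φ(ξᵢ)(v, eᵢ)` for some `ξᵢ ∈ U`, and the
Hessian bounds turn this into `|∂ᵢφ(x)| ≥ a|vᵢ| - (a/2)|vⱼ|`. For the larger coordinate of `v`
the right-hand side is at least `(a/2) max(|v₀|, |v₁|) ≥ a/(2√2) ‖v‖`.
-/

open InnerProductSpace

section SecondDerivative

variable {E F : Type*} [NormedAddCommGroup E] [NormedSpace ℝ E]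
  [NormedAddCommGroup F] [NormedSpace ℝ F]

theorem fderiv_fderiv_apply_right {φ : E → F} {ξ : E} (hφ : DifferentiableAt ℝ (fderiv ℝ φ) ξ)
    (v w : E) : fderiv ℝ (fun y => fderiv ℝ φ y w) ξ v = fderiv ℝ (fderiv ℝ φ) ξ v w := by
  rw [fderiv_clm_apply hφ (differentiableAt_const w)]
  simp

theorem ContDiffAt.fderiv_fderiv_apply_comm {φ : E → F} {ξ : E} (hφ : ContDiffAt ℝ 2 φ ξ)
    (v w : E) :
    fderiv ℝ (fun y => fderiv ℝ φ y w) ξ v = fderiv ℝ (fun y => fderiv ℝ φ y v) ξ w := by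
  have hD : DifferentiableAt ℝ (fderiv ℝ φ) ξ :=
    (hφ.fderiv_right (m := 1) le_rfl).differentiableAt one_ne_zero
  rw [fderiv_fderiv_apply_right hD, fderiv_fderiv_apply_right hD]
  exact hφ.isSymmSndFDerivAt (by norm_num) v w

theorem exists_mem_segment_fderiv_apply_eq {φ : E → ℝ} {x₀ x : E}
    (hφ : ∀ ξ ∈ segment ℝ x₀ x, DifferentiableAt ℝ (fderiv ℝ φ) ξ) (h₀ : fderiv ℝ φ x₀ = 0)
    (w : E) : ∃ ξ ∈ segment ℝ x₀ x,
      fderiv ℝ φ x w = fderiv ℝ (fun y => fderiv ℝ φ y w) ξ (x - x₀) := by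
  obtain ⟨ξ, hξ, h⟩ := domain_mvt (f := fun y => fderiv ℝ φ y w)
    (fun ξ hξ => ((hφ ξ hξ).clm_apply (differentiableAt_const w)).hasFDerivAt.hasFDerivWithinAt)
    (convex_segment x₀ x) (left_mem_segment ℝ x₀ x) (right_mem_segment ℝ x₀ x)
  refine ⟨ξ, hξ, ?_⟩
  simpa [h₀] using h

end SecondDerivative

theorem abs_fderiv_apply_le_norm_gradient_mul_norm {F : Type*} [NormedAddCommGroup F]
    [InnerProductSpace ℝ F] [CompleteSpace F] (φ : F → ℝ) (x w : F) :
    |fderiv ℝ φ x w| ≤ ‖gradient φ x‖ * ‖w‖ := by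
  rw [← toDual_gradient, toDual_apply_apply]
  exact abs_real_inner_le_norm _ _

namespace EuclideanSpace

theorem eq_smul_single_add_smul_single {i j : Fin 2} (hij : i ≠ j)
    (v : EuclideanSpace ℝ (Fin 2)) : v = v i • single i 1 + v j • single j 1 := by
  ext k
  fin_cases i <;> fin_cases j <;> fin_cases k <;> simp_all

theorem mul_abs_sub_mul_abs_le_abs_apply {i j : Fin 2} (hij : i ≠ j)
    (L : EuclideanSpace ℝ (Fin 2) →L[ℝ] ℝ) {a b : ℝ} (hi : a ≤ |L (single i 1)|)
    (hj : |L (single j 1)| ≤ b) (v : EuclideanSpace ℝ (Fin 2)) :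
    a * |v i| - b * |v j| ≤ |L v| := by
  have hL : L v = v i * L (single i 1) + v j * L (single j 1) := by
    conv_lhs => rw [eq_smul_single_add_smul_single hij v]
    simp
  calc a * |v i| - b * |v j| ≤ |v i * L (single i 1)| - |v j * L (single j 1)| := by
        rw [abs_mul, abs_mul]
        linarith [mul_le_mul_of_nonneg_left hi (abs_nonneg (v i)),
          mul_le_mul_of_nonneg_left hj (abs_nonneg (v j))]
    _ ≤ |L v| := by
        simpa [hL] using abs_sub_abs_le_abs_sub (v i * L (single i 1)) (-(v j * L (single j 1)))

theorem norm_le_sqrt_two_mul_max (v : EuclideanSpace ℝ (Fin 2)) :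
    ‖v‖ ≤ √2 * max |v 0| |v 1| := by
  refine le_of_pow_le_pow_left₀ two_ne_zero (by positivity) ?_
  rw [real_norm_sq_eq, Fin.sum_univ_two, mul_pow, Real.sq_sqrt zero_le_two]
  nlinarith [sq_abs (v 0), sq_abs (v 1), abs_nonneg (v 0), abs_nonneg (v 1),
    le_max_left |v 0| |v 1|, le_max_right |v 0| |v 1|]

theorem mul_norm_le_of_sub_half_mul_abs_le {a N : ℝ} (ha : 0 ≤ a) (v : EuclideanSpace ℝ (Fin 2))
    (h₀ : a * |v 0| - a / 2 * |v 1| ≤ N) (h₁ : a * |v 1| - a / 2 * |v 0| ≤ N) :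
    a / (2 * √2) * ‖v‖ ≤ N := by
  have hmax : a / 2 * max |v 0| |v 1| ≤ N := by
    rcases le_total |v 0| |v 1| with h | h
    · rw [max_eq_right h]; nlinarith
    · rw [max_eq_left h]; nlinarith
  calc a / (2 * √2) * ‖v‖ ≤ a / (2 * √2) * (√2 * max |v 0| |v 1|) := by
        gcongr; exact norm_le_sqrt_two_mul_max v
    _ = a / 2 * max |v 0| |v 1| := by field_simp
    _ ≤ N := hmax

end EuclideanSpace

/-- The mean-value-theorem step in the proof of Proposition 2.3: a `C²`
function on a convex open set of the Euclidean plane whose Hessian has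
diagonal entries of absolute value `≥ a` and off-diagonal entry of absolute
value `≤ a/2`, and whose gradient vanishes at `x₀`, satisfies
`‖∇φ(x)‖ ≥ (a/(2√2))·‖x - x₀‖`. -/
theorem stmt_10 (a : ℝ) (ha : 0 < a)
    (U : Set (EuclideanSpace ℝ (Fin 2))) (hUopen : IsOpen U) (hUconv : Convex ℝ U)
    (φ : EuclideanSpace ℝ (Fin 2) → ℝ) (hφ : ContDiffOn ℝ 2 φ U)
    (x₀ : EuclideanSpace ℝ (Fin 2)) (hx₀ : x₀ ∈ U) (hcrit : gradient φ x₀ = 0)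
    (H11 : ∀ x ∈ U,
      a ≤ |fderiv ℝ (fun y => fderiv ℝ φ y (EuclideanSpace.single 0 1)) x (EuclideanSpace.single 0 1)|)
    (H22 : ∀ x ∈ U,
      a ≤ |fderiv ℝ (fun y => fderiv ℝ φ y (EuclideanSpace.single 1 1)) x (EuclideanSpace.single 1 1)|)
    (H12 : ∀ x ∈ U,
      |fderiv ℝ (fun y => fderiv ℝ φ y (EuclideanSpace.single 1 1)) x (EuclideanSpace.single 0 1)| ≤ a / 2) :
    ∀ x ∈ U, a / (2 * Real.sqrt 2) * ‖x - x₀‖ ≤ ‖gradient φ x‖ := by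
  intro x hx
  have hC2 : ∀ ξ ∈ U, ContDiffAt ℝ 2 φ ξ := fun ξ hξ => hφ.contDiffAt (hUopen.mem_nhds hξ)
  have hD : ∀ ξ ∈ segment ℝ x₀ x, DifferentiableAt ℝ (fderiv ℝ φ) ξ := fun ξ hξ =>
    ((hC2 ξ (hUconv.segment_subset hx₀ hx hξ)).fderiv_right (m := 1) le_rfl).differentiableAt
      one_ne_zero
  have h₀ : fderiv ℝ φ x₀ = 0 := by rw [← toDual_gradient, hcrit, map_zero]
  obtain ⟨ξ, hξ, hx0⟩ := exists_mem_segment_fderiv_apply_eq hD h₀ (EuclideanSpace.single 0 1)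
  obtain ⟨η, hη, hx1⟩ := exists_mem_segment_fderiv_apply_eq hD h₀ (EuclideanSpace.single 1 1)
  have hξU := hUconv.segment_subset hx₀ hx hξ
  have hηU := hUconv.segment_subset hx₀ hx hη
  have hgrad (i : Fin 2) : |fderiv ℝ φ x (EuclideanSpace.single i 1)| ≤ ‖gradient φ x‖ := by
    simpa using abs_fderiv_apply_le_norm_gradient_mul_norm φ x (EuclideanSpace.single i 1)
  refine EuclideanSpace.mul_norm_le_of_sub_half_mul_abs_le ha.le (x - x₀) ?_ ?_
  · refine (EuclideanSpace.mul_abs_sub_mul_abs_le_abs_apply zero_ne_one _ (H11 ξ hξU) ?_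
      _).trans (hx0 ▸ hgrad 0)
    rw [(hC2 ξ hξU).fderiv_fderiv_apply_comm]
    exact H12 ξ hξU
  · exact (EuclideanSpace.mul_abs_sub_mul_abs_le_abs_apply one_ne_zero _ (H22 η hηU) (H12 η hηU)
      _).trans (hx1 ▸ hgrad 1)
end

section
/- Let b̃ : ℝ² → ℂ be smooth and compactly supported, and let C₀ > 0. There exists a constant C, depending only on C₀ and b̃, such that the following holds for every λ ≥ 1: if a : (0, ∞) → ℂ is continuously differentiable and satisfies |a(r)| ≤ C₀·r^{-1/2} and |a'(r)| ≤ C₀·r^{-3/2} for all r ≥ 1/λ, and |a(r)| ≤ C₀·λ^{1/2} for all 0 < r ≤ 1/λ, then |∬_{ℝ²} b̃(s, r)·a(|r|)·e^{iλ|r|} ds dr| ≤ C·λ^{-1/2}. -/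
open MeasureTheory Set
set_option maxHeartbeats 1600000

lemma intAux (f : ℝ → ℂ) {s : Set ℝ} (hs : MeasurableSet s) (hc : ContinuousOn f s)
    (C R : ℝ) (hC : 0 ≤ C) (hb : ∀ x ∈ s, ‖f x‖ ≤ C) (hv : ∀ x ∈ s, R < |x| → f x = 0) :
    IntegrableOn f s := by
  have hgint : Integrable ((Icc (-R) R).indicator fun _ => C) volume := by
    refine (IntegrableOn.integrable_indicator ?_ measurableSet_Icc)
    exact integrableOn_const (by rw [Real.volume_Icc]; exact ENNReal.ofReal_ne_top)
  refine Integrable.mono' (hgint.restrict) (hc.aestronglyMeasurable hs) ?_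
  filter_upwards [ae_restrict_mem hs] with x hx
  by_cases hxR : |x| ≤ R
  · rw [Set.indicator_of_mem (by exact abs_le.1 hxR : x ∈ Icc (-R) R)]
    exact hb x hx
  · rw [hv x hx (lt_of_not_ge hxR)]
    simpa using Set.indicator_nonneg (fun _ _ => hC) x

lemma normExp (lam r : ℝ) : ‖Complex.exp (Complex.I * lam * r)‖ = 1 := by
  rw [Complex.norm_exp]
  simp [Complex.mul_re]

lemma rpow_anti {x y e : ℝ} (hx : 0 < x) (hxy : x ≤ y) (he : e ≤ 0) : y ^ e ≤ x ^ e :=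
  Real.rpow_le_rpow_of_nonpos hx hxy he

lemma core (C₀ M R₁ : ℝ) (hC₀ : 0 < C₀) (hM : 0 ≤ M) (hR₁ : 1 ≤ R₁)
    (lam : ℝ) (hlam : 1 ≤ lam)
    (h h' : ℝ → ℂ) (hd : ∀ r, HasDerivAt h (h' r) r) (hh'c : Continuous h')
    (hb : ∀ r, ‖h r‖ ≤ M) (hb' : ∀ r, ‖h' r‖ ≤ M)
    (hz : ∀ r, R₁ ≤ r → h r = 0)
    (a : ℝ → ℂ) (ha : ContDiffOn ℝ 1 a (Set.Ioi 0))
    (ha1 : ∀ r : ℝ, 1 / lam ≤ r → ‖a r‖ ≤ C₀ * r ^ (-(1 / 2 : ℝ)))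
    (ha2 : ∀ r : ℝ, 1 / lam ≤ r → ‖deriv a r‖ ≤ C₀ * r ^ (-(3 / 2 : ℝ)))
    (ha3 : ∀ r : ℝ, 0 < r → r ≤ 1 / lam → ‖a r‖ ≤ C₀ * lam ^ (1 / 2 : ℝ)) :
    ‖∫ r in Set.Ioi (0:ℝ), h r * a r * Complex.exp (Complex.I * lam * r)‖ ≤
      C₀ * M * (5 + 2 * R₁) * lam ^ (-(1 / 2 : ℝ)) := by
  have hlam0 : (0:ℝ) < lam := lt_of_lt_of_le one_pos hlam
  have hinv0 : (0:ℝ) < 1 / lam := by positivity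
  have hinvle1 : 1 / lam ≤ 1 := by rw [div_le_one hlam0]; exact hlam
  have hinvleR : 1 / lam ≤ R₁ := hinvle1.trans hR₁
  have hR₁0 : (0:ℝ) < R₁ := lt_of_lt_of_le one_pos hR₁
  have hinv_rpow : ∀ e : ℝ, (1 / lam) ^ e = lam ^ (-e) := by
    intro e
    rw [one_div, Real.inv_rpow hlam0.le, ← Real.rpow_neg hlam0.le]
  have haall : ∀ r : ℝ, 0 < r → ‖a r‖ ≤ C₀ * lam ^ (1 / 2 : ℝ) := by
    intro r hr
    rcases le_total r (1 / lam) with hcase | hcase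
    · exact ha3 r hr hcase
    · refine (ha1 r hcase).trans ?_
      have h2 := rpow_anti hinv0 hcase (by norm_num : -(1/2:ℝ) ≤ 0)
      rw [hinv_rpow, neg_neg] at h2
      exact mul_le_mul_of_nonneg_left h2 hC₀.le
  have hhc : Continuous h := by
    rw [continuous_iff_continuousAt]; exact fun x => (hd x).differentiableAt.continuousAt
  have haco : ContinuousOn a (Set.Ioi (0:ℝ)) := ha.continuousOn
  have hexpc : Continuous fun r : ℝ => Complex.exp (Complex.I * lam * r) := by
    exact Complex.continuous_exp.comp (continuous_const.mul Complex.continuous_ofReal)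
  set f : ℝ → ℂ := fun r => h r * a r * Complex.exp (Complex.I * lam * r) with hf
  have hfc : ContinuousOn f (Set.Ioi (0:ℝ)) :=
    ((hhc.continuousOn.mul haco).mul hexpc.continuousOn)
  have hfb : ∀ x ∈ Set.Ioi (0:ℝ), ‖f x‖ ≤ M * (C₀ * lam ^ (1 / 2 : ℝ)) := by
    intro x hx
    have : ‖f x‖ = ‖h x‖ * ‖a x‖ * ‖Complex.exp (Complex.I * lam * x)‖ := by
      simp [hf, norm_mul]
    rw [this, normExp, mul_one]
    exact mul_le_mul (hb x) (haall x hx) (norm_nonneg _) hM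
  -- bound on subintervals of Ioi 0 applies as well
  have hCpos : 0 ≤ M * (C₀ * lam ^ (1 / 2 : ℝ)) := by positivity
  -- integrability of f on pieces
  -- generic integrability on Ioc pieces within (0, R₁]
  have hIoc : ∀ u v : ℝ, 0 ≤ u → IntegrableOn f (Set.Ioc u v) := by
    intro u v hu
    refine intAux f measurableSet_Ioc (hfc.mono ?_) _ R₁ hCpos ?_ ?_
    · intro x hx; exact lt_of_le_of_lt hu hx.1
    · intro x hx; exact hfb x (lt_of_le_of_lt hu hx.1)
    · intro x hx hxR
      have hx0 : 0 < x := lt_of_le_of_lt hu hx.1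
      rw [abs_of_pos hx0] at hxR
      have : h x = 0 := hz x hxR.le
      simp [hf, this]
  have hint1 : IntervalIntegrable f volume 0 (1/lam) := by
    rw [intervalIntegrable_iff, Set.uIoc_of_le hinv0.le]
    exact hIoc 0 (1/lam) le_rfl
  have hint2 : IntervalIntegrable f volume (1/lam) R₁ := by
    rw [intervalIntegrable_iff, Set.uIoc_of_le hinvleR]
    exact hIoc (1/lam) R₁ hinv0.le
  -- reduce Ioi to interval [0, R₁]
  have hsplitset : ∫ r in Set.Ioi (0:ℝ), f r = ∫ r in Set.Ioc (0:ℝ) R₁, f r := by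
    have hzero : ∫ x in Set.Ioi R₁, f x = 0 :=
      setIntegral_eq_zero_of_forall_eq_zero (fun x hx => by
        have : h x = 0 := hz x (le_of_lt hx)
        simp [hf, this])
    have hintIoi : IntegrableOn f (Set.Ioi R₁) := by
      refine intAux f measurableSet_Ioi (hfc.mono ?_) _ R₁ hCpos ?_ ?_
      · intro x hx; exact hR₁0.trans hx
      · intro x hx; exact hfb x (hR₁0.trans hx)
      · intro x hx _
        have : h x = 0 := hz x (le_of_lt hx)
        simp [hf, this]
    rw [← Set.Ioc_union_Ioi_eq_Ioi hR₁0.le,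
      setIntegral_union (Set.Ioc_disjoint_Ioi le_rfl) measurableSet_Ioi
        (hIoc 0 R₁ le_rfl) hintIoi, hzero, add_zero]
  have hinterval : ∫ r in Set.Ioc (0:ℝ) R₁, f r = ∫ r in (0:ℝ)..R₁, f r := by
    rw [intervalIntegral.integral_of_le hR₁0.le]
  have hadj : ∫ r in (0:ℝ)..R₁, f r
      = (∫ r in (0:ℝ)..(1/lam), f r) + ∫ r in (1/lam)..R₁, f r :=
    (intervalIntegral.integral_add_adjacent_intervals hint1 hint2).symm
  -- rpow algebra
  have key1 : lam ^ (1/2:ℝ) * (1/lam) = lam ^ (-(1/2):ℝ) := by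
    rw [one_div lam, ← Real.rpow_neg_one lam, ← Real.rpow_add hlam0]; norm_num
  have key2 : (1/lam : ℝ) ≤ lam ^ (-(1/2):ℝ) := by
    rw [one_div lam, ← Real.rpow_neg_one lam]
    exact Real.rpow_le_rpow_of_exponent_le hlam (by norm_num)
  have hlamhalf1 : (1:ℝ) ≤ lam ^ (1/2:ℝ) := Real.one_le_rpow hlam (by norm_num)
  -- piece 1
  have hp1 : ‖∫ r in (0:ℝ)..(1/lam), f r‖ ≤ C₀ * M * lam ^ (-(1/2):ℝ) := by
    have hb1 : ∀ x ∈ Set.uIoc (0:ℝ) (1/lam), ‖f x‖ ≤ M * (C₀ * lam ^ (1/2:ℝ)) := by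
      intro x hx
      rw [Set.uIoc_of_le hinv0.le] at hx
      exact hfb x hx.1
    have := intervalIntegral.norm_integral_le_of_norm_le_const hb1
    calc ‖∫ r in (0:ℝ)..(1/lam), f r‖ ≤ M * (C₀ * lam ^ (1/2:ℝ)) * |1/lam - 0| := this
      _ = C₀ * M * (lam ^ (1/2:ℝ) * (1/lam)) := by
          rw [sub_zero, abs_of_pos hinv0]; ring
      _ = C₀ * M * lam ^ (-(1/2):ℝ) := by rw [key1]
  -- piece 2: integration by parts
  set c : ℂ := Complex.I * lam with hcdef
  have hc0 : c ≠ 0 := mul_ne_zero Complex.I_ne_zero (by exact_mod_cast hlam0.ne')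
  have hcnorm : ‖c‖ = lam := by
    simp [hcdef, map_mul,
      abs_of_pos hlam0]
  set u : ℝ → ℂ := fun r => h r * a r with hudef
  set u' : ℝ → ℂ := fun r => h' r * a r + h r * deriv a r with hu'def
  set v : ℝ → ℂ := fun r : ℝ => Complex.exp (c * r) / c with hvdef
  set v' : ℝ → ℂ := fun r : ℝ => Complex.exp (c * r) with hv'def
  have hderiv_u : ∀ x ∈ Set.uIcc (1/lam) R₁, HasDerivAt u (u' x) x := by
    intro x hx
    rw [Set.uIcc_of_le hinvleR] at hx
    have hx0 : 0 < x := lt_of_lt_of_le hinv0 hx.1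
    have hax : HasDerivAt a (deriv a x) x :=
      ((ha.differentiableOn one_ne_zero).differentiableAt (Ioi_mem_nhds hx0)).hasDerivAt
    exact (hd x).mul hax
  have hderiv_v : ∀ x ∈ Set.uIcc (1/lam) R₁, HasDerivAt v (v' x) x := by
    intro x _
    have h1 : HasDerivAt (fun r : ℝ => (r:ℂ)) 1 x := by
      simpa using (hasDerivAt_id x).ofReal_comp
    have h4 := ((h1.const_mul c).cexp).div_const c
    have h5 : Complex.exp (c * x) * c / c = Complex.exp (c * x) :=
      mul_div_cancel_right₀ _ hc0
    simpa [mul_one, h5] using h4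
  have hsubIcc : Set.Icc (1/lam) R₁ ⊆ Set.Ioi (0:ℝ) := fun x hx => lt_of_lt_of_le hinv0 hx.1
  have hderiva_cont : ContinuousOn (deriv a) (Set.Ioi (0:ℝ)) :=
    ha.continuousOn_deriv_of_isOpen isOpen_Ioi le_rfl
  have hu'int : IntervalIntegrable u' volume (1/lam) R₁ := by
    apply ContinuousOn.intervalIntegrable
    rw [Set.uIcc_of_le hinvleR]
    exact (hh'c.continuousOn.mul (haco.mono hsubIcc)).add
      (hhc.continuousOn.mul (hderiva_cont.mono hsubIcc))
  have hv'int : IntervalIntegrable v' volume (1/lam) R₁ :=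
    (Complex.continuous_exp.comp (continuous_const.mul Complex.continuous_ofReal)).intervalIntegrable _ _
  have hIBP := intervalIntegral.integral_mul_deriv_eq_deriv_mul hderiv_u hderiv_v hu'int hv'int
  have hfuv : ∀ r : ℝ, f r = u r * v' r := fun r => rfl
  -- norms
  have hvnorm : ∀ r : ℝ, ‖v r‖ = 1/lam := by
    intro r
    rw [hvdef]
    simp only [norm_div, hcnorm]
    rw [show c * (r:ℂ) = Complex.I * lam * r by rw [hcdef], normExp]
  have hb_uR : ‖u R₁‖ ≤ M * C₀ := by
    have h1 : ‖a R₁‖ ≤ C₀ * R₁ ^ (-(1/2):ℝ) := ha1 R₁ hinvleR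
    have h2 : R₁ ^ (-(1/2):ℝ) ≤ 1 := Real.rpow_le_one_of_one_le_of_nonpos hR₁ (by norm_num)
    calc ‖u R₁‖ = ‖h R₁‖ * ‖a R₁‖ := norm_mul _ _
      _ ≤ M * (C₀ * 1) := mul_le_mul (hb R₁) (h1.trans (mul_le_mul_of_nonneg_left h2 hC₀.le)) (norm_nonneg _) hM
      _ = M * C₀ := by ring
  have hb_ul : ‖u (1/lam)‖ ≤ M * (C₀ * lam ^ (1/2:ℝ)) := by
    have h1 : ‖a (1/lam)‖ ≤ C₀ * (1/lam) ^ (-(1/2):ℝ) := ha1 _ le_rfl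
    rw [hinv_rpow, neg_neg] at h1
    calc ‖u (1/lam)‖ = ‖h (1/lam)‖ * ‖a (1/lam)‖ := norm_mul _ _
      _ ≤ M * (C₀ * lam ^ (1/2:ℝ)) := mul_le_mul (hb _) h1 (norm_nonneg _) hM
  have hbd1 : ‖u R₁ * v R₁‖ ≤ C₀ * M * lam ^ (-(1/2):ℝ) := by
    rw [norm_mul, hvnorm]
    calc ‖u R₁‖ * (1/lam) ≤ (M * C₀) * lam ^ (-(1/2):ℝ) := by
          apply mul_le_mul hb_uR key2 hinv0.le (by positivity)
      _ = C₀ * M * lam ^ (-(1/2):ℝ) := by ring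
  have hbd2 : ‖u (1/lam) * v (1/lam)‖ ≤ C₀ * M * lam ^ (-(1/2):ℝ) := by
    rw [norm_mul, hvnorm]
    calc ‖u (1/lam)‖ * (1/lam) ≤ M * (C₀ * lam ^ (1/2:ℝ)) * (1/lam) := by
          apply mul_le_mul_of_nonneg_right hb_ul hinv0.le
      _ = C₀ * M * (lam ^ (1/2:ℝ) * (1/lam)) := by ring
      _ = C₀ * M * lam ^ (-(1/2):ℝ) := by rw [key1]
  -- the u' * v integral
  have hbd3 : ‖∫ x in (1/lam)..R₁, u' x * v x‖ ≤ (2 + 2*R₁) * (C₀ * M) * lam ^ (-(1/2):ℝ) := by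
    set g : ℝ → ℝ := fun x => (C₀ * M * (1 + R₁) / lam) * x ^ (-(3/2):ℝ) with hgdef
    have hgle : ∀ᵐ t ∂(volume.restrict (Set.uIoc (1/lam) R₁)), ‖u' t * v t‖ ≤ g t := by
      filter_upwards [ae_restrict_mem measurableSet_uIoc] with t ht
      rw [Set.uIoc_of_le hinvleR] at ht
      have ht0 : 0 < t := lt_of_lt_of_le hinv0 ht.1.le
      have htl : 1/lam ≤ t := ht.1.le
      have h1 : ‖h' t * a t‖ ≤ M * (C₀ * t ^ (-(1/2):ℝ)) := by
        rw [norm_mul]; exact mul_le_mul (hb' t) (ha1 t htl) (norm_nonneg _) hM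
      have h2 : ‖h t * deriv a t‖ ≤ M * (C₀ * t ^ (-(3/2):ℝ)) := by
        rw [norm_mul]; exact mul_le_mul (hb t) (ha2 t htl) (norm_nonneg _) hM
      have h3 : t * t ^ (-(3/2):ℝ) = t ^ (-(1/2):ℝ) := by
        nth_rewrite 1 [← Real.rpow_one t]
        rw [← Real.rpow_add ht0]
        norm_num
      have h4 : t ^ (-(1/2):ℝ) ≤ R₁ * t ^ (-(3/2):ℝ) := by
        rw [← h3]
        have : (0:ℝ) ≤ t ^ (-(3/2):ℝ) := Real.rpow_nonneg ht0.le _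
        nlinarith [ht.2]
      have h5 : ‖u' t‖ ≤ M * C₀ * (1 + R₁) * t ^ (-(3/2):ℝ) := by
        calc ‖u' t‖ ≤ ‖h' t * a t‖ + ‖h t * deriv a t‖ := norm_add_le _ _
          _ ≤ M * (C₀ * (R₁ * t ^ (-(3/2):ℝ))) + M * (C₀ * t ^ (-(3/2):ℝ)) := by
              have := mul_le_mul_of_nonneg_left h4 (by positivity : (0:ℝ) ≤ C₀)
              nlinarith [h1, h2, this, hM, hC₀.le]
          _ = M * C₀ * (1 + R₁) * t ^ (-(3/2):ℝ) := by ring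
      calc ‖u' t * v t‖ = ‖u' t‖ * (1/lam) := by rw [norm_mul, hvnorm]
        _ ≤ (M * C₀ * (1 + R₁) * t ^ (-(3/2):ℝ)) * (1/lam) := by
            apply mul_le_mul_of_nonneg_right h5 hinv0.le
        _ = g t := by rw [hgdef]; ring
    have hgint : IntervalIntegrable g volume (1/lam) R₁ := by
      apply ContinuousOn.intervalIntegrable
      rw [Set.uIcc_of_le hinvleR]
      refine ContinuousOn.mul continuousOn_const ?_
      intro x hx
      exact (Real.continuousAt_rpow_const x _ (Or.inl (lt_of_lt_of_le hinv0 hx.1).ne')).continuousWithinAt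
    have hgval : ∫ x in (1/lam)..R₁, g x
        = (C₀ * M * (1 + R₁) / lam) * ((R₁ ^ (-(1/2):ℝ) - (1/lam) ^ (-(1/2):ℝ)) / (-(1/2))) := by
      rw [hgdef, intervalIntegral.integral_const_mul, integral_rpow]
      · norm_num
      · refine Or.inr ⟨by norm_num, ?_⟩
        rw [Set.uIcc_of_le hinvleR]
        intro hmem
        exact absurd hmem.1 (not_le.2 hinv0)
    have habs : |∫ x in (1/lam)..R₁, g x| ≤ (C₀ * M * (1 + R₁) / lam) * (2 * lam ^ (1/2:ℝ)) := by
      rw [hgval, abs_mul]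
      have e1 : (1/lam) ^ (-(1/2):ℝ) = lam ^ (1/2:ℝ) := by rw [hinv_rpow]; norm_num
      have e2 : (0:ℝ) ≤ R₁ ^ (-(1/2):ℝ) := Real.rpow_nonneg hR₁0.le _
      have e3 : R₁ ^ (-(1/2):ℝ) ≤ 1 := Real.rpow_le_one_of_one_le_of_nonpos hR₁ (by norm_num)
      rw [e1, abs_of_nonneg (by positivity : (0:ℝ) ≤ C₀ * M * (1 + R₁) / lam)]
      apply mul_le_mul_of_nonneg_left _ (by positivity)
      have e4 : (0:ℝ) ≤ lam ^ (1/2:ℝ) - R₁ ^ (-(1/2):ℝ) := by nlinarith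
      rw [abs_div, abs_sub_comm, abs_of_nonneg e4]
      rw [show |(-(1/2):ℝ)| = 1/2 by norm_num]
      rw [div_le_iff₀ (by norm_num : (0:ℝ) < 1/2)]
      nlinarith
    calc ‖∫ x in (1/lam)..R₁, u' x * v x‖ ≤ |∫ x in (1/lam)..R₁, g x| :=
          intervalIntegral.norm_integral_le_abs_of_norm_le hgle hgint
      _ ≤ (C₀ * M * (1 + R₁) / lam) * (2 * lam ^ (1/2:ℝ)) := habs
      _ = (2 + 2*R₁) * (C₀ * M) * (lam ^ (1/2:ℝ) * (1/lam)) := by ring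
      _ = (2 + 2*R₁) * (C₀ * M) * lam ^ (-(1/2):ℝ) := by rw [key1]
  -- assemble
  have hIBP' : ∫ x in (1/lam)..R₁, f x
      = u R₁ * v R₁ - u (1/lam) * v (1/lam) - ∫ x in (1/lam)..R₁, u' x * v x := hIBP
  have hp2 : ‖∫ r in (1/lam)..R₁, f r‖ ≤ (4 + 2*R₁) * (C₀ * M) * lam ^ (-(1/2):ℝ) := by
    rw [hIBP']
    have step1 := norm_sub_le (u R₁ * v R₁ - u (1/lam) * v (1/lam)) (∫ x in (1/lam)..R₁, u' x * v x)
    have step2 := norm_sub_le (u R₁ * v R₁) (u (1/lam) * v (1/lam))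
    have hpos : (0:ℝ) ≤ lam ^ (-(1/2):ℝ) := Real.rpow_nonneg hlam0.le _
    nlinarith [hbd1, hbd2, hbd3]
  rw [hsplitset, hinterval, hadj]
  calc ‖(∫ r in (0:ℝ)..(1/lam), f r) + ∫ r in (1/lam)..R₁, f r‖
      ≤ ‖∫ r in (0:ℝ)..(1/lam), f r‖ + ‖∫ r in (1/lam)..R₁, f r‖ := norm_add_le _ _
    _ ≤ C₀ * M * lam ^ (-(1/2):ℝ) + (4 + 2*R₁) * (C₀ * M) * lam ^ (-(1/2):ℝ) := add_le_add hp1 hp2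
    _ = C₀ * M * (5 + 2 * R₁) * lam ^ (-(1/2):ℝ) := by ring

/-- The oscillatory-integral estimate from Section 2 proving the `local`
bound: with amplitude bounds `|a(r)| ≤ C₀ r^{-1/2}`, `|a'(r)| ≤ C₀ r^{-3/2}`
for `r ≥ 1/λ` and `|a(r)| ≤ C₀ λ^{1/2}` for `0 < r ≤ 1/λ`, the oscillatory
integral is `O(λ^{-1/2})` with a constant depending only on `C₀` and `b̃`. -/
theorem stmt_12 (bt : ℝ × ℝ → ℂ) (hbt : ContDiff ℝ (⊤ : ℕ∞) bt) (hbtc : HasCompactSupport bt)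
    (C₀ : ℝ) (hC₀ : 0 < C₀) :
    ∃ C : ℝ, ∀ lam : ℝ, 1 ≤ lam → ∀ a : ℝ → ℂ,
      ContDiffOn ℝ 1 a (Set.Ioi (0 : ℝ)) →
      (∀ r : ℝ, 1 / lam ≤ r → ‖a r‖ ≤ C₀ * r ^ (-(1 / 2 : ℝ))) →
      (∀ r : ℝ, 1 / lam ≤ r → ‖deriv a r‖ ≤ C₀ * r ^ (-(3 / 2 : ℝ))) →
      (∀ r : ℝ, 0 < r → r ≤ 1 / lam → ‖a r‖ ≤ C₀ * lam ^ (1 / 2 : ℝ)) →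
      ‖∫ p : ℝ × ℝ, bt p * a |p.2| * Complex.exp (Complex.I * lam * |p.2|)‖ ≤
        C * lam ^ (-(1 / 2 : ℝ)) := by
  classical
  have hbtcont : Continuous bt := hbt.continuous
  obtain ⟨M1, hM1⟩ := hbtc.isCompact.exists_bound_of_continuousOn hbtcont.continuousOn
  have hfdc : Continuous (fderiv ℝ bt) := hbt.continuous_fderiv (by simp)
  have hfds : HasCompactSupport (fderiv ℝ bt) := hbtc.fderiv ℝ
  obtain ⟨M2, hM2⟩ := hfds.isCompact.exists_bound_of_continuousOn hfdc.continuousOn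
  set M : ℝ := max (max M1 M2) 0 with hMdef
  have hM0 : (0:ℝ) ≤ M := le_max_right _ _
  have hbtb : ∀ p, ‖bt p‖ ≤ M := by
    intro p
    by_cases hp : p ∈ tsupport bt
    · exact (hM1 p hp).trans (le_max_of_le_left (le_max_left _ _))
    · rw [image_eq_zero_of_notMem_tsupport hp]; simpa using hM0
  have hfdb : ∀ p, ‖fderiv ℝ bt p‖ ≤ M := by
    intro p
    by_cases hp : p ∈ tsupport (fderiv ℝ bt)
    · exact (hM2 p hp).trans (le_max_of_le_left (le_max_right _ _))
    · rw [image_eq_zero_of_notMem_tsupport hp]; simpa using hM0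
  obtain ⟨R₀, hR₀⟩ := hbtc.isCompact.isBounded.subset_closedBall 0
  set R₁ : ℝ := max R₀ 0 + 1 with hR₁def
  have hR₁ : (1:ℝ) ≤ R₁ := by
    have := le_max_right R₀ 0; rw [hR₁def]; linarith
  have hbt0 : ∀ p : ℝ × ℝ, R₁ ≤ |p.1| ∨ R₁ ≤ |p.2| → bt p = 0 := by
    intro p hp
    apply image_eq_zero_of_notMem_tsupport
    intro hmem
    have h1 : ‖p‖ ≤ R₀ := mem_closedBall_zero_iff.1 (hR₀ hmem)
    have h2 : ‖p‖ = max ‖p.1‖ ‖p.2‖ := Prod.norm_def p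
    have h3 : R₀ ≤ max R₀ 0 := le_max_left _ _
    rcases hp with hp | hp
    · have h4 : ‖p.1‖ ≤ ‖p‖ := h2 ▸ le_max_left _ _
      rw [Real.norm_eq_abs] at h4
      rw [hR₁def] at hp; linarith
    · have h4 : ‖p.2‖ ≤ ‖p‖ := h2 ▸ le_max_right _ _
      rw [Real.norm_eq_abs] at h4
      rw [hR₁def] at hp; linarith
  refine ⟨4 * R₁ * (C₀ * M * (5 + 2 * R₁)), ?_⟩
  intro lam hlam a ha ha1 ha2 ha3
  have hlam0 : (0:ℝ) < lam := lt_of_lt_of_le one_pos hlam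
  have hinv0 : (0:ℝ) < 1 / lam := by positivity
  set F : ℝ × ℝ → ℂ := fun p => bt p * a |p.2| * Complex.exp (Complex.I * lam * |p.2|)
    with hFdef
  have haall : ∀ r : ℝ, 0 < r → ‖a r‖ ≤ C₀ * lam ^ (1/2:ℝ) := by
    intro r hr
    rcases le_total r (1/lam) with hc | hc
    · exact ha3 r hr hc
    · refine (ha1 r hc).trans ?_
      have h2 := rpow_anti hinv0 hc (by norm_num : -(1/2:ℝ) ≤ 0)
      rw [show ((1:ℝ)/lam) ^ (-(1/2:ℝ)) = lam ^ (-(-(1/2:ℝ))) from by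
        rw [one_div lam, Real.inv_rpow hlam0.le, ← Real.rpow_neg hlam0.le], neg_neg] at h2
      exact mul_le_mul_of_nonneg_left h2 hC₀.le
  have hFb : ∀ p : ℝ × ℝ, p.2 ≠ 0 → ‖F p‖ ≤ (C₀ * lam ^ (1/2:ℝ)) * ‖bt p‖ := by
    intro p hp
    have he : ‖F p‖ = ‖bt p‖ * ‖a |p.2|‖ * 1 := by
      rw [hFdef]
      simp only [norm_mul]
      rw [normExp]
    rw [he, mul_one]
    have h2 := haall |p.2| (abs_pos.2 hp)
    calc ‖bt p‖ * ‖a |p.2|‖ ≤ ‖bt p‖ * (C₀ * lam ^ (1/2:ℝ)) :=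
          mul_le_mul_of_nonneg_left h2 (norm_nonneg _)
      _ = (C₀ * lam ^ (1/2:ℝ)) * ‖bt p‖ := mul_comm _ _
  have hnull : (volume : Measure (ℝ×ℝ)) {p : ℝ×ℝ | p.2 = 0} = 0 := by
    have he : {p : ℝ×ℝ | p.2 = 0} = (Set.univ : Set ℝ) ×ˢ ({0} : Set ℝ) := by
      ext ⟨x,y⟩; simp [eq_comm]
    rw [he, MeasureTheory.Measure.volume_eq_prod, Measure.prod_prod]; simp
  have hae : ∀ᵐ p : ℝ×ℝ, p.2 ≠ 0 := by
    have he : {p : ℝ×ℝ | ¬ p.2 ≠ 0} = {p : ℝ×ℝ | p.2 = 0} := by ext p; simp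
    rw [ae_iff, he]; exact hnull
  have hSmeas : MeasurableSet {p : ℝ×ℝ | p.2 ≠ 0} := by
    have : {p : ℝ×ℝ | p.2 ≠ 0} = (Prod.snd ⁻¹' ({0} : Set ℝ))ᶜ := rfl
    rw [this]
    exact (measurable_snd (measurableSet_singleton 0)).compl
  have hFcont : ContinuousOn F {p : ℝ×ℝ | p.2 ≠ 0} := by
    refine ContinuousOn.mul (ContinuousOn.mul hbtcont.continuousOn ?_) ?_
    · exact ha.continuousOn.comp (continuous_abs.comp continuous_snd).continuousOn
        (fun p hp => abs_pos.2 hp)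
    · exact (Complex.continuous_exp.comp (continuous_const.mul (Complex.continuous_ofReal.comp (continuous_abs.comp continuous_snd)))).continuousOn
  have hFmeas : AEStronglyMeasurable F volume := by
    have hres : (volume : Measure (ℝ×ℝ)).restrict {p : ℝ×ℝ | p.2 ≠ 0} = volume :=
      Measure.restrict_eq_self_of_ae_mem hae
    rw [← hres]
    exact hFcont.aestronglyMeasurable hSmeas
  have hFint : Integrable F := by
    refine Integrable.mono'
      (((hbtcont.integrable_of_hasCompactSupport hbtc).norm).const_mul (C₀ * lam ^ (1/2:ℝ)))
      hFmeas ?_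
    filter_upwards [hae] with p hp
    exact hFb p hp
  have hfub : ∫ p : ℝ×ℝ, F p = ∫ s : ℝ, ∫ r : ℝ, F (s, r) :=
    MeasureTheory.integral_prod F hFint
  have hinner : ∀ s : ℝ, ‖∫ r : ℝ, F (s, r)‖ ≤ 2 * (C₀ * M * (5 + 2 * R₁)) * lam ^ (-(1/2:ℝ)) := by
    intro s
    set hp : ℝ → ℂ := fun r => bt (s, r) with hp_def
    set hm : ℝ → ℂ := fun r => bt (s, -r) with hm_def
    set hp' : ℝ → ℂ := fun r => fderiv ℝ bt (s, r) ((0:ℝ), (1:ℝ)) with hp'_def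
    set hm' : ℝ → ℂ := fun r => fderiv ℝ bt (s, -r) ((0:ℝ), (-1:ℝ)) with hm'_def
    have hbtdiff : Differentiable ℝ bt := hbt.differentiable (by simp)
    have hdp : ∀ r, HasDerivAt hp (hp' r) r := by
      intro r
      have hcurve : HasDerivAt (fun r : ℝ => ((s, r) : ℝ×ℝ)) (((0:ℝ), (1:ℝ)) : ℝ×ℝ) r :=
        (hasDerivAt_const r s).prodMk (hasDerivAt_id r)
      have := (hbtdiff (s, r)).hasFDerivAt.comp_hasDerivAt r hcurve
      exact this
    have hdm : ∀ r, HasDerivAt hm (hm' r) r := by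
      intro r
      have hcurve : HasDerivAt (fun r : ℝ => ((s, -r) : ℝ×ℝ)) (((0:ℝ), (-1:ℝ)) : ℝ×ℝ) r :=
        (hasDerivAt_const r s).prodMk (hasDerivAt_id r).neg
      have := (hbtdiff (s, -r)).hasFDerivAt.comp_hasDerivAt r hcurve
      exact this
    have hnorm01 : ‖(((0:ℝ), (1:ℝ)) : ℝ×ℝ)‖ = 1 := by simp [Prod.norm_def]
    have hnorm0m1 : ‖(((0:ℝ), (-1:ℝ)) : ℝ×ℝ)‖ = 1 := by simp [Prod.norm_def]
    have hbp' : ∀ r, ‖hp' r‖ ≤ M := by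
      intro r
      calc ‖hp' r‖ ≤ ‖fderiv ℝ bt (s, r)‖ * ‖(((0:ℝ),(1:ℝ)) : ℝ×ℝ)‖ :=
            ContinuousLinearMap.le_opNorm _ _
        _ = ‖fderiv ℝ bt (s, r)‖ := by rw [hnorm01, mul_one]
        _ ≤ M := hfdb _
    have hbm' : ∀ r, ‖hm' r‖ ≤ M := by
      intro r
      calc ‖hm' r‖ ≤ ‖fderiv ℝ bt (s, -r)‖ * ‖(((0:ℝ),(-1:ℝ)) : ℝ×ℝ)‖ :=
            ContinuousLinearMap.le_opNorm _ _
        _ = ‖fderiv ℝ bt (s, -r)‖ := by rw [hnorm0m1, mul_one]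
        _ ≤ M := hfdb _
    have hcp' : Continuous hp' :=
      (hfdc.comp (continuous_const.prodMk continuous_id : Continuous fun r : ℝ => ((s, r) : ℝ×ℝ))).clm_apply
        continuous_const
    have hcm' : Continuous hm' :=
      (hfdc.comp (continuous_const.prodMk continuous_neg : Continuous fun r : ℝ => ((s, -r) : ℝ×ℝ))).clm_apply
        continuous_const
    have hbp : ∀ r, ‖hp r‖ ≤ M := fun r => hbtb _
    have hbm : ∀ r, ‖hm r‖ ≤ M := fun r => hbtb _
    have hzp : ∀ r, R₁ ≤ r → hp r = 0 := by
      intro r hr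
      exact hbt0 (s, r) (Or.inr (by
        rw [abs_of_nonneg (by linarith : (0:ℝ) ≤ r)]; exact hr))
    have hzm : ∀ r, R₁ ≤ r → hm r = 0 := by
      intro r hr
      exact hbt0 (s, -r) (Or.inr (by
        show R₁ ≤ |(-r)|
        rw [abs_neg, abs_of_nonneg (by linarith : (0:ℝ) ≤ r)]; exact hr))
    have hcore_p := core C₀ M R₁ hC₀ hM0 hR₁ lam hlam hp hp' hdp hcp' hbp hbp' hzp
      a ha ha1 ha2 ha3
    have hcore_m := core C₀ M R₁ hC₀ hM0 hR₁ lam hlam hm hm' hdm hcm' hbm hbm' hzm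
      a ha ha1 ha2 ha3
    set fs : ℝ → ℂ := fun r => F (s, r) with hfs_def
    have hfs_eq : fs = fun r => bt (s, r) * a |r| * Complex.exp (Complex.I * lam * |r|) := rfl
    have hintIoi : IntegrableOn fs (Set.Ioi (0:ℝ)) := by
      rw [hfs_eq]
      refine intAux _ measurableSet_Ioi ?_ (M * (C₀ * lam ^ (1/2:ℝ))) R₁ (by positivity) ?_ ?_
      · refine ContinuousOn.mul (ContinuousOn.mul
          (hbtcont.comp (continuous_const.prodMk continuous_id : Continuous fun r : ℝ => ((s, r) : ℝ×ℝ))).continuousOn ?_)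
          (Complex.continuous_exp.comp (continuous_const.mul (Complex.continuous_ofReal.comp continuous_abs))).continuousOn
        exact ha.continuousOn.comp continuous_abs.continuousOn
          (fun r hr => Set.mem_Ioi.2 (abs_pos.2 (ne_of_gt hr)))
      · intro x hx
        have h1 : ‖bt (s, x) * a |x| * Complex.exp (Complex.I * lam * |x|)‖
            = ‖bt (s, x)‖ * ‖a |x|‖ * 1 := by
          simp only [norm_mul]; rw [normExp]
        rw [h1, mul_one]
        exact mul_le_mul (hbtb _) (haall |x| (abs_pos.2 (ne_of_gt hx))) (norm_nonneg _) hM0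
      · intro x _ hxR
        have : bt (s, x) = 0 := hbt0 (s, x) (Or.inr hxR.le)
        simp [this]
    have hintIic : IntegrableOn fs (Set.Iic (0:ℝ)) := by
      rw [integrableOn_Iic_iff_integrableOn_Iio, hfs_eq]
      refine intAux _ measurableSet_Iio ?_ (M * (C₀ * lam ^ (1/2:ℝ))) R₁ (by positivity) ?_ ?_
      · refine ContinuousOn.mul (ContinuousOn.mul
          (hbtcont.comp (continuous_const.prodMk continuous_id : Continuous fun r : ℝ => ((s, r) : ℝ×ℝ))).continuousOn ?_)
          (Complex.continuous_exp.comp (continuous_const.mul (Complex.continuous_ofReal.comp continuous_abs))).continuousOn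
        exact ha.continuousOn.comp continuous_abs.continuousOn
          (fun r hr => Set.mem_Ioi.2 (abs_pos.2 (ne_of_lt hr)))
      · intro x hx
        have h1 : ‖bt (s, x) * a |x| * Complex.exp (Complex.I * lam * |x|)‖
            = ‖bt (s, x)‖ * ‖a |x|‖ * 1 := by
          simp only [norm_mul]; rw [normExp]
        rw [h1, mul_one]
        exact mul_le_mul (hbtb _) (haall |x| (abs_pos.2 (ne_of_lt hx))) (norm_nonneg _) hM0
      · intro x _ hxR
        have : bt (s, x) = 0 := hbt0 (s, x) (Or.inr hxR.le)
        simp [this]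
    have hsplit := intervalIntegral.integral_Iic_add_Ioi hintIic hintIoi
    have hneg : ∫ r in Set.Iic (0:ℝ), fs r = ∫ r in Set.Ioi (0:ℝ), fs (-r) := by
      have h := integral_comp_neg_Iic (0:ℝ) (fun x => fs (-x))
      simp only [neg_neg, neg_zero] at h
      exact h
    have heqp : ∫ r in Set.Ioi (0:ℝ), fs r
        = ∫ r in Set.Ioi (0:ℝ), hp r * a r * Complex.exp (Complex.I * lam * r) := by
      refine setIntegral_congr_fun measurableSet_Ioi (fun r hr => ?_)
      have habs : |r| = r := abs_of_pos hr
      rw [hfs_eq]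
      simp only [hp_def, habs]
    have heqm : ∫ r in Set.Ioi (0:ℝ), fs (-r)
        = ∫ r in Set.Ioi (0:ℝ), hm r * a r * Complex.exp (Complex.I * lam * r) := by
      refine setIntegral_congr_fun measurableSet_Ioi (fun r hr => ?_)
      have habs : |(-r)| = r := by rw [abs_neg, abs_of_pos hr]
      rw [hfs_eq]
      simp only [hm_def, habs]
    calc ‖∫ r : ℝ, F (s, r)‖
        = ‖(∫ r in Set.Iic (0:ℝ), fs r) + ∫ r in Set.Ioi (0:ℝ), fs r‖ := by rw [hsplit]
      _ ≤ ‖∫ r in Set.Iic (0:ℝ), fs r‖ + ‖∫ r in Set.Ioi (0:ℝ), fs r‖ := norm_add_le _ _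
      _ ≤ C₀ * M * (5 + 2*R₁) * lam ^ (-(1/2:ℝ)) + C₀ * M * (5 + 2*R₁) * lam ^ (-(1/2:ℝ)) := by
          apply add_le_add
          · rw [hneg, heqm]; exact hcore_m
          · rw [heqp]; exact hcore_p
      _ = 2 * (C₀ * M * (5 + 2 * R₁)) * lam ^ (-(1/2:ℝ)) := by ring
  have hzero_s : ∀ s : ℝ, s ∉ Set.Icc (-R₁) R₁ → (∫ r : ℝ, F (s, r)) = 0 := by
    intro s hs
    have hs' : R₁ ≤ |s| := by
      by_contra hcon
      push_neg at hcon
      exact hs ⟨by cases abs_lt.1 hcon; linarith, by cases abs_lt.1 hcon; linarith⟩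
    have hz : ∀ r : ℝ, F (s, r) = 0 := by
      intro r
      have : bt (s, r) = 0 := hbt0 (s, r) (Or.inl hs')
      rw [hFdef]; simp [this]
    simp only [hz, integral_zero]
  have hinteq : ∫ s : ℝ, ∫ r : ℝ, F (s, r) = ∫ s in Set.Icc (-R₁) R₁, ∫ r : ℝ, F (s, r) :=
    (setIntegral_eq_integral_of_forall_compl_eq_zero (fun s hs => hzero_s s hs)).symm
  have houter : ‖∫ s in Set.Icc (-R₁) R₁, ∫ r : ℝ, F (s, r)‖
      ≤ (2 * (C₀ * M * (5 + 2 * R₁)) * lam ^ (-(1/2:ℝ))) * (volume (Set.Icc (-R₁) R₁)).toReal := by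
    refine norm_setIntegral_le_of_norm_le_const ?_ (fun s _ => hinner s)
    · rw [Real.volume_Icc]; exact ENNReal.ofReal_lt_top
  have hvol : (volume (Set.Icc (-R₁) R₁)).toReal = 2 * R₁ := by
    rw [Real.volume_Icc, ENNReal.toReal_ofReal (by linarith : (0:ℝ) ≤ R₁ - -R₁)]; ring
  calc ‖∫ p : ℝ×ℝ, F p‖ = ‖∫ s in Set.Icc (-R₁) R₁, ∫ r : ℝ, F (s, r)‖ := by
        rw [hfub, hinteq]
    _ ≤ (2 * (C₀ * M * (5 + 2 * R₁)) * lam ^ (-(1/2:ℝ))) * (volume (Set.Icc (-R₁) R₁)).toReal :=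
        houter
    _ = 4 * R₁ * (C₀ * M * (5 + 2 * R₁)) * lam ^ (-(1/2:ℝ)) := by rw [hvol]; ring
end

section
/- Let b : ℝ → ℝ be smooth and compactly supported, and let p, v ∈ ℝ² with |v| = 1. Then there exists a sequence (m_k) of points of ℤ² with |m_k| → ∞ such that |∫_ℝ b(s)·e^{i m_k·(p + s v)} ds| → |∫_ℝ b(s) ds| as k → ∞. -/
open Filter MeasureTheory

/-- Any injective sequence of lattice points has norms tending to infinity. -/
lemma stmt_17_aux_norm {m : ℕ → ℤ × ℤ} (hm : Function.Injective m) :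
    Filter.Tendsto (fun k => Real.sqrt ((((m k).1:ℝ))^2 + (((m k).2:ℝ))^2))
      Filter.atTop Filter.atTop := by
  have hcof : Filter.Tendsto (fun x : ℤ × ℤ => Real.sqrt ((x.1:ℝ)^2 + (x.2:ℝ)^2))
      Filter.cofinite Filter.atTop := by
    rw [tendsto_atTop]
    intro C
    rw [eventually_cofinite]
    apply Set.Finite.subset (Set.finite_Icc (α := ℤ × ℤ) (-⌈C⌉, -⌈C⌉) (⌈C⌉, ⌈C⌉))
    intro x hx
    simp only [Set.mem_setOf_eq, not_le] at hx
    have h0 : (0:ℝ) < C := lt_of_le_of_lt (Real.sqrt_nonneg _) hx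
    have h1 : (x.1:ℝ)^2 + (x.2:ℝ)^2 < C^2 := (Real.sqrt_lt' h0).1 hx
    have h2 := abs_lt_of_sq_lt_sq' (by nlinarith [sq_nonneg (x.2:ℝ)] : (x.1:ℝ)^2 < C^2) h0.le
    have h3 := abs_lt_of_sq_lt_sq' (by nlinarith [sq_nonneg (x.1:ℝ)] : (x.2:ℝ)^2 < C^2) h0.le
    have hC : C ≤ (⌈C⌉:ℝ) := Int.le_ceil C
    constructor
    · constructor
      · exact_mod_cast le_of_lt (lt_of_le_of_lt (by linarith : -(⌈C⌉:ℝ) ≤ -C) h2.1)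
      · exact_mod_cast le_of_lt (lt_of_le_of_lt (by linarith : -(⌈C⌉:ℝ) ≤ -C) h3.1)
    · constructor
      · exact_mod_cast le_of_lt (lt_of_lt_of_le h2.2 hC)
      · exact_mod_cast le_of_lt (lt_of_lt_of_le h3.2 hC)
  have h1 : Tendsto m atTop cofinite := by
    rw [← Nat.cofinite_eq_atTop]; exact hm.tendsto_cofinite
  exact hcof.comp h1

/-- One can choose lattice points with norms tending to infinity whose inner
products with a fixed nonzero vector `v` tend to zero. -/
lemma stmt_17_aux_seq (v : ℝ × ℝ) (hvne : v.1 ≠ 0 ∨ v.2 ≠ 0) :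
    ∃ m : ℕ → ℤ × ℤ,
      Filter.Tendsto (fun k => Real.sqrt ((((m k).1:ℝ))^2 + (((m k).2:ℝ))^2))
        Filter.atTop Filter.atTop ∧
      Filter.Tendsto (fun k => ((m k).1:ℝ) * v.1 + ((m k).2:ℝ) * v.2)
        Filter.atTop (nhds 0) := by
  set f : ℤ × ℤ → ℝ := fun x => (x.1:ℝ) * v.1 + (x.2:ℝ) * v.2 with hfdef
  by_cases hA : ∃ m0 : ℤ × ℤ, m0 ≠ 0 ∧ f m0 = 0
  · obtain ⟨m0, hm0, hf0⟩ := hA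
    simp only [hfdef] at hf0
    have hne : m0.1 ≠ 0 ∨ m0.2 ≠ 0 := by
      by_contra h; push_neg at h; exact hm0 (Prod.ext h.1 h.2)
    have hge : (1:ℝ) ≤ (m0.1:ℝ)^2 + (m0.2:ℝ)^2 := by
      have h1 : (1:ℤ) ≤ m0.1^2 + m0.2^2 := by
        rcases hne with h | h
        · nlinarith [Int.one_le_abs h, sq_abs m0.1, sq_nonneg m0.2]
        · nlinarith [Int.one_le_abs h, sq_abs m0.2, sq_nonneg m0.1]
      exact_mod_cast h1
    refine ⟨fun k => (((k:ℤ)+1) * m0.1, ((k:ℤ)+1) * m0.2), ?_, ?_⟩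
    · apply tendsto_atTop_mono ?_ tendsto_natCast_atTop_atTop
      intro k
      apply Real.le_sqrt_of_sq_le
      push_cast
      nlinarith [hge, Nat.cast_nonneg (α := ℝ) k, sq_nonneg ((k:ℝ))]
    · have heq : (fun k : ℕ => ((((k:ℤ)+1) * m0.1 : ℤ):ℝ) * v.1 + ((((k:ℤ)+1) * m0.2 : ℤ):ℝ) * v.2)
          = fun _ => (0:ℝ) := by
        funext k
        push_cast
        linear_combination ((k:ℝ)+1) * hf0
      rw [heq]
      exact tendsto_const_nhds
  · push_neg at hA
    -- f is injective
    have hinj : Function.Injective f := by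
      intro x y hxy
      by_contra hne
      have hxy0 : x - y ≠ 0 := sub_ne_zero.2 hne
      apply hA (x - y) hxy0
      have : f (x - y) = f x - f y := by
        simp only [hfdef, Prod.fst_sub, Prod.snd_sub]; push_cast; ring
      rw [this, hxy, sub_self]
    -- the range of f is a dense subgroup
    let G : AddSubgroup ℝ :=
      { carrier := Set.range f
        zero_mem' := ⟨0, by simp [hfdef]⟩
        add_mem' := by
          rintro _ _ ⟨x, rfl⟩ ⟨y, rfl⟩
          exact ⟨x + y, by simp only [hfdef, Prod.fst_add, Prod.snd_add]; push_cast; ring⟩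
        neg_mem' := by
          rintro _ ⟨x, rfl⟩
          exact ⟨-x, by simp only [hfdef, Prod.fst_neg, Prod.snd_neg]; push_cast; ring⟩ }
    have hdense : Dense (Set.range f) := by
      rcases G.dense_or_cyclic with h | ⟨a, ha⟩
      · exact h
      · exfalso
        have hv1 : v.1 ∈ G := ⟨(1, 0), by simp [hfdef]⟩
        have hv2 : v.2 ∈ G := ⟨(0, 1), by simp [hfdef]⟩
        rw [ha, AddSubgroup.mem_closure_singleton] at hv1 hv2
        obtain ⟨n1, hn1⟩ := hv1
        obtain ⟨n2, hn2⟩ := hv2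
        rw [zsmul_eq_mul] at hn1 hn2
        have hm0 : ((n2, -n1) : ℤ × ℤ) ≠ 0 := by
          intro hc
          rw [Prod.ext_iff] at hc
          simp only [Prod.fst_zero, Prod.snd_zero, neg_eq_zero] at hc
          rcases hvne with h | h
          · rw [hc.2] at hn1; simp at hn1; exact h hn1.symm
          · rw [hc.1] at hn2; simp at hn2; exact h hn2.symm
        apply hA _ hm0
        simp only [hfdef]
        rw [← hn1, ← hn2]
        push_cast
        ring
    -- pick elements of the range in (0, ε)
    have hpick : ∀ ε : ℝ, ∃ x : ℤ × ℤ, 0 < ε → (0 < f x ∧ f x < ε) := by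
      intro ε
      by_cases h : 0 < ε
      · obtain ⟨y, ⟨x, rfl⟩, hy⟩ := hdense.exists_mem_open isOpen_Ioo
          (Set.nonempty_Ioo.2 h)
        exact ⟨x, fun _ => ⟨hy.1, hy.2⟩⟩
      · exact ⟨0, fun h' => absurd h' h⟩
    choose g hg using hpick
    let seq : ℕ → ℤ × ℤ := fun k =>
      Nat.rec (g 1) (fun k prev => g (min (f prev) (1/((k:ℝ)+2)))) k
    have hseq : ∀ k, 0 < f (seq k) ∧ f (seq k) < 1/((k:ℝ)+1) := by
      intro k
      induction k with
      | zero => exact (by simpa using hg 1 one_pos : 0 < f (g 1) ∧ f (g 1) < 1/(((0:ℕ):ℝ)+1))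
      | succ k ih =>
        have hmin : 0 < min (f (seq k)) (1/((k:ℝ)+2)) := lt_min ih.1 (by positivity)
        have h := hg _ hmin
        refine ⟨h.1, lt_of_lt_of_le (lt_of_lt_of_le h.2 (min_le_right _ _)) ?_⟩
        apply le_of_eq
        push_cast
        ring
    have hanti : StrictAnti (fun k => f (seq k)) := by
      apply strictAnti_nat_of_succ_lt
      intro k
      have hmin : 0 < min (f (seq k)) (1/((k:ℝ)+2)) := lt_min (hseq k).1 (by positivity)
      exact lt_of_lt_of_le (hg _ hmin).2 (min_le_left _ _)
    have hseqinj : Function.Injective seq :=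
      fun a b hab => hanti.injective (by simp [hab])
    refine ⟨seq, stmt_17_aux_norm hseqinj, ?_⟩
    apply squeeze_zero (fun k => (hseq k).1.le) (fun k => (hseq k).2.le)
    exact tendsto_one_div_add_atTop_nhds_zero_nat

/-- Continuity of the oscillatory integral at frequency zero. -/
lemma stmt_17_aux_anal (b : ℝ → ℝ) (hb : Continuous b) (hbc : HasCompactSupport b)
    (θ : ℕ → ℝ) (hθ : Filter.Tendsto θ Filter.atTop (nhds 0)) :
    Filter.Tendsto (fun k => ∫ s : ℝ, (b s : ℂ) * Complex.exp (Complex.I * ((s * θ k : ℝ) : ℂ)))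
      Filter.atTop (nhds ((∫ s : ℝ, b s : ℝ) : ℂ)) := by
  have hbi : Integrable b := hb.integrable_of_hasCompactSupport hbc
  have hlim : (((∫ s : ℝ, b s : ℝ)) : ℂ) = ∫ s : ℝ, (b s : ℂ) := (integral_ofReal).symm
  rw [hlim]
  apply tendsto_integral_filter_of_dominated_convergence (fun s => |b s|)
  · apply Eventually.of_forall
    intro k
    apply Continuous.aestronglyMeasurable
    continuity
  · apply Eventually.of_forall
    intro k
    apply Eventually.of_forall
    intro s
    rw [norm_mul]
    simp [Complex.norm_exp]
  · exact hbi.abs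
  · apply Eventually.of_forall
    intro s
    have h1 : Filter.Tendsto (fun k => Complex.I * ((s * θ k : ℝ) : ℂ)) Filter.atTop (nhds 0) := by
      have h0 : Filter.Tendsto (fun k => s * θ k) Filter.atTop (nhds 0) := by
        simpa using (tendsto_const_nhds (x := s)).mul hθ
      have h2 := (Complex.continuous_ofReal.tendsto 0).comp h0
      simpa using (tendsto_const_nhds (x := Complex.I)).mul h2
    have h3 := (Complex.continuous_exp.tendsto 0).comp h1
    simp only [Complex.exp_zero] at h3
    simpa using (tendsto_const_nhds (x := ((b s : ℝ) : ℂ))).mul h3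

/-- Sharpness claim at the end of Example 1.2: along a line segment
`γ(s) = p + s v`, one can choose lattice frequencies `m_k` with `|m_k| → ∞`
such that the period integrals converge to `|∫ b(s) ds|`. -/
theorem stmt_17 (b : ℝ → ℝ) (hb : ContDiff ℝ (⊤ : ℕ∞) b) (hbc : HasCompactSupport b)
    (p v : ℝ × ℝ) (hv : v.1 ^ 2 + v.2 ^ 2 = 1) :
    ∃ m : ℕ → ℤ × ℤ,
      Filter.Tendsto (fun k => Real.sqrt ((((m k).1 : ℝ)) ^ 2 + (((m k).2 : ℝ)) ^ 2))
        Filter.atTop Filter.atTop ∧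
      Filter.Tendsto (fun k =>
          ‖∫ s : ℝ, (b s : ℂ) * Complex.exp (Complex.I *
            ((((m k).1 : ℝ)) * (p.1 + s * v.1) + (((m k).2 : ℝ)) * (p.2 + s * v.2)))‖)
        Filter.atTop (nhds |∫ s : ℝ, b s|) := by
  have hvne : v.1 ≠ 0 ∨ v.2 ≠ 0 := by
    by_contra h
    push_neg at h
    rw [h.1, h.2] at hv
    norm_num at hv
  obtain ⟨m, hnorm, hθ0⟩ := stmt_17_aux_seq v hvne
  refine ⟨m, hnorm, ?_⟩
  have key : ∀ k,
      ‖∫ s : ℝ, (b s : ℂ) * Complex.exp (Complex.I *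
          ((((m k).1 : ℝ)) * (p.1 + s * v.1) + (((m k).2 : ℝ)) * (p.2 + s * v.2)))‖
      = ‖∫ s : ℝ, (b s : ℂ) * Complex.exp (Complex.I *
          ((s * (((m k).1:ℝ) * v.1 + ((m k).2:ℝ) * v.2) : ℝ) : ℂ))‖ := by
    intro k
    have hpt : ∀ s : ℝ, (b s : ℂ) * Complex.exp (Complex.I *
            ((((m k).1 : ℝ)) * (p.1 + s * v.1) + (((m k).2 : ℝ)) * (p.2 + s * v.2)))
        = Complex.exp (Complex.I * ((((m k).1:ℝ) * p.1 + ((m k).2:ℝ) * p.2 : ℝ) : ℂ)) *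
          ((b s : ℂ) * Complex.exp (Complex.I *
            ((s * (((m k).1:ℝ) * v.1 + ((m k).2:ℝ) * v.2) : ℝ) : ℂ))) := by
      intro s
      rw [show Complex.exp (Complex.I * ((((m k).1:ℝ) * p.1 + ((m k).2:ℝ) * p.2 : ℝ) : ℂ)) *
          ((b s : ℂ) * Complex.exp (Complex.I *
            ((s * (((m k).1:ℝ) * v.1 + ((m k).2:ℝ) * v.2) : ℝ) : ℂ)))
        = (b s : ℂ) * (Complex.exp (Complex.I * ((((m k).1:ℝ) * p.1 + ((m k).2:ℝ) * p.2 : ℝ) : ℂ) +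
            Complex.I * ((s * (((m k).1:ℝ) * v.1 + ((m k).2:ℝ) * v.2) : ℝ) : ℂ))) from by
          rw [Complex.exp_add]; ring]
      congr 1
      congr 1
      push_cast
      ring
    rw [show (∫ s : ℝ, (b s : ℂ) * Complex.exp (Complex.I *
          ((((m k).1 : ℝ)) * (p.1 + s * v.1) + (((m k).2 : ℝ)) * (p.2 + s * v.2))))
        = ∫ s : ℝ, Complex.exp (Complex.I * ((((m k).1:ℝ) * p.1 + ((m k).2:ℝ) * p.2 : ℝ) : ℂ)) *
          ((b s : ℂ) * Complex.exp (Complex.I *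
            ((s * (((m k).1:ℝ) * v.1 + ((m k).2:ℝ) * v.2) : ℝ) : ℂ))) from by
        congr 1; funext s; exact hpt s]
    rw [integral_const_mul, norm_mul]
    have : ‖Complex.exp (Complex.I * ((((m k).1:ℝ) * p.1 + ((m k).2:ℝ) * p.2 : ℝ) : ℂ))‖ = 1 := by
      simp [Complex.norm_exp]
    rw [this, one_mul]
  have hconv := (stmt_17_aux_anal b hb.continuous hbc
      (fun k => ((m k).1:ℝ) * v.1 + ((m k).2:ℝ) * v.2) hθ0).norm
  have hnormlim : ‖(((∫ s : ℝ, b s : ℝ)) : ℂ)‖ = |∫ s : ℝ, b s| := by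
    simp [Complex.norm_real, Real.norm_eq_abs]
  rw [hnormlim] at hconv
  exact hconv.congr (fun k => (key k).symm)
end

section
/- Let K_n (n ∈ ℕ) and K be continuous functions ℝ → ℝ with K_n(r) ≤ 0 and K(r) ≤ 0 for all r, and suppose K_n → K uniformly on every compact subset of ℝ. For each n let h_n : ℝ → ℝ be twice continuously differentiable with h_n'' + K_n·h_n = 0, h_n(0) = 1, and h_n bounded on (-∞, 0]; and let h : ℝ → ℝ be twice continuously differentiable with h'' + K·h = 0, h(0) = 1, and h bounded on (-∞, 0]. Then h_n → h uniformly on every compact subset of ℝ, and in particular h_n'(0) → h'(0). -/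
/-!
The differences `v n = h n - hlim` solve `v'' + K n v = (Klim - K n) hlim`, with `v n 0 = 0` and
forcing tending to `0` locally uniformly. Since `K n ≤ 0`, `h h'' ≥ 0`, so `h²` is convex; being
bounded on `(-∞, 0]` it is maximal at `0` there, whence `|h n|, |hlim| ≤ 1` on `(-∞, 0]`. On
`[-T, 0]` the function `v² + c x²` is convex for `c` of the size of the forcing, and comparing with
its secant through `-T` and `0` gives `v(r)² ≲ |r|/T + |r| c T`: this yields uniform convergence on
`[-a, 0]`. Together with a bound on `v''`, Taylor's formula at `0` turns it into `v n'(0) → 0`,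
and Grönwall's inequality for `(v, v')` propagates the vanishing Cauchy data to `[0, b]`.
-/

open Set Filter Topology

section UniformConvergence

variable {ι α : Type*} {l : Filter ι}

theorem TendstoUniformlyOn.union {β : Type*} [UniformSpace β] {F : ι → α → β} {f : α → β}
    {s t : Set α} (hs : TendstoUniformlyOn F f l s) (ht : TendstoUniformlyOn F f l t) :
    TendstoUniformlyOn F f l (s ∪ t) := by
  rw [tendstoUniformlyOn_iff_tendsto] at *
  rw [← sup_principal, prod_sup]
  exact hs.sup ht

variable {F : ι → α → ℝ} {f g : α → ℝ} {s : Set α}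

theorem tendstoUniformlyOn_iff_abs_sub_le :
    TendstoUniformlyOn F f l s ↔ ∀ ε > 0, ∀ᶠ i in l, ∀ x ∈ s, |F i x - f x| ≤ ε := by
  rw [Metric.tendstoUniformlyOn_iff]
  refine ⟨fun h ε hε => (h ε hε).mono fun i hi x hx => ?_,
    fun h ε hε => (h (ε / 2) (half_pos hε)).mono fun i hi x hx => ?_⟩
  · rw [abs_sub_comm]
    exact (hi x hx).le
  · rw [Real.dist_eq, abs_sub_comm]
    linarith [hi x hx]

theorem tendstoUniformlyOn_zero_iff_abs_le :
    TendstoUniformlyOn F 0 l s ↔ ∀ ε > 0, ∀ᶠ i in l, ∀ x ∈ s, |F i x| ≤ ε := by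
  simp [tendstoUniformlyOn_iff_abs_sub_le]

theorem TendstoUniformlyOn.exists_eventually_abs_le [TopologicalSpace α]
    (hF : TendstoUniformlyOn F f l s) (hs : IsCompact s) (hf : ContinuousOn f s) :
    ∃ M, ∀ᶠ i in l, ∀ x ∈ s, |F i x| ≤ M := by
  obtain ⟨C, hC⟩ := hs.exists_bound_of_continuousOn hf
  refine ⟨C + 1, (tendstoUniformlyOn_iff_abs_sub_le.1 hF 1 one_pos).mono fun i hi x hx => ?_⟩
  have hfx : |f x| ≤ C := hC x hx
  linarith [abs_sub_abs_le_abs_sub (F i x) (f x), hi x hx]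

theorem TendstoUniformlyOn.sub_mul_tendstoUniformlyOn_zero [TopologicalSpace α]
    (hF : TendstoUniformlyOn F f l s) (hs : IsCompact s) (hg : ContinuousOn g s) :
    TendstoUniformlyOn (fun i x => (f x - F i x) * g x) 0 l s := by
  obtain ⟨C, hC⟩ := hs.exists_bound_of_continuousOn hg
  have hC1 : 0 < |C| + 1 := by positivity
  refine tendstoUniformlyOn_zero_iff_abs_le.2 fun ε hε => ?_
  filter_upwards [tendstoUniformlyOn_iff_abs_sub_le.1 hF (ε / (|C| + 1)) (by positivity)]
    with i hi x hx
  have hgx : |g x| ≤ |C| + 1 := by linarith [hC x hx, Real.norm_eq_abs (g x), le_abs_self C]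
  calc |(f x - F i x) * g x| = |F i x - f x| * |g x| := by rw [abs_mul, abs_sub_comm]
    _ ≤ ε / (|C| + 1) * (|C| + 1) := by gcongr; exact hi x hx
    _ = ε := div_mul_cancel₀ ε hC1.ne'

end UniformConvergence

section SecondOrder

variable {v : ℝ → ℝ}

theorem convexOn_sq_add_mul_sq (hv : ContDiff ℝ 2 v) {D : Set ℝ} (hD : Convex ℝ D) {c : ℝ}
    (hvv : ∀ x ∈ D, -c ≤ v x * deriv (deriv v) x) :
    ConvexOn ℝ D (fun x => v x ^ 2 + c * x ^ 2) := by
  have hv1 := hv.differentiable two_ne_zero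
  have hv2 := hv.differentiable_deriv_two
  have hw' : ∀ x, HasDerivAt (fun x => v x ^ 2 + c * x ^ 2) (2 * v x * deriv v x + 2 * c * x) x :=
    fun x => (((hv1 x).hasDerivAt.pow 2).add ((hasDerivAt_pow 2 x).const_mul c)).congr_deriv
      (by ring)
  have hw'' : ∀ x, HasDerivAt (fun x => 2 * v x * deriv v x + 2 * c * x)
      (2 * deriv v x ^ 2 + 2 * v x * deriv (deriv v) x + 2 * c) x := fun x =>
    ((((hv1 x).hasDerivAt.const_mul 2).mul (hv2 x).hasDerivAt).add
      ((hasDerivAt_id x).const_mul (2 * c))).congr_deriv (by ring)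
  refine convexOn_of_hasDerivWithinAt2_nonneg hD (hv1.continuous.pow 2 |>.add
    (continuous_const.mul (continuous_pow 2))).continuousOn
    (fun x _ => (hw' x).hasDerivWithinAt) (fun x _ => (hw'' x).hasDerivWithinAt) fun x hx => ?_
  nlinarith [hvv x (interior_subset hx), sq_nonneg (deriv v x)]

theorem mul_sq_le_of_le_mul_deriv_deriv (hv : ContDiff ℝ 2 v) {T c r : ℝ} (hc : 0 ≤ c)
    (hvv : ∀ x ∈ Icc (-T) 0, -c ≤ v x * deriv (deriv v) x) (hr : r ∈ Ioo (-T) 0) :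
    T * v r ^ 2 ≤ -r * (v (-T) ^ 2 + c * T ^ 2) + (T + r) * v 0 ^ 2 := by
  have hw := (convexOn_sq_add_mul_sq hv (convex_Icc (-T) 0) hvv).secant_mono_aux1
    (left_mem_Icc.2 (hr.1.trans hr.2).le) (right_mem_Icc.2 (hr.1.trans hr.2).le) hr.1 hr.2
  simp only [sub_neg_eq_add, zero_sub] at hw
  have hT : 0 < T := by linarith [hr.1, hr.2]
  nlinarith [mul_nonneg hT.le (mul_nonneg hc (sq_nonneg r))]

theorem abs_le_abs_zero_of_nonneg_mul_deriv_deriv (hv : ContDiff ℝ 2 v)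
    (hvv : ∀ x ≤ 0, 0 ≤ v x * deriv (deriv v) x) (hbdd : ∃ C, ∀ x ≤ 0, |v x| ≤ C) {r : ℝ}
    (hr : r ≤ 0) : |v r| ≤ |v 0| := by
  obtain ⟨C, hC⟩ := hbdd
  rcases hr.eq_or_lt with rfl | hr
  · exact le_rfl
  rw [← sq_le_sq]
  have hsecant : ∀ T > -r, v r ^ 2 ≤ v 0 ^ 2 + -r * (C ^ 2 - v 0 ^ 2) / T := fun T hrT => by
    have hT : 0 < T := by linarith
    have hw := mul_sq_le_of_le_mul_deriv_deriv hv le_rfl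
      (fun x hx => by simpa using hvv x hx.2) ⟨neg_lt.1 hrT, hr⟩
    have hCT : v (-T) ^ 2 ≤ C ^ 2 := sq_le_sq' (abs_le.1 (hC _ (by linarith))).1
      (abs_le.1 (hC _ (by linarith))).2
    rw [add_div' _ _ _ hT.ne', le_div_iff₀ hT]
    nlinarith
  have hlim := (tendsto_const_nhds (x := v 0 ^ 2)).add
    ((tendsto_const_nhds (x := -r * (C ^ 2 - v 0 ^ 2))).div_atTop tendsto_id)
  rw [add_zero] at hlim
  exact ge_of_tendsto hlim (eventually_gt_atTop (-r) |>.mono hsecant)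

theorem mul_sq_le_of_abs_deriv_deriv_add_mul_le (hv : ContDiff ℝ 2 v) (hv0 : v 0 = 0)
    {k : ℝ → ℝ} {T M δ r : ℝ} (hk : ∀ x ∈ Icc (-T) 0, k x ≤ 0)
    (hM : ∀ x ∈ Icc (-T) 0, |v x| ≤ M)
    (hδ : ∀ x ∈ Icc (-T) 0, |deriv (deriv v) x + k x * v x| ≤ δ) (hr : r ∈ Ioo (-T) 0) :
    T * v r ^ 2 ≤ -r * (M ^ 2 + M * δ * T ^ 2) := by
  have h0 : (0 : ℝ) ∈ Icc (-T) 0 := right_mem_Icc.2 (hr.1.trans hr.2).le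
  have hM0 : 0 ≤ M := (abs_nonneg _).trans (hM 0 h0)
  have hvv : ∀ x ∈ Icc (-T) 0, -(M * δ) ≤ v x * deriv (deriv v) x := fun x hx => by
    have hvg : |v x * (deriv (deriv v) x + k x * v x)| ≤ M * δ := by
      rw [abs_mul]
      exact mul_le_mul (hM x hx) (hδ x hx) (abs_nonneg _) hM0
    nlinarith [(abs_le.1 hvg).1, mul_nonpos_of_nonpos_of_nonneg (hk x hx) (sq_nonneg (v x))]
  have hw := mul_sq_le_of_le_mul_deriv_deriv hv (mul_nonneg hM0 ((abs_nonneg _).trans (hδ 0 h0)))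
    hvv hr
  have hvT : v (-T) ^ 2 ≤ M ^ 2 := by
    simpa only [sq_abs] using pow_le_pow_left₀ (abs_nonneg _) (hM _ (left_mem_Icc.2 h0.1)) 2
  rw [hv0] at hw
  nlinarith [hr.2]

theorem abs_deriv_zero_mul_le (hv : ContDiff ℝ 2 v) {t B : ℝ} (ht : 0 ≤ t)
    (hB : ∀ x ∈ Icc (-t) 0, |deriv (deriv v) x| ≤ B) :
    |deriv v 0| * t ≤ B * t ^ 2 + |v (-t) - v 0| := by
  have hv1 := hv.differentiable two_ne_zero
  have hv2 := hv.differentiable_deriv_two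
  have h0 : (0 : ℝ) ∈ Icc (-t) 0 := right_mem_Icc.2 (neg_nonpos.2 ht)
  have ht' : -t ∈ Icc (-t) 0 := left_mem_Icc.2 (neg_nonpos.2 ht)
  have hB0 : 0 ≤ B := (abs_nonneg _).trans (hB 0 h0)
  have hlip : ∀ x ∈ Icc (-t) 0, ‖deriv v x - deriv v 0‖ ≤ B * t := fun x hx => by
    have := (convex_Icc (-t) 0).norm_image_sub_le_of_norm_hasDerivWithin_le
      (fun y _ => (hv2 y).hasDerivAt.hasDerivWithinAt) hB h0 hx
    rw [sub_zero, Real.norm_eq_abs x, abs_of_nonpos hx.2] at this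
    exact this.trans (mul_le_mul_of_nonneg_left (by linarith [hx.1]) hB0)
  have hTaylor := (convex_Icc (-t) 0).norm_image_sub_le_of_norm_hasDerivWithin_le
    (f := fun y => v y - deriv v 0 * y) (fun y _ => (((hv1 y).hasDerivAt.sub
      ((hasDerivAt_id y).const_mul (deriv v 0))).congr_deriv (by simp)).hasDerivWithinAt)
    hlip h0 ht'
  have e : v (-t) - deriv v 0 * -t - (v 0 - deriv v 0 * 0) = deriv v 0 * t + (v (-t) - v 0) := by
    ring
  rw [e, sub_zero, norm_neg, Real.norm_eq_abs, Real.norm_eq_abs, abs_of_nonneg ht] at hTaylor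
  calc |deriv v 0| * t = |(deriv v 0 * t + (v (-t) - v 0)) - (v (-t) - v 0)| := by
        rw [add_sub_cancel_right, abs_mul, abs_of_nonneg ht]
    _ ≤ B * t ^ 2 + |v (-t) - v 0| := by
        nlinarith [abs_sub (deriv v 0 * t + (v (-t) - v 0)) (v (-t) - v 0)]

theorem abs_le_of_abs_deriv_deriv_le (hv : ContDiff ℝ 2 v) {R M δ x : ℝ} (hM : 0 ≤ M)
    (h0 : |v 0| ≤ δ) (h0' : |deriv v 0| ≤ δ)
    (hv'' : ∀ y ∈ Ico 0 R, |deriv (deriv v) y| ≤ M * |v y| + δ) (hx : x ∈ Icc 0 R) :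
    |v x| ≤ 2 * δ * Real.exp ((M + 1) * R) := by
  have hv1 := hv.differentiable two_ne_zero
  have hv2 := hv.differentiable_deriv_two
  have hδ : 0 ≤ δ := (abs_nonneg _).trans h0
  have hL : 0 < M + 1 := by linarith
  have hphase := norm_le_gronwallBound_of_norm_deriv_right_le
    (f := fun y => (v y, deriv v y)) (δ := δ) (K := M + 1) (ε := δ)
    (hv1.continuous.prodMk hv2.continuous).continuousOn
    (fun y _ => ((hv1 y).hasDerivAt.prodMk (hv2 y).hasDerivAt).hasDerivWithinAt)
    (by simpa [Prod.norm_def] using ⟨h0, h0'⟩)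
    (fun y hy => by
      simp only [Prod.norm_def, Real.norm_eq_abs, max_le_iff]
      have := hv'' y hy
      constructor <;> nlinarith [le_max_left |v y| |deriv v y|, le_max_right |v y| |deriv v y|,
        abs_nonneg (v y), abs_nonneg (deriv v y)]) x hx
  rw [sub_zero, gronwallBound_of_K_ne_0 hL.ne', Prod.norm_def, Real.norm_eq_abs] at hphase
  have hexp : Real.exp ((M + 1) * x) ≤ Real.exp ((M + 1) * R) :=
    Real.exp_le_exp.2 (mul_le_mul_of_nonneg_left hx.2 hL.le)
  have hexp1 : 1 ≤ Real.exp ((M + 1) * x) := Real.one_le_exp (mul_nonneg hL.le hx.1)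
  have hdiv : δ / (M + 1) ≤ δ := div_le_self hδ (by linarith)
  calc |v x| ≤ max |v x| ‖deriv v x‖ := le_max_left _ _
    _ ≤ δ * Real.exp ((M + 1) * x) + δ / (M + 1) * (Real.exp ((M + 1) * x) - 1) := hphase
    _ ≤ δ * Real.exp ((M + 1) * R) + δ * Real.exp ((M + 1) * R) := by
        gcongr
        nlinarith
    _ = 2 * δ * Real.exp ((M + 1) * R) := by ring

theorem abs_deriv_deriv_le_of_add_mul_eq {w : ℝ → ℝ} {c g x : ℝ}
    (h : deriv (deriv w) x + c * w x = g) : |deriv (deriv w) x| ≤ |c| * |w x| + |g| := by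
  rw [eq_sub_of_add_eq h, ← abs_mul]
  linarith [abs_sub g (c * w x)]

end SecondOrder

section Jacobi

variable {k K u g : ℝ → ℝ}

theorem abs_le_abs_zero_of_jacobi (hu : ContDiff ℝ 2 u)
    (hode : ∀ r, deriv (deriv u) r + k r * u r = 0) (hk : ∀ r, k r ≤ 0)
    (hbdd : ∃ C, ∀ r ≤ 0, |u r| ≤ C) {r : ℝ} (hr : r ≤ 0) : |u r| ≤ |u 0| :=
  abs_le_abs_zero_of_nonneg_mul_deriv_deriv hu (fun x _ => by
    rw [eq_neg_of_add_eq_zero_left (hode x)]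
    nlinarith [hk x, sq_nonneg (u x)]) hbdd hr

theorem deriv_deriv_sub_add_mul_eq (hu : ContDiff ℝ 2 u) (hg : ContDiff ℝ 2 g)
    (hu' : ∀ r, deriv (deriv u) r + k r * u r = 0) (hg' : ∀ r, deriv (deriv g) r + K r * g r = 0)
    (x : ℝ) : deriv (deriv (u - g)) x + k x * (u - g) x = (K x - k x) * g x := by
  have h1 : deriv (u - g) = deriv u - deriv g := funext fun y =>
    deriv_sub (hu.differentiable two_ne_zero y) (hg.differentiable two_ne_zero y)
  rw [h1, deriv_sub (hu.differentiable_deriv_two x) (hg.differentiable_deriv_two x), Pi.sub_apply]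
  linear_combination hu' x - hg' x

end Jacobi

section Family

variable {ι : Type*} {l : Filter ι} {v k f : ι → ℝ → ℝ}

theorem tendstoUniformlyOn_Icc_left_of_forcing (hv : ∀ i, ContDiff ℝ 2 (v i))
    (hode : ∀ i x, deriv (deriv (v i)) x + k i x * v i x = f i x) (hk : ∀ i x, k i x ≤ 0)
    (hv0 : ∀ i, v i 0 = 0) (hbdd : ∃ M, ∀ i, ∀ x ≤ 0, |v i x| ≤ M)
    (hf : ∀ T, TendstoUniformlyOn f 0 l (Icc (-T) 0)) (a : ℝ) :
    TendstoUniformlyOn v 0 l (Icc a 0) := by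
  obtain ⟨M, hM⟩ := hbdd
  refine tendstoUniformlyOn_zero_iff_abs_le.2 fun ε hε => ?_
  set A := |a| + 1
  have hA : 0 < A := by positivity
  set T := 2 * A * M ^ 2 / ε ^ 2 + A
  have hAT : A ≤ T := le_add_of_nonneg_left (by positivity)
  have hT : 0 < T := hA.trans_le hAT
  have hAM : A * M ^ 2 ≤ T * (ε ^ 2 / 2) := by
    have : 2 * A * M ^ 2 / ε ^ 2 * ε ^ 2 = 2 * A * M ^ 2 := div_mul_cancel₀ _ (by positivity)
    nlinarith [sq_nonneg ε]
  set δ := ε ^ 2 / (2 * A * T * (|M| + 1))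
  have hAδ : A * (|M| * δ * T) ≤ ε ^ 2 / 2 := by
    have e : A * (|M| * δ * T) = ε ^ 2 / 2 * (|M| / (|M| + 1)) := by
      simp only [δ]
      field_simp
    rw [e]
    exact mul_le_of_le_one_right (by positivity) ((div_le_one (by positivity)).2 (by linarith))
  filter_upwards [tendstoUniformlyOn_zero_iff_abs_le.1 (hf T) δ (by positivity)] with i hi x hx
  rcases hx.2.eq_or_lt with rfl | hx0
  · simp [hv0 i, hε.le]
  have hax : -x < A := by linarith [neg_abs_le a, hx.1]
  have hsq := mul_sq_le_of_abs_deriv_deriv_add_mul_le (hv i) (hv0 i) (fun y _ => hk i y)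
    (fun y hy => (hM i y hy.2).trans (le_abs_self M)) (fun y hy => by rw [hode]; exact hi y hy)
    ⟨by linarith, hx0⟩
  refine abs_le_of_sq_le_sq (le_of_mul_le_mul_left ?_ hT) hε.le
  rw [sq_abs] at hsq
  nlinarith [mul_le_mul_of_nonneg_right hAδ hT.le,
    mul_nonneg (sub_nonneg.2 hax.le) (by positivity : 0 ≤ M ^ 2 + |M| * δ * T ^ 2)]

theorem tendsto_deriv_zero_of_tendstoUniformlyOn (hv : ∀ i, ContDiff ℝ 2 (v i)) {a B : ℝ}
    (ha : a < 0) (hvconv : TendstoUniformlyOn v 0 l (Icc a 0))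
    (hB : ∀ᶠ i in l, ∀ x ∈ Icc a 0, |deriv (deriv (v i)) x| ≤ B) :
    Tendsto (fun i => deriv (v i) 0) l (𝓝 0) := by
  refine Metric.tendsto_nhds.2 fun ε hε => ?_
  set t := min (-a) (ε / (4 * (|B| + 1)))
  have ht : 0 < t := lt_min (neg_pos.2 ha) (by positivity)
  have hBt : |B| * t ≤ ε / 4 := by
    have : |B| * t ≤ (|B| + 1) * (ε / (4 * (|B| + 1))) :=
      mul_le_mul (by linarith) (min_le_right _ _) ht.le (by positivity)
    rwa [mul_div_left_comm, div_mul_cancel_right₀ (by positivity)] at this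
  filter_upwards [hB, tendstoUniformlyOn_zero_iff_abs_le.1 hvconv (ε * t / 4) (by positivity)]
    with i hBi hvi
  have hta : Icc (-t) 0 ⊆ Icc a 0 := Icc_subset_Icc_left (le_neg.1 (min_le_left _ _))
  have hTaylor := abs_deriv_zero_mul_le (hv i) ht.le fun x hx => hBi x (hta hx)
  have hvt : |v i (-t) - v i 0| ≤ ε * t / 2 := by
    linarith [abs_sub (v i (-t)) (v i 0), hvi (-t) (hta (left_mem_Icc.2 (by linarith))),
      hvi 0 (hta (right_mem_Icc.2 (by linarith)))]
  rw [Real.dist_0_eq_abs]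
  refine lt_of_mul_lt_mul_right ?_ ht.le
  nlinarith [le_abs_self B, mul_le_mul_of_nonneg_right hBt ht.le]

theorem eventually_abs_deriv_deriv_le (hode : ∀ i x, deriv (deriv (v i)) x + k i x * v i x = f i x)
    {s : Set ℝ} {M : ℝ} (hk : ∀ᶠ i in l, ∀ x ∈ s, |k i x| ≤ M)
    (hf : TendstoUniformlyOn f 0 l s) (hvconv : TendstoUniformlyOn v 0 l s) :
    ∀ᶠ i in l, ∀ x ∈ s, |deriv (deriv (v i)) x| ≤ M + 1 := by
  filter_upwards [hk, tendstoUniformlyOn_zero_iff_abs_le.1 hf 1 one_pos,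
    tendstoUniformlyOn_zero_iff_abs_le.1 hvconv 1 one_pos] with i hki hfi hvi x hx
  have hvk : |k i x| * |v i x| ≤ M := by
    nlinarith [abs_nonneg (k i x), abs_nonneg (v i x), hki x hx, hvi x hx]
  linarith [abs_deriv_deriv_le_of_add_mul_eq (hode i x), hfi x hx]

theorem tendstoUniformlyOn_Icc_right_of_forcing (hv : ∀ i, ContDiff ℝ 2 (v i))
    (hode : ∀ i x, deriv (deriv (v i)) x + k i x * v i x = f i x)
    (hv0 : Tendsto (fun i => v i 0) l (𝓝 0)) (hv0' : Tendsto (fun i => deriv (v i) 0) l (𝓝 0))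
    {b M : ℝ} (hk : ∀ᶠ i in l, ∀ x ∈ Icc 0 b, |k i x| ≤ M)
    (hf : TendstoUniformlyOn f 0 l (Icc 0 b)) : TendstoUniformlyOn v 0 l (Icc 0 b) := by
  refine tendstoUniformlyOn_zero_iff_abs_le.2 fun ε hε => ?_
  set δ := ε / (2 * Real.exp ((|M| + 1) * b))
  have hδ : 0 < δ := by positivity
  have hsmall : ∀ {u : ι → ℝ}, Tendsto u l (𝓝 0) → ∀ᶠ i in l, |u i| ≤ δ := fun hu =>
    hu.abs.eventually (ge_mem_nhds (by rwa [abs_zero]))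
  filter_upwards [hsmall hv0, hsmall hv0', hk, tendstoUniformlyOn_zero_iff_abs_le.1 hf δ hδ]
    with i h0 h0' hki hfi x hx
  calc |v i x| ≤ 2 * δ * Real.exp ((|M| + 1) * b) :=
        abs_le_of_abs_deriv_deriv_le (hv i) (abs_nonneg M) h0 h0' (fun y hy => by
          have hy' : y ∈ Icc 0 b := Ico_subset_Icc_self hy
          have := abs_deriv_deriv_le_of_add_mul_eq (hode i y)
          nlinarith [hki y hy', hfi y hy', abs_nonneg (v i y), le_abs_self M]) hx
    _ = ε := by
        simp only [δ]
        field_simp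

theorem tendstoUniformlyOn_of_isCompact_of_Icc {β : Type*} [UniformSpace β]
    {F : ι → ℝ → β} {g : ℝ → β} (hleft : ∀ a, TendstoUniformlyOn F g l (Icc a 0))
    (hright : ∀ b, TendstoUniformlyOn F g l (Icc 0 b)) {s : Set ℝ} (hs : IsCompact s) :
    TendstoUniformlyOn F g l s := by
  obtain ⟨a, ha⟩ := hs.bddBelow
  obtain ⟨b, hb⟩ := hs.bddAbove
  exact ((hleft a).union (hright b)).mono fun x hx => Icc_subset_Icc_union_Icc ⟨ha hx, hb hx⟩

end Family

theorem stmt_18_general (K : ℕ → ℝ → ℝ) (Klim : ℝ → ℝ)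
    (hKlimcont : Continuous Klim)
    (hKnonpos : ∀ n, ∀ r : ℝ, K n r ≤ 0) (hKlimnonpos : ∀ r : ℝ, Klim r ≤ 0)
    (hKconv : ∀ s : Set ℝ, IsCompact s →
      TendstoUniformlyOn (fun n r => K n r) Klim Filter.atTop s)
    (h : ℕ → ℝ → ℝ) (hlim : ℝ → ℝ)
    (hhC2 : ∀ n, ContDiff ℝ 2 (h n))
    (hhode : ∀ n, ∀ r : ℝ, deriv (deriv (h n)) r + K n r * h n r = 0)
    (hh0 : ∀ n, h n 0 = 1)
    (hhbdd : ∀ n, ∃ C : ℝ, ∀ r : ℝ, r ≤ 0 → |h n r| ≤ C)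
    (hlimC2 : ContDiff ℝ 2 hlim)
    (hlimode : ∀ r : ℝ, deriv (deriv hlim) r + Klim r * hlim r = 0)
    (hlim0 : hlim 0 = 1)
    (hlimbdd : ∃ C : ℝ, ∀ r : ℝ, r ≤ 0 → |hlim r| ≤ C) :
    (∀ s : Set ℝ, IsCompact s →
      TendstoUniformlyOn (fun n r => h n r) hlim Filter.atTop s) ∧
      Filter.Tendsto (fun n => deriv (h n) 0) Filter.atTop (nhds (deriv hlim 0)) := by
  set v : ℕ → ℝ → ℝ := fun n => h n - hlim
  have hv : ∀ n, ContDiff ℝ 2 (v n) := fun n => (hhC2 n).sub hlimC2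
  have hode := fun n => deriv_deriv_sub_add_mul_eq (hhC2 n) hlimC2 (hhode n) hlimode
  have hv0 : ∀ n, v n 0 = 0 := fun n => by simp [v, hh0, hlim0]
  have hvbdd : ∀ n, ∀ x ≤ 0, |v n x| ≤ 2 := fun n x hx => by
    have hhn := abs_le_abs_zero_of_jacobi (hhC2 n) (hhode n) (hKnonpos n) (hhbdd n) hx
    have hhlim := abs_le_abs_zero_of_jacobi hlimC2 hlimode hKlimnonpos hlimbdd hx
    simp only [hh0, hlim0, abs_one] at hhn hhlim
    exact (abs_sub _ _).trans (by linarith)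
  have hf : ∀ s, IsCompact s →
      TendstoUniformlyOn (fun n x => (Klim x - K n x) * hlim x) 0 atTop s := fun s hs =>
    (hKconv s hs).sub_mul_tendstoUniformlyOn_zero hs hlimC2.continuous.continuousOn
  have hk : ∀ s, IsCompact s → ∃ M, ∀ᶠ n in atTop, ∀ x ∈ s, |K n x| ≤ M :=
    fun s hs => (hKconv s hs).exists_eventually_abs_le hs hKlimcont.continuousOn
  have hleft := tendstoUniformlyOn_Icc_left_of_forcing hv hode hKnonpos hv0 ⟨2, hvbdd⟩
    fun T => hf _ isCompact_Icc
  obtain ⟨M, hM⟩ := hk (Icc (-1) 0) isCompact_Icc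
  have hderiv := tendsto_deriv_zero_of_tendstoUniformlyOn hv neg_one_lt_zero (hleft (-1))
    (eventually_abs_deriv_deriv_le hode hM (hf _ isCompact_Icc) (hleft (-1)))
  have hright : ∀ b, TendstoUniformlyOn v 0 atTop (Icc 0 b) := fun b => by
    obtain ⟨M, hM⟩ := hk (Icc 0 b) isCompact_Icc
    exact tendstoUniformlyOn_Icc_right_of_forcing hv hode (by simp [hv0]) hderiv hM
      (hf _ isCompact_Icc)
  refine ⟨fun s hs => tendstoUniformlyOn_iff_abs_sub_le.2 <| tendstoUniformlyOn_zero_iff_abs_le.1 <|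
      tendstoUniformlyOn_of_isCompact_of_Icc hleft hright hs, ?_⟩
  have hd : ∀ n, deriv (v n) 0 = deriv (h n) 0 - deriv hlim 0 := fun n =>
    deriv_sub ((hhC2 n).differentiable two_ne_zero 0) (hlimC2.differentiable two_ne_zero 0)
  simpa [hd, tendsto_sub_nhds_zero_iff] using hderiv

/-- Continuity part of Proposition 4.1 in scalar form: if `Kₙ → K` locally
uniformly (all nonpositive and continuous) and `hₙ`, `h` are the bounded
solutions of the respective Jacobi equations normalized by `hₙ 0 = h 0 = 1`,
then `hₙ → h` locally uniformly and `hₙ'(0) → h'(0)`. -/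
theorem stmt_18 (K : ℕ → ℝ → ℝ) (Klim : ℝ → ℝ)
    (hKcont : ∀ n, Continuous (K n)) (hKlimcont : Continuous Klim)
    (hKnonpos : ∀ n, ∀ r : ℝ, K n r ≤ 0) (hKlimnonpos : ∀ r : ℝ, Klim r ≤ 0)
    (hKconv : ∀ s : Set ℝ, IsCompact s →
      TendstoUniformlyOn (fun n r => K n r) Klim Filter.atTop s)
    (h : ℕ → ℝ → ℝ) (hlim : ℝ → ℝ)
    (hhC2 : ∀ n, ContDiff ℝ 2 (h n))
    (hhode : ∀ n, ∀ r : ℝ, deriv (deriv (h n)) r + K n r * h n r = 0)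
    (hh0 : ∀ n, h n 0 = 1)
    (hhbdd : ∀ n, ∃ C : ℝ, ∀ r : ℝ, r ≤ 0 → |h n r| ≤ C)
    (hlimC2 : ContDiff ℝ 2 hlim)
    (hlimode : ∀ r : ℝ, deriv (deriv hlim) r + Klim r * hlim r = 0)
    (hlim0 : hlim 0 = 1)
    (hlimbdd : ∃ C : ℝ, ∀ r : ℝ, r ≤ 0 → |hlim r| ≤ C) :
    (∀ s : Set ℝ, IsCompact s →
      TendstoUniformlyOn (fun n r => h n r) hlim Filter.atTop s) ∧
      Filter.Tendsto (fun n => deriv (h n) 0) Filter.atTop (nhds (deriv hlim 0)) :=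
  stmt_18_general K Klim hKlimcont hKnonpos hKlimnonpos hKconv h hlim hhC2 hhode hh0 hhbdd hlimC2
    hlimode hlim0 hlimbdd
end
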